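/- arXiv:2403.12549 — 5 statements merged into one kernel-verified Lean document; each statement's English description precedes it below -/
import Mathlib

section
/- Let n and k be integers with k ≥ 2, n ≥ 2k+1, and 3·C(n−k,k) ≥ 2·C(n,k). Then the treewidth of the bipartite Kneser graph satisfies tw(BK(n,k)) = C(n,k) − 1. -/
/-- A tree decomposition of a graph `G` over a tree `T`: bags cover all vertices and all
edges, and for each vertex the set of nodes whose bags contain it induces a connected
(hence subtree) part of `T`. -/
structure TreeDecomp {V : Type*} {ι : Type} (G : SimpleGraph V) (T : SimpleGraph ι) where
  bag : ι → Finset V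
  cover : ∀ v : V, ∃ i, v ∈ bag i
  edgeCover : ∀ u v : V, G.Adj u v → ∃ i, u ∈ bag i ∧ v ∈ bag i
  subtree : ∀ v : V, (T.induce {i : ι | v ∈ bag i}).Connected

/-- The treewidth of a finite graph: the minimum over all tree decompositions of
(maximum bag size − 1). -/
noncomputable def treewidth {V : Type*} [Fintype V] (G : SimpleGraph V) : ℕ :=
  sInf { w : ℕ | ∃ (ι : Type) (_ : Fintype ι) (T : SimpleGraph ι),
    T.IsTree ∧ ∃ D : TreeDecomp G T,
      (Finset.univ.sup fun i => (D.bag i).card) - 1 = w }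

/-- A path decomposition of `G` with bags indexed by `Fin m` along a path: for each
vertex, the set of indices of bags containing it is an interval. -/
structure PathDecomp {V : Type*} (G : SimpleGraph V) (m : ℕ) where
  bag : Fin m → Finset V
  cover : ∀ v : V, ∃ i, v ∈ bag i
  edgeCover : ∀ u v : V, G.Adj u v → ∃ i, u ∈ bag i ∧ v ∈ bag i
  interval : ∀ (v : V) (i j k : Fin m), i ≤ j → j ≤ k → v ∈ bag i → v ∈ bag k → v ∈ bag j

/-- The pathwidth of a finite graph: the minimum over all path decompositions of
(maximum bag size − 1). -/
noncomputable def pathwidth {V : Type*} [Fintype V] (G : SimpleGraph V) : ℕ :=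
  sInf { w : ℕ | ∃ (m : ℕ) (D : PathDecomp G m),
    (Finset.univ.sup fun i => (D.bag i).card) - 1 = w }

/-- The bandwidth of a finite graph: the minimum over all bijective numberings of the
vertices of the maximum stretch `|φ u − φ v|` over edges `uv`. -/
noncomputable def bandwidth {V : Type*} [Fintype V] (G : SimpleGraph V) : ℕ :=
  sInf { b : ℕ | ∃ φ : V ≃ Fin (Fintype.card V),
    ∀ u v : V, G.Adj u v → ((φ u : ℤ) - (φ v : ℤ)).natAbs ≤ b }

/-- The bipartite Kneser graph `BK(n,k)`: vertices are the `k`-subsets and the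
`(n−k)`-subsets of `{1,…,n}`; a `k`-subset is adjacent to an `(n−k)`-subset containing
it (equivalently, for `2k < n`, two vertices are adjacent iff one is strictly contained
in the other). -/
def bipartiteKneser (n k : ℕ) :
    SimpleGraph {A : Finset (Fin n) // A.card = k ∨ A.card = n - k} where
  Adj A B := A.1 ⊂ B.1 ∨ B.1 ⊂ A.1
  symm := ⟨fun A B h => h.symm⟩
  loopless := ⟨fun A h => by
    rcases h with h | h <;> exact ssubset_irrefl _ h⟩

/-! The star decomposition whose centre bag holds all `k`-sets, with a leaf for every
`(n - k)`-set `B` carrying `B` and its `k`-subsets, has width `C(n,k) - 1`.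

For the lower bound, call a vertex set heavy if it meets both sides and has more than
`C(n,k) - C(n-k,k)` vertices on one of them. A vertex of the other side has only that many
non-neighbours there, so any two heavy sets touch, and connected heavy sets form a bramble. If
`S` has fewer than `C(n,k)` vertices, some component of `BK(n,k) - S` is heavy: otherwise the
Hilton–Milner bound `|P| + |Q| ≤ C(n,k) - C(n-k,k) + 1` for nonempty families of `k`-sets `P`
and `(n-k)`-sets `Q` with no member of `P` inside a member of `Q`, applied to the pieces inside
and outside a component, would bound the `2 C(n,k) - |S|` surviving vertices by
`2 (C(n,k) - C(n-k,k) + 1)`, which `3 C(n-k,k) ≥ 2 C(n,k)` and `k ≥ 2` make smaller than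
`C(n,k) + 1`. So every bag meeting the whole bramble has at least `C(n,k)` vertices. -/

open Finset

namespace SimpleGraph

variable {ι : Type*} {T : SimpleGraph ι}

lemma Preconnected.exists_adj_reachable_deleteIncidenceSet (hT : T.Preconnected) {i s : ι}
    (hs : s ≠ i) : ∃ j, T.Adj i j ∧ (T.deleteIncidenceSet i).Reachable j s := by
  obtain ⟨p, hp⟩ := (hT i s).exists_isPath
  cases p with
  | nil => exact absurd rfl hs
  | cons hadj q =>
    refine ⟨_, hadj, ⟨q.toDeleteEdges _ fun e he hei => ?_⟩⟩
    exact ((Walk.cons_isPath_iff _ _).1 hp).2 (Walk.mem_support_of_mem_edges he hei.2)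

/-- Both reachabilities together would join `i` and `j` without using the bridge `ij`. -/
lemma IsAcyclic.not_reachable_deleteIncidenceSet (hT : T.IsAcyclic) {i j s : ι} (hij : T.Adj i j)
    (hj : (T.deleteIncidenceSet i).Reachable j s) (hi : (T.deleteIncidenceSet j).Reachable i s) :
    False := by
  have hle : ∀ x, x = i ∨ x = j → T.deleteIncidenceSet x ≤ T.deleteEdges {s(i, j)} := by
    intro x hx a b hab
    rw [deleteIncidenceSet_adj] at hab
    rw [deleteEdges_adj, Set.mem_singleton_iff, Sym2.eq_iff]
    grind
  exact isBridge_iff.1 (isAcyclic_iff_forall_adj_isBridge.1 hT hij)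
    ((hi.mono (hle j (.inr rfl))).trans (hj.mono (hle i (.inl rfl))).symm)

/-- A finite tree has fewer edges than vertices, so a choice of neighbour `f i` at every node
must pick the same edge twice. -/
lemma IsTree.exists_apply_apply_eq [Finite ι] (hT : T.IsTree) {f : ι → ι}
    (hf : ∀ i, T.Adj i (f i)) : ∃ i, f (f i) = i := by
  classical
  have := Fintype.ofFinite ι
  obtain ⟨x, y, hxy, he⟩ := Fintype.exists_ne_map_eq_of_card_lt
    (fun i => (⟨s(i, f i), hf i⟩ : T.edgeSet))
    (by have h := hT.card_edgeFinset; rw [edgeFinset_card] at h; convert Nat.lt_of_succ_le h.le)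
  obtain ⟨rfl, -⟩ | ⟨rfl, hy⟩ := Sym2.eq_iff.1 (Subtype.ext_iff.1 he)
  · exact absurd rfl hxy
  · exact ⟨y, hy⟩

variable {V : Type*} {G : SimpleGraph V}

def Touches (G : SimpleGraph V) (A B : Finset V) : Prop :=
  ∃ a ∈ A, ∃ b ∈ B, a = b ∨ G.Adj a b

structure IsBramble (G : SimpleGraph V) (𝓑 : Set (Finset V)) : Prop where
  connected : ∀ C ∈ 𝓑, (G.induce (C : Set V)).Connected
  touches : ∀ C ∈ 𝓑, ∀ C' ∈ 𝓑, G.Touches C C'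

lemma exists_induce_connected_closed [Fintype V] (S : Finset V) {v : V} (hv : v ∉ S) :
    ∃ C : Finset V, v ∈ C ∧ Disjoint C S ∧ (G.induce (C : Set V)).Connected ∧
      ∀ x ∈ C, ∀ y ∉ S, G.Adj x y → y ∈ C := by
  classical
  set c := (G.induce (S : Set V)ᶜ).connectedComponentMk ⟨v, hv⟩
  refine ⟨univ.filter fun x => ∃ h : x ∉ S, (⟨x, h⟩ : ((S : Set V)ᶜ : Set V)) ∈ c.supp,
    mem_filter.2 ⟨mem_univ _, hv, rfl⟩, ?_, ?_, ?_⟩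
  · exact Finset.disjoint_left.2 fun x hx => (mem_filter.1 hx).2.1
  · refine c.connected_toSimpleGraph.map
      ⟨fun y => ⟨y.1.1, mem_filter.2 ⟨mem_univ _, y.1.2, y.2⟩⟩, fun h => h⟩ ?_
    rintro ⟨x, hx⟩
    obtain ⟨h, hc⟩ := (mem_filter.1 hx).2
    exact ⟨⟨⟨x, h⟩, hc⟩, rfl⟩
  · intro x hx y hy hxy
    obtain ⟨h, hc⟩ := (mem_filter.1 hx).2
    exact mem_filter.2 ⟨mem_univ _, hy, (c.mem_supp_congr_adj
      (show (G.induce (S : Set V)ᶜ).Adj ⟨x, h⟩ ⟨y, hy⟩ from hxy)).1 hc⟩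

end SimpleGraph

namespace TreeDecomp

open SimpleGraph

variable {V : Type*} {ι : Type} {G : SimpleGraph V} {T : SimpleGraph ι} (D : TreeDecomp G T)

lemma reachable_of_mem_bag {i s s' : ι} {v : V} (hv : v ∉ D.bag i) (hs : v ∈ D.bag s)
    (hs' : v ∈ D.bag s') : (T.deleteIncidenceSet i).Reachable s s' :=
  ((D.subtree v).preconnected ⟨s, hs⟩ ⟨s', hs'⟩).map
    { toFun := Subtype.val
      map_rel' := fun {a b} h =>
        deleteIncidenceSet_adj.2
          ⟨h, fun e => hv (by rw [← e]; exact a.2), fun e => hv (by rw [← e]; exact b.2)⟩ }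

lemma reachable_of_induce_connected {C : Finset V} (hC : (G.induce (C : Set V)).Connected) {i : ι}
    (hCi : ∀ v ∈ C, v ∉ D.bag i) {u v : V} (hu : u ∈ C) (hv : v ∈ C) {s s' : ι}
    (hs : u ∈ D.bag s) (hs' : v ∈ D.bag s') : (T.deleteIncidenceSet i).Reachable s s' := by
  suffices ∀ {a b : (C : Set V)}, (G.induce (C : Set V)).Walk a b →
      ∀ {s s'}, a.1 ∈ D.bag s → b.1 ∈ D.bag s' → (T.deleteIncidenceSet i).Reachable s s' from
    this (hC.preconnected ⟨u, hu⟩ ⟨v, hv⟩).some hs hs'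
  intro a b p
  induction p with
  | nil => exact fun hs hs' => D.reachable_of_mem_bag (hCi _ (Subtype.prop _)) hs hs'
  | cons hadj p ih =>
    intro s s' hs hs'
    obtain ⟨s₀, hx, hy⟩ := D.edgeCover _ _ hadj
    exact (D.reachable_of_mem_bag (hCi _ (by simp)) hs hx).trans (ih hy hs')

theorem exists_bag_forall_mem_of_isBramble [Finite ι] (hT : T.IsTree) {𝓑 : Set (Finset V)}
    (h𝓑 : G.IsBramble 𝓑) : ∃ i, ∀ C ∈ 𝓑, ∃ v ∈ C, v ∈ D.bag i := by
  by_contra! h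
  choose C hC𝓑 hCi using h
  have branch : ∀ i, ∃ j, T.Adj i j ∧
      ∀ s, ∀ v ∈ C i, v ∈ D.bag s → (T.deleteIncidenceSet i).Reachable j s := by
    intro i
    obtain ⟨⟨v, hv⟩⟩ := (h𝓑.connected _ (hC𝓑 i)).nonempty
    obtain ⟨s₀, hs₀⟩ := D.cover v
    have hs₀i : s₀ ≠ i := fun h => hCi i v hv (h ▸ hs₀)
    obtain ⟨j, hij, hj⟩ := hT.connected.preconnected.exists_adj_reachable_deleteIncidenceSet hs₀i
    exact ⟨j, hij, fun s u hu hs =>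
      hj.trans (D.reachable_of_induce_connected (h𝓑.connected _ (hC𝓑 i)) (hCi i) hv hu hs₀ hs)⟩
  choose f hf hfC using branch
  obtain ⟨i, hi⟩ := hT.exists_apply_apply_eq hf
  obtain ⟨a, ha, b, hb, hab⟩ := h𝓑.touches _ (hC𝓑 i) _ (hC𝓑 (f i))
  obtain ⟨s, has, hbs⟩ : ∃ s, a ∈ D.bag s ∧ b ∈ D.bag s := by
    rcases hab with rfl | hab
    · obtain ⟨s, hs⟩ := D.cover a
      exact ⟨s, hs, hs⟩
    · exact D.edgeCover a b hab
  have hbranch := hfC (f i) s b hb hbs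
  rw [hi] at hbranch
  exact hT.isAcyclic.not_reachable_deleteIncidenceSet (hf i) (hfC i s a ha has) hbranch

end TreeDecomp

section Treewidth

open SimpleGraph

variable {V : Type} {G : SimpleGraph V}

lemma treewidth_le_of_card_bag_le [Fintype V] {ι : Type} [Fintype ι] {T : SimpleGraph ι}
    (hT : T.IsTree) (D : TreeDecomp G T) {w : ℕ} (hw : ∀ i, #(D.bag i) ≤ w + 1) :
    treewidth G ≤ w := by
  have hsup : (univ.sup fun i => #(D.bag i)) ≤ w + 1 := Finset.sup_le fun i _ => hw i
  calc treewidth G ≤ (univ.sup fun i => #(D.bag i)) - 1 :=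
        Nat.sInf_le ⟨ι, inferInstance, T, hT, D, rfl⟩
    _ ≤ w := by omega

def starDecomp [DecidableEq V] [DecidableRel G.Adj] (X : Finset V)
    (hX : ∀ u v, G.Adj u v → u ∈ X ∨ v ∈ X) : TreeDecomp G (starGraph (none : Option V)) where
  bag
    | none => X
    | some w => insert w {x ∈ X | G.Adj w x}
  cover v := ⟨some v, mem_insert_self _ _⟩
  edgeCover u v huv := by
    rcases hX u v huv with hu | hv
    · exact ⟨some v, mem_insert_of_mem (mem_filter.2 ⟨hu, huv.symm⟩), mem_insert_self _ _⟩
    · exact ⟨some u, mem_insert_self _ _, mem_insert_of_mem (mem_filter.2 ⟨hv, huv⟩)⟩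
  subtree v := by
    rw [connected_iff_exists_forall_reachable]
    by_cases hv : v ∈ X
    · refine ⟨⟨none, hv⟩, fun ⟨i, hi⟩ => ?_⟩
      cases i with
      | none => rfl
      | some w => exact Adj.reachable (by simp)
    · refine ⟨⟨some v, mem_insert_self _ _⟩, fun ⟨i, hi⟩ => ?_⟩
      cases i with
      | none => exact absurd hi hv
      | some w =>
        obtain rfl : v = w := by
          simp only [Set.mem_ofPred_eq, mem_insert, mem_filter] at hi
          tauto
        rfl

lemma card_bag_starDecomp_le [DecidableEq V] [DecidableRel G.Adj] {X : Finset V}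
    (hX : ∀ u v, G.Adj u v → u ∈ X ∨ v ∈ X) (hX' : ∀ w ∉ X, ∃ x ∈ X, ¬ G.Adj w x)
    (i : Option V) : #((starDecomp X hX).bag i) ≤ #X := by
  cases i with
  | none => exact le_rfl
  | some w =>
    have hlt : #{x ∈ X | G.Adj w x} < #X := by
      refine card_lt_card (filter_ssubset.2 ?_)
      by_cases hw : w ∈ X
      · exact ⟨w, hw, G.loopless.irrefl w⟩
      · exact hX' w hw
    exact (card_insert_le _ _).trans hlt

theorem treewidth_le_card_sub_one [Fintype V] (X : Finset V) (hX : ∀ u v, G.Adj u v → u ∈ X ∨ v ∈ X)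
    (hX' : ∀ w ∉ X, ∃ x ∈ X, ¬ G.Adj w x) : treewidth G ≤ #X - 1 := by
  classical
  refine treewidth_le_of_card_bag_le (isTree_starGraph none) (starDecomp X hX) fun i => ?_
  have := card_bag_starDecomp_le hX hX' i
  omega

theorem le_treewidth_of_isBramble [Fintype V] {𝓑 : Set (Finset V)} (h𝓑 : G.IsBramble 𝓑) {m : ℕ}
    (hm : ∀ S : Finset V, (∀ C ∈ 𝓑, ∃ v ∈ C, v ∈ S) → m ≤ #S) : m - 1 ≤ treewidth G := by
  classical
  refine le_csInf ⟨_, Option V, inferInstance, _, isTree_starGraph none,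
    starDecomp univ fun u _ _ => .inl (mem_univ u), rfl⟩ ?_
  rintro w ⟨ι, _, T, hT, D, rfl⟩
  obtain ⟨i, hi⟩ := D.exists_bag_forall_mem_of_isBramble hT h𝓑
  have := hm _ hi
  have := Finset.le_sup (f := fun i => #(D.bag i)) (mem_univ i)
  omega

end Treewidth

namespace Nat

variable {n k : ℕ}

lemma choose_succ_sub_choose_succ {m j : ℕ} (hjm : j < m) :
    (m + 1).choose (j + 1) - (m - j).choose (j + 1) =
      (m.choose (j + 1) - (m - (j + 1)).choose (j + 1)) +
        (m.choose j - (m - (j + 1)).choose j) := by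
  have e₁ := choose_succ_succ' m j
  have e₂ : (m - j).choose (j + 1) = (m - (j + 1)).choose j + (m - (j + 1)).choose (j + 1) := by
    rw [show m - j = m - (j + 1) + 1 by omega, choose_succ_succ']
  have l₁ : (m - (j + 1)).choose (j + 1) ≤ m.choose (j + 1) := choose_le_choose _ (by omega)
  have l₂ : (m - (j + 1)).choose j ≤ m.choose j := choose_le_choose _ (by omega)
  omega

lemma choose_sub_lt_choose (hk : 1 ≤ k) (hkn : k ≤ n) : (n - k).choose k < n.choose k := by
  obtain ⟨m, rfl⟩ : ∃ m, n = m + 1 := ⟨n - 1, by omega⟩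
  obtain ⟨j, rfl⟩ : ∃ j, k = j + 1 := ⟨k - 1, by omega⟩
  rw [choose_succ_succ']
  have := choose_pos (show j ≤ m by omega)
  have := choose_le_choose (j + 1) (show m + 1 - (j + 1) ≤ m by omega)
  omega

lemma choose_add_two_le_two_mul_choose (hk : 2 ≤ k) (hn : 2 * k < n)
    (h : 2 * n.choose k ≤ 3 * (n - k).choose k) : n.choose k + 2 ≤ 2 * (n - k).choose k := by
  have : 6 ≤ n.choose k := calc
    6 = (4).choose 2 := rfl
    _ ≤ (k + 2).choose 2 := choose_le_choose 2 (by omega)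
    _ = (k + 2).choose k := choose_symm_add.symm
    _ ≤ n.choose k := choose_le_choose k (by omega)
  omega

end Nat

section CrossIntersectingFamilies

open scoped FinsetFamily
open UV

def CrossIntersecting {α : Type*} (𝒜 ℬ : Finset (Finset α)) : Prop :=
  ∀ A ∈ 𝒜, ∀ B ∈ ℬ, ¬Disjoint A B

variable {α : Type*} {𝒜 ℬ : Finset (Finset α)} {A B X : Finset α} {x m : α} {k : ℕ}

namespace CrossIntersecting

lemma symm (h : CrossIntersecting 𝒜 ℬ) : CrossIntersecting ℬ 𝒜 :=
  fun B hB A hA hBA => h A hA B hB hBA.symm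

lemma mono {𝒜' ℬ' : Finset (Finset α)} (h : CrossIntersecting 𝒜 ℬ) (h𝒜 : 𝒜' ⊆ 𝒜)
    (hℬ : ℬ' ⊆ ℬ) : CrossIntersecting 𝒜' ℬ' :=
  fun A hA B hB => h A (h𝒜 hA) B (hℬ hB)

lemma one_le (h : CrossIntersecting 𝒜 ℬ) (h𝒜 : 𝒜 ⊆ powersetCard k X) (hA : A ∈ 𝒜)
    (hB : B ∈ ℬ) : 1 ≤ k := by
  obtain ⟨a, ha, -⟩ := not_disjoint_iff.1 (h A hA B hB)
  rw [← (mem_powersetCard.1 (h𝒜 hA)).2]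
  exact card_pos.2 ⟨a, ha⟩

end CrossIntersecting

variable [DecidableEq α]

lemma card_le_choose_sub_choose_of_forall_not_disjoint {ℋ : Finset (Finset α)} {r : ℕ}
    (hℋ : ℋ ⊆ powersetCard r X) (hA : A ⊆ X) (hmeet : ∀ B ∈ ℋ, ¬Disjoint B A) :
    #ℋ ≤ (#X).choose r - (#X - #A).choose r := by
  have hsub : ℋ ⊆ powersetCard r X \ powersetCard r (X \ A) := fun B hB => by
    rw [mem_sdiff, mem_powersetCard, mem_powersetCard, subset_sdiff]
    exact ⟨mem_powersetCard.1 (hℋ hB), fun h => hmeet B hB h.1.2⟩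
  calc #ℋ ≤ _ := card_le_card hsub
    _ = _ := by
      rw [card_sdiff_of_subset (powersetCard_mono sdiff_subset), card_powersetCard,
        card_powersetCard, card_sdiff_of_subset hA]

/-- Complementation in `X` maps `ℬ` into the `k`-sets of `X` avoided by `𝒜`. -/
lemma CrossIntersecting.card_add_card_le_choose (h : CrossIntersecting 𝒜 ℬ) (hX : #X = 2 * k)
    (h𝒜 : 𝒜 ⊆ powersetCard k X) (hℬ : ℬ ⊆ powersetCard k X) :
    #𝒜 + #ℬ ≤ (#X).choose k := by
  have hinj : Set.InjOn (X \ ·) ℬ := fun B₁ h₁ B₂ h₂ he => by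
    rw [← Finset.sdiff_sdiff_eq_self (mem_powersetCard.1 (hℬ h₁)).1,
      ← Finset.sdiff_sdiff_eq_self (mem_powersetCard.1 (hℬ h₂)).1]
    exact congrArg (X \ ·) he
  have hdisj : Disjoint 𝒜 (ℬ.image (X \ ·)) := Finset.disjoint_left.2 fun A hA hA' => by
    obtain ⟨B, hB, rfl⟩ := mem_image.1 hA'
    exact h _ hA B hB disjoint_sdiff_self_left
  have hsub : 𝒜 ∪ ℬ.image (X \ ·) ⊆ powersetCard k X := by
    refine union_subset h𝒜 fun A hA => ?_
    obtain ⟨B, hB, rfl⟩ := mem_image.1 hA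
    obtain ⟨hBX, hBk⟩ := mem_powersetCard.1 (hℬ hB)
    exact mem_powersetCard.2 ⟨sdiff_subset, by rw [card_sdiff_of_subset hBX]; omega⟩
  calc #𝒜 + #ℬ = #(𝒜 ∪ ℬ.image (X \ ·)) := by
        rw [card_union_of_disjoint hdisj, card_image_of_injOn hinj]
    _ ≤ _ := card_le_card hsub
    _ = _ := card_powersetCard _ _

lemma compress_singleton_of_mem_of_notMem (hm : m ∈ A) (hx : x ∉ A) :
    compress {x} {m} A = insert x (A.erase m) := by
  rw [compress_of_disjoint_of_le (disjoint_singleton_left.2 hx) (singleton_subset_iff.2 hm)]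
  ext y
  simp only [sup_eq_union, mem_sdiff, mem_union, mem_singleton, mem_insert, mem_erase]
  grind

lemma compression_subset_powersetCard (hx : x ∈ X) (h𝒜 : 𝒜 ⊆ powersetCard k X) :
    𝓒 {x} {m} 𝒜 ⊆ powersetCard k X := by
  intro A hA
  obtain ⟨hA, -⟩ | ⟨-, B, hB, rfl⟩ := mem_compression.1 hA
  · exact h𝒜 hA
  obtain ⟨hBX, hBk⟩ := mem_powersetCard.1 (h𝒜 hB)
  refine mem_powersetCard.2 ⟨?_, (card_compress (by simp) B).trans hBk⟩
  unfold compress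
  split_ifs
  · exact sdiff_subset.trans (union_subset hBX (singleton_subset_iff.2 hx))
  · exact hBX

lemma CrossIntersecting.not_disjoint_of_mem_compression_of_notMem (h : CrossIntersecting 𝒜 ℬ)
    (hA : A ∈ 𝓒 {x} {m} 𝒜) (hA' : A ∉ 𝒜) (hB : B ∈ ℬ) (hB' : compress {x} {m} B ∈ ℬ) :
    ¬Disjoint A B := by
  have hxA : x ∈ A := singleton_subset_iff.1 (le_of_mem_compression_of_notMem hA hA')
  have hmA : m ∉ A := disjoint_singleton_left.1 (disjoint_of_mem_compression_of_notMem hA hA')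
  have hA'' := sup_sdiff_mem_of_mem_compression_of_notMem hA hA'
  intro hAB
  have hxB : x ∉ B := Finset.disjoint_left.1 hAB hxA
  obtain ⟨y, hy, hyB⟩ := not_disjoint_iff.1 (h _ hA'' B hB)
  simp only [sup_eq_union, mem_sdiff, mem_union, mem_singleton] at hy
  have hmB : m ∈ B := by
    rcases hy.1 with hyA | rfl
    · exact absurd hyB (Finset.disjoint_left.1 hAB hyA)
    · exact hyB
  rw [compress_singleton_of_mem_of_notMem hmB hxB] at hB'
  obtain ⟨z, hz, hzB⟩ := not_disjoint_iff.1 (h _ hA'' _ hB')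
  simp only [sup_eq_union, mem_sdiff, mem_union, mem_singleton, mem_insert, mem_erase] at hz hzB
  have hzA : z ∈ A := by grind
  exact Finset.disjoint_left.1 hAB hzA (by grind)

lemma CrossIntersecting.compression (h : CrossIntersecting 𝒜 ℬ) :
    CrossIntersecting (𝓒 {x} {m} 𝒜) (𝓒 {x} {m} ℬ) := by
  have compress_mem : ∀ {𝒞 : Finset (Finset α)} {C}, C ∈ 𝓒 {x} {m} 𝒞 → C ∈ 𝒞 →
      compress {x} {m} C ∈ 𝒞 := fun hC hC' =>
    ((mem_compression.1 hC).resolve_right fun h => h.1 hC').2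
  intro A hA B hB
  by_cases hA' : A ∈ 𝒜 <;> by_cases hB' : B ∈ ℬ
  · exact h A hA' B hB'
  · exact fun hAB => h.symm.not_disjoint_of_mem_compression_of_notMem hB hB' hA'
      (compress_mem hA hA') hAB.symm
  · exact h.not_disjoint_of_mem_compression_of_notMem hA hA' hB' (compress_mem hB hB')
  · exact not_disjoint_iff.2 ⟨x, singleton_subset_iff.1 (le_of_mem_compression_of_notMem hA hA'),
      singleton_subset_iff.1 (le_of_mem_compression_of_notMem hB hB')⟩

lemma filter_mem_compression_subset : {A ∈ 𝓒 {x} {m} 𝒜 | m ∈ A} ⊆ {A ∈ 𝒜 | m ∈ A} :=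
  fun A hA => by
    rw [mem_filter] at hA ⊢
    exact ⟨mem_of_mem_compression hA.1 (singleton_subset_iff.2 hA.2)
      fun h => absurd h (singleton_ne_empty m), hA.2⟩

lemma filter_mem_compression_ssubset (hne : 𝓒 {x} {m} 𝒜 ≠ 𝒜) :
    {A ∈ 𝓒 {x} {m} 𝒜 | m ∈ A} ⊂ {A ∈ 𝒜 | m ∈ A} := by
  obtain ⟨A, hA, hA'⟩ : ∃ A ∈ 𝒜, A ∉ 𝓒 {x} {m} 𝒜 := by
    by_contra! h
    exact hne (eq_of_subset_of_card_le h (card_compression _ _ _).le).symm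
  have hcA : compress {x} {m} A ≠ A := fun h => hA' (h ▸ compress_mem_compression hA)
  have hmA : m ∈ A := by
    unfold compress at hcA
    split_ifs at hcA with hc
    exacts [singleton_subset_iff.1 hc.2, absurd rfl hcA]
  exact (ssubset_iff_of_subset filter_mem_compression_subset).2
    ⟨A, mem_filter.2 ⟨hA, hmA⟩, fun h => hA' (mem_filter.1 h).1⟩

end CrossIntersectingFamilies

section Shifting

open scoped FinsetFamily
open UV

variable {𝒜 ℬ : Finset (Finset ℕ)} {A : Finset ℕ} {m k : ℕ}

/-- Members of `𝒜` containing `m` stay in `𝒜` when `m` is swapped for a smaller element. -/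
def IsShiftedTo (m : ℕ) (𝒜 : Finset (Finset ℕ)) : Prop :=
  ∀ x < m, IsCompressed {x} {m} 𝒜

lemma IsShiftedTo.insert_erase_mem (h : IsShiftedTo m 𝒜) (hA : A ∈ 𝒜) {x : ℕ} (hx : x < m)
    (hmA : m ∈ A) (hxA : x ∉ A) : insert x (A.erase m) ∈ 𝒜 := by
  have := compress_mem_compression (u := {x}) (v := {m}) hA
  rwa [(h x hx).eq, compress_singleton_of_mem_of_notMem hmA hxA] at this

lemma exists_isShiftedTo (h : CrossIntersecting 𝒜 ℬ) (h𝒜 : 𝒜 ⊆ powersetCard k (range (m + 1)))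
    (hℬ : ℬ ⊆ powersetCard k (range (m + 1))) :
    ∃ 𝒜' ℬ' : Finset (Finset ℕ), CrossIntersecting 𝒜' ℬ' ∧
      𝒜' ⊆ powersetCard k (range (m + 1)) ∧ ℬ' ⊆ powersetCard k (range (m + 1)) ∧
      #𝒜' = #𝒜 ∧ #ℬ' = #ℬ ∧ IsShiftedTo m 𝒜' ∧ IsShiftedTo m ℬ' := by
  obtain ⟨μ, hμ⟩ : ∃ μ, #{A ∈ 𝒜 | m ∈ A} + #{B ∈ ℬ | m ∈ B} = μ := ⟨_, rfl⟩
  induction μ using Nat.strong_induction_on generalizing 𝒜 ℬ with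
  | _ μ ih =>
  by_cases hsh : IsShiftedTo m 𝒜 ∧ IsShiftedTo m ℬ
  · exact ⟨𝒜, ℬ, h, h𝒜, hℬ, rfl, rfl, hsh⟩
  obtain ⟨x, hx, hne⟩ : ∃ x < m, 𝓒 {x} {m} 𝒜 ≠ 𝒜 ∨ 𝓒 {x} {m} ℬ ≠ ℬ := by
    by_contra! hc
    exact hsh ⟨fun x hx => (hc x hx).1, fun x hx => (hc x hx).2⟩
  have hlt : #{A ∈ 𝓒 {x} {m} 𝒜 | m ∈ A} + #{B ∈ 𝓒 {x} {m} ℬ | m ∈ B} < μ := by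
    have h₁ := card_le_card (filter_mem_compression_subset (x := x) (m := m) (𝒜 := 𝒜))
    have h₂ := card_le_card (filter_mem_compression_subset (x := x) (m := m) (𝒜 := ℬ))
    rcases hne with hne | hne
    · have := card_lt_card (filter_mem_compression_ssubset hne)
      omega
    · have := card_lt_card (filter_mem_compression_ssubset hne)
      omega
  have hxm : x ∈ range (m + 1) := mem_range.2 (by omega)
  obtain ⟨𝒜', ℬ', h', h𝒜', hℬ', hc𝒜, hcℬ, hsh'⟩ := ih _ hlt h.compression
    (compression_subset_powersetCard hxm h𝒜) (compression_subset_powersetCard hxm hℬ) rfl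
  exact ⟨𝒜', ℬ', h', h𝒜', hℬ', hc𝒜.trans (card_compression _ _ _),
    hcℬ.trans (card_compression _ _ _), hsh'⟩

lemma nonMemberSubfamily_subset_powersetCard (h𝒜 : 𝒜 ⊆ powersetCard k (range (m + 1))) :
    𝒜.nonMemberSubfamily m ⊆ powersetCard k (range m) := fun A hA => by
  obtain ⟨hA, hmA⟩ := mem_nonMemberSubfamily.1 hA
  obtain ⟨hAX, hAk⟩ := mem_powersetCard.1 (h𝒜 hA)
  rw [range_add_one, subset_insert_iff_of_notMem hmA] at hAX
  exact mem_powersetCard.2 ⟨hAX, hAk⟩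

lemma memberSubfamily_subset_powersetCard (h𝒜 : 𝒜 ⊆ powersetCard (k + 1) (range (m + 1))) :
    𝒜.memberSubfamily m ⊆ powersetCard k (range m) := fun A hA => by
  obtain ⟨hA, hmA⟩ := mem_memberSubfamily.1 hA
  obtain ⟨hAX, hAk⟩ := mem_powersetCard.1 (h𝒜 hA)
  rw [range_add_one, insert_subset_insert_iff hmA] at hAX
  rw [card_insert_of_notMem hmA] at hAk
  exact mem_powersetCard.2 ⟨hAX, by omega⟩

lemma IsShiftedTo.nonMemberSubfamily_nonempty (h : IsShiftedTo m 𝒜)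
    (h𝒜 : 𝒜 ⊆ powersetCard k (range (m + 1))) (hkm : k ≤ m) (hne : 𝒜.Nonempty) :
    (𝒜.nonMemberSubfamily m).Nonempty := by
  obtain ⟨A, hA⟩ := hne
  by_cases hmA : m ∈ A
  · obtain ⟨x, hx, hxA⟩ : ∃ x ∈ range m, x ∉ A.erase m := by
      refine exists_mem_notMem_of_card_lt_card ?_
      have hAk := (mem_powersetCard.1 (h𝒜 hA)).2
      have := card_pos.2 ⟨m, hmA⟩
      rw [card_erase_of_mem hmA, card_range]
      omega
    have hxm : x < m := mem_range.1 hx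
    have hxA' : x ∉ A := fun h => hxA (mem_erase.2 ⟨hxm.ne, h⟩)
    refine ⟨_, mem_nonMemberSubfamily.2 ⟨h.insert_erase_mem hA hxm hmA hxA', ?_⟩⟩
    simp [hxm.ne']
  · exact ⟨A, mem_nonMemberSubfamily.2 ⟨hA, hmA⟩⟩

lemma IsShiftedTo.crossIntersecting_memberSubfamily (hℬ : IsShiftedTo m ℬ)
    (h : CrossIntersecting 𝒜 ℬ) (h𝒜 : 𝒜 ⊆ powersetCard (k + 1) (range (m + 1)))
    (hℬ' : ℬ ⊆ powersetCard (k + 1) (range (m + 1))) (hkm : 2 * k < m) :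
    CrossIntersecting (𝒜.memberSubfamily m) (ℬ.memberSubfamily m) := by
  intro A hA B hB hAB
  have hAk := (mem_powersetCard.1 (memberSubfamily_subset_powersetCard h𝒜 hA)).2
  have hBk := (mem_powersetCard.1 (memberSubfamily_subset_powersetCard hℬ' hB)).2
  obtain ⟨x, hx, hxAB⟩ : ∃ x ∈ range m, x ∉ A ∪ B := by
    refine exists_mem_notMem_of_card_lt_card ?_
    have := card_union_le A B
    rw [card_range]
    omega
  have hxm : x < m := mem_range.1 hx
  rw [mem_union, not_or] at hxAB
  rw [mem_memberSubfamily] at hA hB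
  have hxB := hℬ.insert_erase_mem hB.1 hxm (mem_insert_self _ _) (by simp [hxm.ne, hxAB.2])
  rw [erase_insert hB.2] at hxB
  refine h _ hA.1 _ hxB ?_
  rw [disjoint_insert_left, disjoint_insert_right, mem_insert, not_or]
  exact ⟨⟨hxm.ne', hB.2⟩, hxAB.1, hAB⟩

lemma CrossIntersecting.not_disjoint_memberSubfamily (h : CrossIntersecting 𝒜 ℬ) {B : Finset ℕ}
    (hA : A ∈ 𝒜.nonMemberSubfamily m) (hB : B ∈ ℬ.memberSubfamily m) : ¬Disjoint B A := by
  rw [mem_nonMemberSubfamily] at hA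
  rw [mem_memberSubfamily] at hB
  intro hBA
  exact h A hA.1 _ hB.1 (disjoint_insert_right.2 ⟨hA.2, hBA.symm⟩)

end Shifting

section HiltonMilner

variable {𝒜 ℬ : Finset (Finset ℕ)} {ν k : ℕ}

lemma CrossIntersecting.card_add_card_le_of_two_mul_eq (h : CrossIntersecting 𝒜 ℬ)
    (h𝒜 : 𝒜 ⊆ powersetCard k (range ν)) (hℬ : ℬ ⊆ powersetCard k (range ν)) (hν : 2 * k = ν) :
    #𝒜 + #ℬ ≤ ν.choose k - (ν - k).choose k + 1 := by
  have := h.card_add_card_le_choose (by rw [card_range]; omega) h𝒜 hℬ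
  rw [card_range] at this
  rw [show ν - k = k by omega, Nat.choose_self]
  omega

lemma CrossIntersecting.card_memberSubfamily_le {m j : ℕ} (h : CrossIntersecting 𝒜 ℬ)
    (h𝒜 : 𝒜 ⊆ powersetCard (j + 1) (range (m + 1)))
    (hℬ : ℬ ⊆ powersetCard (j + 1) (range (m + 1))) {A : Finset ℕ}
    (hA : A ∈ 𝒜.nonMemberSubfamily m) :
    #(ℬ.memberSubfamily m) ≤ m.choose j - (m - (j + 1)).choose j := by
  have hA' := mem_powersetCard.1 (nonMemberSubfamily_subset_powersetCard h𝒜 hA)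
  have := card_le_choose_sub_choose_of_forall_not_disjoint
    (memberSubfamily_subset_powersetCard hℬ) hA'.1 fun B hB => h.not_disjoint_memberSubfamily hA hB
  rwa [card_range, hA'.2] at this

lemma CrossIntersecting.card_add_card_memberSubfamily_le {m j : ℕ} (h : CrossIntersecting 𝒜 ℬ)
    (h𝒜 : 𝒜 ⊆ powersetCard (j + 1) (range (m + 1)))
    (hℬ : ℬ ⊆ powersetCard (j + 1) (range (m + 1))) {A B : Finset ℕ}
    (hA : A ∈ 𝒜.nonMemberSubfamily m) (hB : B ∈ ℬ.nonMemberSubfamily m)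
    (h₁ : CrossIntersecting (𝒜.memberSubfamily m) (ℬ.memberSubfamily m)) (hjm : 2 * j < m)
    (ih : (𝒜.memberSubfamily m).Nonempty → (ℬ.memberSubfamily m).Nonempty →
      #(𝒜.memberSubfamily m) + #(ℬ.memberSubfamily m) ≤ m.choose j - (m - j).choose j + 1) :
    #(𝒜.memberSubfamily m) + #(ℬ.memberSubfamily m) ≤ m.choose j - (m - (j + 1)).choose j := by
  rcases (𝒜.memberSubfamily m).eq_empty_or_nonempty with h𝒜₁ | h𝒜₁
  · have := h.card_memberSubfamily_le h𝒜 hℬ hA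
    rw [h𝒜₁, card_empty]
    omega
  rcases (ℬ.memberSubfamily m).eq_empty_or_nonempty with hℬ₁ | hℬ₁
  · have := h.symm.card_memberSubfamily_le hℬ h𝒜 hB
    rw [hℬ₁, card_empty]
    omega
  have hj := h₁.one_le (memberSubfamily_subset_powersetCard h𝒜) h𝒜₁.choose_spec hℬ₁.choose_spec
  have hlt : (m - (j + 1)).choose j < (m - j).choose j := by
    obtain ⟨i, rfl⟩ : ∃ i, j = i + 1 := ⟨j - 1, by omega⟩
    rw [show m - (i + 1) = m - (i + 1 + 1) + 1 by omega, Nat.choose_succ_succ']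
    have := Nat.choose_pos (show i ≤ m - (i + 1 + 1) by omega)
    omega
  have hle : (m - j).choose j ≤ m.choose j := Nat.choose_le_choose _ (by omega)
  have := ih h𝒜₁ hℬ₁
  omega

/-- The Hilton–Milner bound for cross-intersecting families, proved by shifting towards the top
element and splitting both families according to whether they contain it. -/
theorem CrossIntersecting.card_add_card_le (h : CrossIntersecting 𝒜 ℬ)
    (h𝒜 : 𝒜 ⊆ powersetCard k (range ν)) (hℬ : ℬ ⊆ powersetCard k (range ν))
    (h𝒜ne : 𝒜.Nonempty) (hℬne : ℬ.Nonempty) (hν : 2 * k ≤ ν) :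
    #𝒜 + #ℬ ≤ ν.choose k - (ν - k).choose k + 1 := by
  induction ν generalizing k 𝒜 ℬ with
  | zero => exact h.card_add_card_le_of_two_mul_eq h𝒜 hℬ (by omega)
  | succ m ih =>
  obtain hν | hν := hν.eq_or_lt
  · exact h.card_add_card_le_of_two_mul_eq h𝒜 hℬ hν
  obtain ⟨j, rfl⟩ : ∃ j, k = j + 1 :=
    ⟨k - 1, by have := h.one_le h𝒜 h𝒜ne.choose_spec hℬne.choose_spec; omega⟩
  obtain ⟨𝒜', ℬ', h', h𝒜', hℬ', hc𝒜, hcℬ, hs𝒜, hsℬ⟩ := exists_isShiftedTo h h𝒜 hℬ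
  have h𝒜ne' : 𝒜'.Nonempty := card_pos.1 (hc𝒜 ▸ card_pos.2 h𝒜ne)
  have hℬne' : ℬ'.Nonempty := card_pos.1 (hcℬ ▸ card_pos.2 hℬne)
  rw [← hc𝒜, ← hcℬ, ← card_memberSubfamily_add_card_nonMemberSubfamily m 𝒜',
    ← card_memberSubfamily_add_card_nonMemberSubfamily m ℬ']
  have h𝒜₀ := hs𝒜.nonMemberSubfamily_nonempty h𝒜' (by omega) h𝒜ne'
  have hℬ₀ := hsℬ.nonMemberSubfamily_nonempty hℬ' (by omega) hℬne'
  have bound₀ := ih (𝒜 := 𝒜'.nonMemberSubfamily m) (ℬ := ℬ'.nonMemberSubfamily m)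
    (h'.mono (filter_subset _ _) (filter_subset _ _))
    (nonMemberSubfamily_subset_powersetCard h𝒜') (nonMemberSubfamily_subset_powersetCard hℬ')
    h𝒜₀ hℬ₀ (by omega)
  have bound₁ := h'.card_add_card_memberSubfamily_le h𝒜' hℬ' h𝒜₀.choose_spec hℬ₀.choose_spec
    (hsℬ.crossIntersecting_memberSubfamily h' h𝒜' hℬ' (by omega)) (by omega)
    fun h𝒜₁ hℬ₁ => ih (hsℬ.crossIntersecting_memberSubfamily h' h𝒜' hℬ' (by omega))
      (memberSubfamily_subset_powersetCard h𝒜') (memberSubfamily_subset_powersetCard hℬ')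
      h𝒜₁ hℬ₁ (by omega)
  have := Nat.choose_succ_sub_choose_succ (show j < m by omega)
  rw [show m + 1 - (j + 1) = m - j by omega]
  omega

end HiltonMilner

lemma CrossIntersecting.card_add_card_le_of_fin {n k : ℕ} {𝒜 ℬ : Finset (Finset (Fin n))}
    (h : CrossIntersecting 𝒜 ℬ) (h𝒜 : ∀ A ∈ 𝒜, #A = k) (hℬ : ∀ B ∈ ℬ, #B = k)
    (h𝒜ne : 𝒜.Nonempty) (hℬne : ℬ.Nonempty) (hn : 2 * k ≤ n) :
    #𝒜 + #ℬ ≤ n.choose k - (n - k).choose k + 1 := by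
  have hsub : ∀ 𝒞 : Finset (Finset (Fin n)), (∀ C ∈ 𝒞, #C = k) →
      𝒞.image (map Fin.valEmbedding) ⊆ powersetCard k (range n) := fun 𝒞 h𝒞 _ hC' => by
    obtain ⟨C, hC, rfl⟩ := mem_image.1 hC'
    refine mem_powersetCard.2 ⟨fun x hx => ?_, by rw [card_map, h𝒞 C hC]⟩
    obtain ⟨y, -, rfl⟩ := mem_map.1 hx
    exact mem_range.2 y.2
  have hcross : CrossIntersecting (𝒜.image (map Fin.valEmbedding))
      (ℬ.image (map Fin.valEmbedding)) := by
    intro _ hA' _ hB'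
    obtain ⟨A, hA, rfl⟩ := mem_image.1 hA'
    obtain ⟨B, hB, rfl⟩ := mem_image.1 hB'
    rw [disjoint_map]
    exact h A hA B hB
  have := hcross.card_add_card_le (hsub 𝒜 h𝒜) (hsub ℬ hℬ) (h𝒜ne.image _) (hℬne.image _) hn
  rwa [card_image_of_injective _ (map_injective _), card_image_of_injective _ (map_injective _)]
    at this

section BipartiteKneser

abbrev KneserVertex (n k : ℕ) := {A : Finset (Fin n) // #A = k ∨ #A = n - k}

variable {n k : ℕ}

lemma card_filter_kneserVertex {P : Finset (Fin n) → Prop} [DecidablePred P]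
    (hP : ∀ A, P A → #A = k ∨ #A = n - k) :
    #{v : KneserVertex n k | P v.1} = #{A : Finset (Fin n) | P A} := by
  refine card_bij (fun v _ => v.1) (fun v hv => by simpa using hv) (fun v _ w _ => Subtype.ext)
    fun A hA => ⟨⟨A, hP A (mem_filter.1 hA).2⟩, by simpa using hA, rfl⟩

lemma card_filter_card_eq_and_subset (X : Finset (Fin n)) :
    #{A : Finset (Fin n) | #A = k ∧ A ⊆ X} = (#X).choose k := by
  rw [← card_powersetCard]
  congr 1
  ext A
  simp [mem_powersetCard, and_comm]

lemma card_filter_card_eq : #{v : KneserVertex n k | #v.1 = k} = n.choose k := by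
  rw [card_filter_kneserVertex (P := (#· = k)) fun A => .inl]
  simp

lemma card_filter_card_eq_sub (hkn : k ≤ n) :
    #{v : KneserVertex n k | #v.1 = n - k} = n.choose k := by
  rw [card_filter_kneserVertex (P := (#· = n - k)) fun A => .inr, ← Nat.choose_symm hkn]
  simp

lemma card_filter_subset {w : KneserVertex n k} (hw : #w.1 = n - k) :
    #{v : KneserVertex n k | #v.1 = k ∧ v.1 ⊆ w.1} = (n - k).choose k := by
  rw [card_filter_kneserVertex (P := fun A => #A = k ∧ A ⊆ w.1) fun A hA => .inl hA.1,
    card_filter_card_eq_and_subset, hw]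

lemma card_filter_superset {v : KneserVertex n k} (hv : #v.1 = k) :
    #{w : KneserVertex n k | #w.1 = n - k ∧ v.1 ⊆ w.1} = (n - k).choose k := by
  have hkn : k ≤ n := hv ▸ (card_le_univ v.1).trans_eq (Fintype.card_fin n)
  rw [card_filter_kneserVertex (P := fun A => #A = n - k ∧ v.1 ⊆ A) fun A hA => .inr hA.1]
  calc #{A : Finset (Fin n) | #A = n - k ∧ v.1 ⊆ A} = #{B | #B = k ∧ B ⊆ v.1ᶜ} := by
        refine card_nbij' compl compl (fun A hA => ?_) (fun B hB => ?_)
          (fun A _ => compl_compl A) (fun B _ => compl_compl B)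
        · simp only [coe_filter, Set.mem_ofPred_eq, mem_univ, true_and, card_compl,
            Fintype.card_fin] at hA ⊢
          exact ⟨by omega, compl_subset_compl.2 hA.2⟩
        · simp only [coe_filter, Set.mem_ofPred_eq, mem_univ, true_and, card_compl,
            Fintype.card_fin] at hB ⊢
          exact ⟨by omega, subset_compl_comm.1 hB.2⟩
    _ = (n - k).choose k := by rw [card_filter_card_eq_and_subset, card_compl, Fintype.card_fin, hv]

lemma ssubset_iff_of_two_mul_lt (hn : 2 * k < n) {v w : KneserVertex n k} :
    v.1 ⊂ w.1 ↔ #v.1 = k ∧ #w.1 = n - k ∧ v.1 ⊆ w.1 := by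
  constructor
  · intro h
    have := card_lt_card h
    rcases v.2 with hv | hv <;> rcases w.2 with hw | hw <;> first | omega | exact ⟨hv, hw, h.1⟩
  · rintro ⟨hv, hw, h⟩
    exact Finset.ssubset_iff_subset_ne.2 ⟨h, fun e => by rw [e] at hv; omega⟩

lemma bipartiteKneser_adj_iff (hn : 2 * k < n) {v w : KneserVertex n k} :
    (bipartiteKneser n k).Adj v w ↔
      (#v.1 = k ∧ #w.1 = n - k ∧ v.1 ⊆ w.1) ∨ (#w.1 = k ∧ #v.1 = n - k ∧ w.1 ⊆ v.1) := by
  show v.1 ⊂ w.1 ∨ w.1 ⊂ v.1 ↔ _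
  rw [ssubset_iff_of_two_mul_lt hn, ssubset_iff_of_two_mul_lt hn]

lemma card_filter_card_eq_add_card_filter_card_eq_sub (hn : 2 * k < n)
    (R : Finset (KneserVertex n k)) : #{v ∈ R | #v.1 = k} + #{v ∈ R | #v.1 = n - k} = #R := by
  rw [← card_filter_add_card_filter_not (s := R) (fun v => #v.1 = k)]
  congr 2
  exact filter_congr fun v _ => by rcases v.2 with h | h <;> omega

lemma card_kneserVertex (hn : 2 * k < n) : Fintype.card (KneserVertex n k) = 2 * n.choose k := by
  rw [← card_univ, ← card_filter_card_eq_add_card_filter_card_eq_sub hn, card_filter_card_eq,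
    card_filter_card_eq_sub (by omega)]
  ring

lemma card_add_card_le_of_forall_not_subset (hn : 2 * k < n) {P Q : Finset (KneserVertex n k)}
    (hP : ∀ v ∈ P, #v.1 = k) (hQ : ∀ w ∈ Q, #w.1 = n - k)
    (hPQ : ∀ v ∈ P, ∀ w ∈ Q, ¬v.1 ⊆ w.1) (hPne : P.Nonempty) (hQne : Q.Nonempty) :
    #P + #Q ≤ n.choose k - (n - k).choose k + 1 := by
  have hcross : CrossIntersecting (P.image (·.1)) (Q.image (·.1ᶜ)) := by
    intro _ hA _ hB
    obtain ⟨v, hv, rfl⟩ := mem_image.1 hA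
    obtain ⟨w, hw, rfl⟩ := mem_image.1 hB
    rw [disjoint_compl_right_iff]
    exact hPQ v hv w hw
  have := hcross.card_add_card_le_of_fin (k := k)
    (fun A hA => by obtain ⟨v, hv, rfl⟩ := mem_image.1 hA; exact hP v hv)
    (fun B hB => by
      obtain ⟨w, hw, rfl⟩ := mem_image.1 hB
      rw [card_compl, Fintype.card_fin, hQ w hw]
      omega)
    (hPne.image _) (hQne.image _) hn.le
  rwa [card_image_of_injective _ Subtype.val_injective,
    card_image_of_injective _ fun v w h => Subtype.ext (compl_injective h)] at this

lemma card_add_card_le_of_forall_not_subset_of_le (hn : 2 * k < n)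
    {P Q : Finset (KneserVertex n k)} (hP : ∀ v ∈ P, #v.1 = k) (hQ : ∀ w ∈ Q, #w.1 = n - k)
    (hPQ : ∀ v ∈ P, ∀ w ∈ Q, ¬v.1 ⊆ w.1)
    (h : P.Nonempty ∧ #P ≤ n.choose k - (n - k).choose k ∨
      Q.Nonempty ∧ #Q ≤ n.choose k - (n - k).choose k) :
    #P + #Q ≤ n.choose k - (n - k).choose k + 1 := by
  rcases P.eq_empty_or_nonempty with hP' | hP'
  · simp only [hP', Finset.not_nonempty_empty, false_and, false_or] at h
    rw [hP', card_empty]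
    omega
  rcases Q.eq_empty_or_nonempty with hQ' | hQ'
  · simp only [hQ', Finset.not_nonempty_empty, false_and, or_false] at h
    rw [hQ', card_empty]
    omega
  exact card_add_card_le_of_forall_not_subset hn hP hQ hPQ hP' hQ'

/-- A vertex set is heavy if it meets both sides and, on one side, has more vertices than any
vertex of the other side has non-neighbours there; two heavy sets therefore always touch. -/
def IsHeavy (C : Finset (KneserVertex n k)) : Prop :=
  (n.choose k - (n - k).choose k < #{v ∈ C | #v.1 = k} ∧ ∃ w ∈ C, #w.1 = n - k) ∨
    (n.choose k - (n - k).choose k < #{w ∈ C | #w.1 = n - k} ∧ ∃ v ∈ C, #v.1 = k)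

lemma exists_mem_subset_of_lt_card {C : Finset (KneserVertex n k)} {w : KneserVertex n k}
    (hw : #w.1 = n - k) (hC : n.choose k - (n - k).choose k < #{v ∈ C | #v.1 = k}) :
    ∃ v ∈ C, #v.1 = k ∧ v.1 ⊆ w.1 := by
  by_contra! h
  have hsub : {v ∈ C | #v.1 = k} ⊆
      ({v | #v.1 = k ∧ ¬v.1 ⊆ w.1} : Finset (KneserVertex n k)) := fun v hv => by
    rw [mem_filter] at hv ⊢
    exact ⟨mem_univ _, hv.2, h v hv.1 hv.2⟩
  have h₁ := card_le_card hsub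
  have h₂ := card_filter_add_card_filter_not (s := {v : KneserVertex n k | #v.1 = k})
    (fun v => v.1 ⊆ w.1)
  rw [filter_filter, filter_filter, card_filter_card_eq, card_filter_subset hw] at h₂
  omega

lemma exists_mem_superset_of_lt_card {C : Finset (KneserVertex n k)} {v : KneserVertex n k}
    (hv : #v.1 = k) (hC : n.choose k - (n - k).choose k < #{w ∈ C | #w.1 = n - k}) :
    ∃ w ∈ C, #w.1 = n - k ∧ v.1 ⊆ w.1 := by
  by_contra! h
  have hsub : {w ∈ C | #w.1 = n - k} ⊆
      ({w | #w.1 = n - k ∧ ¬v.1 ⊆ w.1} : Finset (KneserVertex n k)) := fun w hw => by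
    rw [mem_filter] at hw ⊢
    exact ⟨mem_univ _, hw.2, h w hw.1 hw.2⟩
  have h₁ := card_le_card hsub
  have h₂ := card_filter_add_card_filter_not (s := {w : KneserVertex n k | #w.1 = n - k})
    (fun w => v.1 ⊆ w.1)
  rw [filter_filter, filter_filter, card_filter_card_eq_sub (hv ▸ card_le_univ v.1 |>.trans_eq
    (Fintype.card_fin n)), card_filter_superset hv] at h₂
  omega

lemma IsHeavy.touches (hn : 2 * k < n) {C C' : Finset (KneserVertex n k)} (hC : IsHeavy C)
    (hC' : IsHeavy C') : (bipartiteKneser n k).Touches C C' := by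
  have sides : ∀ {D : Finset (KneserVertex n k)}, IsHeavy D →
      (∃ v ∈ D, #v.1 = k) ∧ ∃ w ∈ D, #w.1 = n - k := by
    rintro D (⟨hD, w, hw⟩ | ⟨hD, v, hv⟩)
    · obtain ⟨v, hv⟩ := card_pos.1 (by omega : 0 < #{v ∈ D | #v.1 = k})
      exact ⟨⟨v, (mem_filter.1 hv).1, (mem_filter.1 hv).2⟩, w, hw⟩
    · obtain ⟨w, hw⟩ := card_pos.1 (by omega : 0 < #{w ∈ D | #w.1 = n - k})
      exact ⟨⟨v, hv⟩, w, (mem_filter.1 hw).1, (mem_filter.1 hw).2⟩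
  rcases hC with ⟨hC, -⟩ | ⟨hC, -⟩
  · obtain ⟨w, hw, hwk⟩ := (sides hC').2
    obtain ⟨v, hv, hvk, hvw⟩ := exists_mem_subset_of_lt_card hwk hC
    exact ⟨v, hv, w, hw, .inr ((bipartiteKneser_adj_iff hn).2 (.inl ⟨hvk, hwk, hvw⟩))⟩
  · obtain ⟨v, hv, hvk⟩ := (sides hC').1
    obtain ⟨w, hw, hwk, hvw⟩ := exists_mem_superset_of_lt_card hvk hC
    exact ⟨w, hw, v, hv, .inr ((bipartiteKneser_adj_iff hn).2 (.inr ⟨hvk, hwk, hvw⟩))⟩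

lemma isBramble_isHeavy (hn : 2 * k < n) :
    (bipartiteKneser n k).IsBramble
      {C | ((bipartiteKneser n k).induce (C : Set (KneserVertex n k))).Connected ∧ IsHeavy C} where
  connected _ hC := hC.1
  touches _ hC _ hC' := hC.2.touches hn hC'.2

lemma isHeavy_of_closed (hn : 2 * k < n) (hd : n.choose k + 2 ≤ 2 * (n - k).choose k)
    {S C : Finset (KneserVertex n k)} (hS : #S < n.choose k) (hCS : Disjoint C S)
    (hclosed : ∀ x ∈ C, ∀ y ∉ S, (bipartiteKneser n k).Adj x y → y ∈ C)
    {a b : KneserVertex n k} (ha : a ∈ C) (hak : #a.1 = k) (hb : b ∈ C) (hbk : #b.1 = n - k) :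
    IsHeavy C := by
  by_contra hC
  have hCX : #{v ∈ C | #v.1 = k} ≤ n.choose k - (n - k).choose k :=
    not_lt.1 fun h => hC (.inl ⟨h, b, hb, hbk⟩)
  have hCY : #{w ∈ C | #w.1 = n - k} ≤ n.choose k - (n - k).choose k :=
    not_lt.1 fun h => hC (.inr ⟨h, a, ha, hak⟩)
  have haS : a ∉ S := Finset.disjoint_left.1 hCS ha
  have hbS : b ∉ S := Finset.disjoint_left.1 hCS hb
  set X := ({v ∈ Sᶜ | #v.1 = k} : Finset (KneserVertex n k))
  set Y := ({w ∈ Sᶜ | #w.1 = n - k} : Finset (KneserVertex n k))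
  have hXY : #X + #Y = 2 * n.choose k - #S := by
    rw [card_filter_card_eq_add_card_filter_card_eq_sub hn, card_compl, card_kneserVertex hn]
  have hinX : #{v ∈ X | v ∈ C} ≤ #{v ∈ C | #v.1 = k} :=
    card_le_card fun v hv => by simp only [X, mem_filter] at hv ⊢; exact ⟨hv.2, hv.1.2⟩
  have hinY : #{w ∈ Y | w ∈ C} ≤ #{w ∈ C | #w.1 = n - k} :=
    card_le_card fun w hw => by simp only [Y, mem_filter] at hw ⊢; exact ⟨hw.2, hw.1.2⟩
  have hsplitX : #{v ∈ X | v ∈ C} + #{v ∈ X | v ∉ C} = #X := card_filter_add_card_filter_not _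
  have hsplitY : #{w ∈ Y | w ∈ C} + #{w ∈ Y | w ∉ C} = #Y := card_filter_add_card_filter_not _
  have hout : #{v ∈ X | v ∈ C} + #{w ∈ Y | w ∉ C} ≤ n.choose k - (n - k).choose k + 1 := by
    refine card_add_card_le_of_forall_not_subset_of_le hn
      (fun v hv => (mem_filter.1 (mem_filter.1 hv).1).2)
      (fun w hw => (mem_filter.1 (mem_filter.1 hw).1).2) (fun v hv w hw hvw => ?_)
      (.inl ⟨⟨a, by simp [X, ha, haS, hak]⟩, hinX.trans hCX⟩)
    simp only [X, Y, mem_filter, mem_compl] at hv hw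
    exact hw.2 (hclosed v hv.2 w hw.1.1
      ((bipartiteKneser_adj_iff hn).2 (.inl ⟨hv.1.2, hw.1.2, hvw⟩)))
  have hin : #{v ∈ X | v ∉ C} + #{w ∈ Y | w ∈ C} ≤ n.choose k - (n - k).choose k + 1 := by
    refine card_add_card_le_of_forall_not_subset_of_le hn
      (fun v hv => (mem_filter.1 (mem_filter.1 hv).1).2)
      (fun w hw => (mem_filter.1 (mem_filter.1 hw).1).2) (fun v hv w hw hvw => ?_)
      (.inr ⟨⟨b, by simp [Y, hb, hbS, hbk]⟩, hinY.trans hCY⟩)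
    simp only [X, Y, mem_filter, mem_compl] at hv hw
    exact hv.2 (hclosed w hw.2 v hv.1.1
      ((bipartiteKneser_adj_iff hn).2 (.inr ⟨hv.1.2, hw.1.2, hvw⟩)))
  have hdN : (n - k).choose k ≤ n.choose k := Nat.choose_le_choose k (Nat.sub_le n k)
  omega

theorem exists_isHeavy (hn : 2 * k < n) (hd : n.choose k + 2 ≤ 2 * (n - k).choose k)
    {S : Finset (KneserVertex n k)} (hS : #S < n.choose k) :
    ∃ C : Finset (KneserVertex n k), Disjoint C S ∧
      ((bipartiteKneser n k).induce (C : Set (KneserVertex n k))).Connected ∧ IsHeavy C := by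
  by_cases hedge : ∃ a ∉ S, ∃ b ∉ S, #a.1 = k ∧ #b.1 = n - k ∧ a.1 ⊆ b.1
  · obtain ⟨a, haS, b, hbS, hak, hbk, hab⟩ := hedge
    obtain ⟨C, haC, hCS, hC, hclosed⟩ :=
      (bipartiteKneser n k).exists_induce_connected_closed S haS
    have hbC := hclosed a haC b hbS ((bipartiteKneser_adj_iff hn).2 (.inl ⟨hak, hbk, hab⟩))
    exact ⟨C, hCS, hC, isHeavy_of_closed hn hd hS hCS hclosed haC hak hbC hbk⟩
  push Not at hedge
  obtain ⟨a, ha, haS⟩ := exists_mem_notMem_of_card_lt_card (hS.trans_eq card_filter_card_eq.symm)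
  obtain ⟨b, hb, hbS⟩ := exists_mem_notMem_of_card_lt_card
    (hS.trans_eq (card_filter_card_eq_sub (by omega)).symm)
  have := card_add_card_le_of_forall_not_subset hn (P := {v ∈ Sᶜ | #v.1 = k})
    (Q := {w ∈ Sᶜ | #w.1 = n - k}) (fun v hv => (mem_filter.1 hv).2)
    (fun w hw => (mem_filter.1 hw).2)
    (fun v hv w hw => hedge v (mem_compl.1 (mem_filter.1 hv).1) w (mem_compl.1 (mem_filter.1 hw).1)
      (mem_filter.1 hv).2 (mem_filter.1 hw).2)
    ⟨a, mem_filter.2 ⟨mem_compl.2 haS, (mem_filter.1 ha).2⟩⟩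
    ⟨b, mem_filter.2 ⟨mem_compl.2 hbS, (mem_filter.1 hb).2⟩⟩
  rw [card_filter_card_eq_add_card_filter_card_eq_sub hn, card_compl, card_kneserVertex hn] at this
  omega

theorem treewidth_bipartiteKneser_le (hk : 1 ≤ k) (hn : 2 * k < n) :
    treewidth (bipartiteKneser n k) ≤ n.choose k - 1 := by
  rw [← card_filter_card_eq (n := n) (k := k)]
  refine treewidth_le_card_sub_one _ (fun u v huv => ?_) fun w hw => ?_
  · rcases (bipartiteKneser_adj_iff hn).1 huv with h | h
    · exact .inl (mem_filter.2 ⟨mem_univ _, h.1⟩)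
    · exact .inr (mem_filter.2 ⟨mem_univ _, h.1⟩)
  have hwk : #w.1 = n - k := w.2.resolve_left fun h => hw (mem_filter.2 ⟨mem_univ _, h⟩)
  obtain ⟨x, hx, hxw⟩ := exists_mem_notMem_of_card_lt_card ((card_filter_subset hwk).trans_lt
    ((Nat.choose_sub_lt_choose hk (by omega)).trans_eq card_filter_card_eq.symm))
  refine ⟨x, hx, fun hadj => hxw ?_⟩
  rcases (bipartiteKneser_adj_iff hn).1 hadj with h | h
  · omega
  · exact mem_filter.2 ⟨mem_univ _, h.1, h.2.2⟩

theorem choose_sub_one_le_treewidth_bipartiteKneser (hn : 2 * k < n)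
    (hd : n.choose k + 2 ≤ 2 * (n - k).choose k) :
    n.choose k - 1 ≤ treewidth (bipartiteKneser n k) :=
  le_treewidth_of_isBramble (isBramble_isHeavy hn) fun S hS => by
    by_contra! hlt
    obtain ⟨C, hCS, hC, hheavy⟩ := exists_isHeavy hn hd hlt
    obtain ⟨v, hv, hvS⟩ := hS C ⟨hC, hheavy⟩
    exact Finset.disjoint_left.1 hCS hv hvS

end BipartiteKneser

/-- Theorem 1.3: if `k ≥ 2`, `n ≥ 2k+1` and `3·C(n−k,k) ≥ 2·C(n,k)`, then the treewidth
of the bipartite Kneser graph `BK(n,k)` is `C(n,k) − 1`. -/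
theorem treewidth_bipartiteKneser_eq (n k : ℕ) (hk : 2 ≤ k) (hn : 2 * k + 1 ≤ n)
    (h : 2 * Nat.choose n k ≤ 3 * Nat.choose (n - k) k) :
    treewidth (bipartiteKneser n k) = Nat.choose n k - 1 :=
  le_antisymm (treewidth_bipartiteKneser_le (by omega) hn)
    (choose_sub_one_le_treewidth_bipartiteKneser hn (Nat.choose_add_two_le_two_mul_choose hk hn h))
end

section
/- For all positive integers t and n, the pathwidth of the generalized hypercube equals its bandwidth: pw(H(t,2,n)) = bw(H(t,2,n)). -/
/-- The generalized Hamming graph `H(t,q,n)`: vertices are `n`-tuples over an alphabet of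
size `q`, two tuples adjacent iff they are distinct with Hamming distance at most `t`. -/
def genHamming (t q n : ℕ) : SimpleGraph (Fin n → Fin q) where
  Adj x y := x ≠ y ∧ hammingDist x y ≤ t
  symm := ⟨by
    rintro x y ⟨h1, h2⟩
    exact ⟨h1.symm, by rwa [hammingDist_comm]⟩⟩
  loopless := ⟨by rintro x ⟨h, -⟩; exact h rfl⟩

open Finset

section Numbering

variable {V : Type*} [Fintype V]

theorem exists_equiv_fin_lt_iff {K : Type*} [LinearOrder K] (f : V → K)
    (hf : Function.Injective f) :
    ∃ φ : V ≃ Fin (Fintype.card V), ∀ x y, f x < f y ↔ φ x < φ y := by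
  let _ : LinearOrder V := LinearOrder.lift' f hf
  exact ⟨(Fintype.orderIsoFinOfCardEq V rfl).symm.toEquiv,
    fun x y => (Fintype.orderIsoFinOfCardEq V rfl).symm.lt_iff_lt.symm⟩

variable (φ : V ≃ Fin (Fintype.card V))

def initSeg (k : ℕ) : Finset V := {v | (φ v : ℕ) < k}

variable {φ}

@[simp]
theorem mem_initSeg {k : ℕ} {v : V} : v ∈ initSeg φ k ↔ (φ v : ℕ) < k := by
  simp [initSeg]

theorem card_initSeg (k : ℕ) : #(initSeg φ k) = min k (Fintype.card V) := by
  have : initSeg φ k = ({i | (i : ℕ) < k} : Finset (Fin _)).map φ.symm.toEmbedding := by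
    ext v
    simp
  rw [this, card_map, Fin.card_filter_val_lt, min_comm]

theorem card_initSeg_of_le {k : ℕ} (hk : k ≤ Fintype.card V) : #(initSeg φ k) = k := by
  rw [card_initSeg, min_eq_left hk]

theorem initSeg_mono {k l : ℕ} (h : k ≤ l) : initSeg φ k ⊆ initSeg φ l := fun v hv => by
  simp only [mem_initSeg] at hv ⊢
  omega

theorem initSeg_union [DecidableEq V] (k l : ℕ) :
    initSeg φ k ∪ initSeg φ l = initSeg φ (max k l) := by
  ext v
  simp only [mem_union, mem_initSeg]
  omega

variable (φ) in
def IsInitial (S : Finset V) : Prop := ∀ x y, φ x < φ y → y ∈ S → x ∈ S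

theorem isInitial_initSeg (k : ℕ) : IsInitial φ (initSeg φ k) := fun x y hxy hy => by
  rw [mem_initSeg] at hy ⊢
  exact lt_trans (Fin.lt_def.1 hxy) hy

theorem IsInitial.eq_initSeg_card [DecidableEq V] {S : Finset V} (hS : IsInitial φ S) :
    S = initSeg φ #S := by
  have hsub : S ⊆ initSeg φ #S := fun x hx => by
    have hbelow : initSeg φ (φ x) ⊆ S.erase x := fun y hy => by
      rw [mem_initSeg] at hy
      exact mem_erase.2 ⟨by rintro rfl; omega, hS y x hy hx⟩
    have := card_le_card hbelow
    rw [card_initSeg_of_le (φ x).is_lt.le, card_erase_of_mem hx] at this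
    have := card_pos.2 ⟨x, hx⟩
    rw [mem_initSeg]
    omega
  exact eq_of_subset_of_card_le hsub (by rw [card_initSeg]; exact min_le_left _ _)

theorem sum_initSeg_lt_sum [DecidableEq V] {S : Finset V} (g : V → ℕ)
    (hg : ∀ x y, φ x < φ y → g x < g y) (hS : S ≠ initSeg φ #S) :
    ∑ x ∈ initSeg φ #S, g x < ∑ x ∈ S, g x := by
  set I := initSeg φ #S
  have hcard : #I = #S := card_initSeg_of_le (card_le_univ S)
  have hlt : ∀ y ∈ I \ S, ∀ x ∈ S \ I, g y < g x := by
    intro y hy x hx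
    simp only [I, mem_sdiff, mem_initSeg, not_lt] at hy hx
    exact hg y x (Fin.lt_def.2 (by omega))
  have hne : (I \ S).Nonempty := by
    rw [sdiff_nonempty]
    exact fun h => hS (eq_of_subset_of_card_le h hcard.ge).symm
  obtain ⟨e⟩ : Nonempty ((I \ S : Finset V) ≃ (S \ I : Finset V)) :=
    ⟨equivOfCardEq (card_sdiff_comm hcard)⟩
  have hdiff : ∑ y ∈ I \ S, g y < ∑ x ∈ S \ I, g x := by
    rw [← sum_coe_sort (I \ S), ← sum_coe_sort (S \ I), ← e.sum_comp]
    have := hne.coe_sort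
    exact sum_lt_sum_of_nonempty univ_nonempty fun y _ => hlt y y.2 (e y) (e y).2
  rw [← sum_inter_add_sum_sdiff I S, ← sum_inter_add_sum_sdiff S I, inter_comm]
  omega

theorem sum_initSeg_le_sum [DecidableEq V] (S : Finset V) (g : V → ℕ)
    (hg : ∀ x y, φ x < φ y → g x < g y) :
    ∑ x ∈ initSeg φ #S, g x ≤ ∑ x ∈ S, g x := by
  rcases eq_or_ne S (initSeg φ #S) with h | h
  · rw [← h]
  · exact (sum_initSeg_lt_sum g hg h).le

end Numbering

section Graph

variable {V : Type*} [Fintype V] (G : SimpleGraph V)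

open Classical in
noncomputable def closedNbhd (S : Finset V) : Finset V := {v | ∃ u ∈ S, u = v ∨ G.Adj u v}

open Classical in
noncomputable def vertexBoundary (S : Finset V) : Finset V := closedNbhd G S \ S

variable {G}

@[simp]
theorem mem_closedNbhd {S : Finset V} {v : V} :
    v ∈ closedNbhd G S ↔ ∃ u ∈ S, u = v ∨ G.Adj u v := by
  simp [closedNbhd]

theorem mem_vertexBoundary {S : Finset V} {v : V} :
    v ∈ vertexBoundary G S ↔ v ∈ closedNbhd G S ∧ v ∉ S := by
  simp [vertexBoundary]

theorem subset_closedNbhd (S : Finset V) : S ⊆ closedNbhd G S := fun v hv =>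
  mem_closedNbhd.2 ⟨v, hv, Or.inl rfl⟩

theorem card_vertexBoundary_add_card (S : Finset V) :
    #(vertexBoundary G S) + #S = #(closedNbhd G S) := by
  classical
  rw [vertexBoundary, card_sdiff_of_subset (subset_closedNbhd S),
    Nat.sub_add_cancel (card_le_card (subset_closedNbhd S))]

variable (G)

def PathDecomp.ofNumbering (φ : V ≃ Fin (Fintype.card V)) (b : ℕ)
    (hφ : ∀ u v, G.Adj u v → ((φ u : ℤ) - (φ v : ℤ)).natAbs ≤ b) :
    PathDecomp G (Fintype.card V) where
  bag i := {v | (φ v : ℕ) ≤ i ∧ (i : ℕ) ≤ φ v + b}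
  cover v := ⟨φ v, by simp⟩
  edgeCover u v huv := by
    have := hφ u v huv
    rcases le_total (φ u : ℕ) (φ v) with h | h
    · exact ⟨φ v, by simp only [mem_filter, mem_univ, true_and]; omega⟩
    · exact ⟨φ u, by simp only [mem_filter, mem_univ, true_and]; omega⟩
  interval v i j k hij hjk hi hk := by
    simp only [mem_filter, mem_univ, true_and, Fin.le_def] at *
    omega

theorem PathDecomp.card_bag_ofNumbering_le (φ : V ≃ Fin (Fintype.card V)) (b : ℕ)
    (hφ : ∀ u v, G.Adj u v → ((φ u : ℤ) - (φ v : ℤ)).natAbs ≤ b)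
    (i : Fin (Fintype.card V)) :
    #((PathDecomp.ofNumbering G φ b hφ).bag i) ≤ b + 1 := by
  have hmaps : ∀ v ∈ (PathDecomp.ofNumbering G φ b hφ).bag i,
      (φ v : ℕ) ∈ Icc ((i : ℕ) - b) i := fun v hv => by
    simp only [PathDecomp.ofNumbering, mem_filter, mem_univ, true_and] at hv
    simp only [mem_Icc]
    omega
  have hinj : Set.InjOn (fun v => (φ v : ℕ)) ((PathDecomp.ofNumbering G φ b hφ).bag i) :=
    fun u _ v _ h => φ.injective (Fin.ext h)
  have := card_le_card_of_injOn _ hmaps hinj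
  rw [Nat.card_Icc] at this
  omega

theorem pathwidth_le_bandwidth : pathwidth G ≤ bandwidth G := by
  obtain ⟨φ, hφ⟩ := Nat.sInf_mem (s := {b | ∃ φ : V ≃ Fin (Fintype.card V),
      ∀ u v, G.Adj u v → ((φ u : ℤ) - (φ v : ℤ)).natAbs ≤ b})
    ⟨Fintype.card V, Fintype.equivFin V, fun u v _ => by
      have := (Fintype.equivFin V u).is_lt
      have := (Fintype.equivFin V v).is_lt
      omega⟩
  have hsup := Finset.sup_le (s := univ) fun i _ => PathDecomp.card_bag_ofNumbering_le G φ _ hφ i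
  calc pathwidth G ≤ (univ.sup fun i => #((PathDecomp.ofNumbering G φ _ hφ).bag i)) - 1 :=
        Nat.sInf_le ⟨_, _, rfl⟩
    _ ≤ bandwidth G := Nat.sub_le_of_le_add hsup

variable {G}

/-- Order the vertices by the first bag containing them and let `S` be the last `r`: the
boundary of `S` and the first vertex of `S` all lie in the bag where that vertex first
appears. -/
theorem PathDecomp.exists_card_vertexBoundary_lt {m : ℕ} (D : PathDecomp G m) {r : ℕ}
    (hr : 0 < r) (hrV : r ≤ Fintype.card V) :
    ∃ (S : Finset V) (i : Fin m), #S = r ∧ #(vertexBoundary G S) < #(D.bag i) := by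
  classical
  choose first hfirst hmin using fun v => wellFounded_lt.has_min {j | v ∈ D.bag j} (D.cover v)
  obtain ⟨ψ, hψ⟩ := exists_equiv_fin_lt_iff (fun v => toLex (first v, Fintype.equivFin V v))
    fun u v h => (Fintype.equivFin V).injective (congrArg Prod.snd (toLex.injective h))
  have hψ_first : ∀ u v, ψ u < ψ v → first u ≤ first v := fun u v h => by
    by_contra! h'
    exact (lt_asymm h) ((hψ v u).1 (Prod.Lex.toLex_lt_toLex.2 (Or.inl h')))
  set k := Fintype.card V - r
  set S : Finset V := {v | ¬ (ψ v : ℕ) < k}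
  set v₀ := ψ.symm ⟨k, by omega⟩
  have hv₀S : v₀ ∈ S := by simp [S, v₀]
  have hboundary : vertexBoundary G S ⊆ (D.bag (first v₀)).erase v₀ := by
    intro v hv
    obtain ⟨hvN, hvS⟩ := mem_vertexBoundary.1 hv
    obtain ⟨u, huS, rfl | huv⟩ := mem_closedNbhd.1 hvN
    · exact absurd huS hvS
    simp only [S, mem_filter, mem_univ, true_and, not_lt, not_le] at huS hvS
    have hvu : first v ≤ first v₀ := hψ_first v v₀ (Fin.lt_def.2 (by simpa [v₀] using hvS))
    have hu : first v₀ ≤ first u := by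
      rcases eq_or_ne u v₀ with rfl | hne
      · rfl
      · exact hψ_first v₀ u (Fin.lt_def.2 (by
          have : (ψ u : ℕ) ≠ k := fun h => hne (by simp [v₀, ← h])
          simp only [v₀, Equiv.apply_symm_apply]; omega))
    obtain ⟨l, hul, hvl⟩ := D.edgeCover u v huv
    have hul' : first u ≤ l := not_lt.1 (hmin u l hul)
    refine mem_erase.2 ⟨fun h => ?_, D.interval v _ _ l hvu (hu.trans hul') (hfirst v) hvl⟩
    rw [h] at hvS
    simp [v₀] at hvS
  refine ⟨S, first v₀, ?_, ?_⟩
  · have hsplit : #(initSeg ψ k) + #S = Fintype.card V :=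
      card_filter_add_card_filter_not (s := univ) _
    rw [card_initSeg] at hsplit
    omega
  · calc #(vertexBoundary G S) ≤ #((D.bag (first v₀)).erase v₀) := card_le_card hboundary
      _ < #(D.bag (first v₀)) := card_erase_lt_of_mem (hfirst v₀)

/-- Every vertex numbered in `(φ u, φ v]` lies in the boundary of the initial segment
ending at `u`. -/
theorem stretch_le_card_vertexBoundary (φ : V ≃ Fin (Fintype.card V))
    (hφ : ∀ k, IsInitial φ (closedNbhd G (initSeg φ k))) {u v : V} (huv : G.Adj u v)
    (hlt : (φ u : ℕ) < φ v) :
    (φ v : ℕ) - φ u ≤ #(vertexBoundary G (initSeg φ (φ u + 1))) := by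
  classical
  have hv : (φ v : ℕ) < #(closedNbhd G (initSeg φ (φ u + 1))) := by
    rw [← mem_initSeg (φ := φ), ← (hφ _).eq_initSeg_card]
    exact mem_closedNbhd.2 ⟨u, by simp, Or.inr huv⟩
  have := card_vertexBoundary_add_card (G := G) (initSeg φ (φ u + 1))
  rw [card_initSeg_of_le (by omega)] at this
  omega

theorem bandwidth_le_of_closedNbhd_initSeg (φ : V ≃ Fin (Fintype.card V))
    (hφ : ∀ k, IsInitial φ (closedNbhd G (initSeg φ k))) {b : ℕ}
    (hb : ∀ k, 0 < k → k < Fintype.card V → #(vertexBoundary G (initSeg φ k)) ≤ b) :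
    bandwidth G ≤ b := by
  refine Nat.sInf_le ⟨φ, fun u v huv => ?_⟩
  have key : ∀ u v, G.Adj u v → (φ u : ℕ) < φ v → (φ v : ℕ) - φ u ≤ b :=
    fun u v huv hlt => (stretch_le_card_vertexBoundary φ hφ huv hlt).trans
      (hb _ (by omega) (by have := (φ v).is_lt; omega))
  rcases lt_trichotomy (φ u : ℕ) (φ v) with h | h | h
  · have := key u v huv h; omega
  · exact absurd (φ.injective (Fin.ext h)) huv.ne
  · have := key v u huv.symm h; omega

theorem bandwidth_le_pathwidth_of_isoperimetric (φ : V ≃ Fin (Fintype.card V))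
    (hφ : ∀ k, IsInitial φ (closedNbhd G (initSeg φ k)))
    (hiso : ∀ S : Finset V, #(vertexBoundary G (initSeg φ #S)) ≤ #(vertexBoundary G S)) :
    bandwidth G ≤ pathwidth G := by
  obtain ⟨m, D, hD⟩ := Nat.sInf_mem (s := {w | ∃ (m : ℕ) (D : PathDecomp G m),
      (univ.sup fun i => #(D.bag i)) - 1 = w})
    ⟨_, 1, ⟨fun _ => univ, fun v => ⟨0, mem_univ v⟩,
      fun u v _ => ⟨0, mem_univ u, mem_univ v⟩, fun v _ _ _ _ _ _ _ => mem_univ v⟩, rfl⟩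
  refine bandwidth_le_of_closedNbhd_initSeg φ hφ fun k hk hkV => ?_
  obtain ⟨S, i, rfl, hS⟩ := D.exists_card_vertexBoundary_lt hk hkV.le
  have : #(D.bag i) ≤ univ.sup fun i => #(D.bag i) :=
    le_sup (f := fun i => #(D.bag i)) (mem_univ i)
  have := hiso S
  change _ = pathwidth G at hD
  omega

end Graph

section Hamming

open Function

variable {ι β : Type*} [Fintype ι] [DecidableEq ι] [DecidableEq β]

theorem hammingDist_update_le_one (x : ι → β) (i : ι) (a : β) :
    hammingDist x (update x i a) ≤ 1 := by
  refine (card_le_card fun j hj => ?_).trans (card_singleton i).le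
  rcases eq_or_ne j i with rfl | h
  · exact mem_singleton_self j
  · simp [h] at hj

theorem hammingDist_update_lt {x z : ι → β} {i : ι} (h : x i ≠ z i) :
    hammingDist x (update z i (x i)) < hammingDist x z := by
  refine card_lt_card ⟨fun j hj => ?_, fun hsub => by
    have := hsub (mem_filter.2 ⟨mem_univ i, h⟩)
    simp at this⟩
  rcases eq_or_ne j i with rfl | hj'
  · simp at hj
  · simpa [hj'] using hj

theorem exists_eq_update_of_hammingDist_eq_one {x y : ι → β} (h : hammingDist x y = 1) :
    ∃ i, x i ≠ y i ∧ y = update x i (y i) := by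
  obtain ⟨i, hi⟩ := card_eq_one.1 h
  have hmem : ∀ j, x j ≠ y j ↔ j = i := fun j => by
    simpa using congrArg (j ∈ ·) hi
  refine ⟨i, (hmem i).2 rfl, funext fun j => ?_⟩
  rcases eq_or_ne j i with rfl | hj
  · simp
  · rw [update_of_ne hj]
    by_contra hne
    exact hj ((hmem j).1 (Ne.symm hne))

theorem hammingDist_le_card_sub_one_of_apply_eq {x y : ι → β} {i : ι} (h : x i = y i) :
    hammingDist x y ≤ Fintype.card ι - 1 := by
  have : hammingDist x y ≤ #(univ.erase i) := card_le_card fun j hj => by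
    rw [mem_erase]
    exact ⟨fun hji => (mem_filter.1 hj).2 (hji ▸ h), mem_univ j⟩
  simpa using this

theorem hammingDist_insertNth {m : ℕ} (p : Fin (m + 1)) (a b : β) (x y : Fin m → β) :
    hammingDist (p.insertNth a x : Fin (m + 1) → β) (p.insertNth b y) =
      (if a = b then 0 else 1) + hammingDist x y := by
  simp only [hammingDist, card_filter]
  rw [Fin.sum_univ_succAbove _ p]
  simp [ite_not]

variable [Fintype β]

def hammingBall (t : ℕ) (S : Finset (ι → β)) : Finset (ι → β) :=
  {z | ∃ x ∈ S, hammingDist x z ≤ t}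

@[simp]
theorem mem_hammingBall {t : ℕ} {S : Finset (ι → β)} {z : ι → β} :
    z ∈ hammingBall t S ↔ ∃ x ∈ S, hammingDist x z ≤ t := by
  simp [hammingBall]

theorem hammingBall_mono (t : ℕ) {S T : Finset (ι → β)} (h : S ⊆ T) :
    hammingBall t S ⊆ hammingBall t T := fun z hz => by
  obtain ⟨x, hx, hxz⟩ := mem_hammingBall.1 hz
  exact mem_hammingBall.2 ⟨x, h hx, hxz⟩

theorem hammingBall_zero (S : Finset (ι → β)) : hammingBall 0 S = S := by
  ext z
  simp

theorem hammingBall_succ (t : ℕ) (S : Finset (ι → β)) :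
    hammingBall (t + 1) S = hammingBall 1 (hammingBall t S) := by
  ext z
  simp only [mem_hammingBall]
  constructor
  · rintro ⟨x, hx, hxz⟩
    by_cases h : hammingDist x z ≤ t
    · exact ⟨z, ⟨x, hx, h⟩, by simp⟩
    obtain ⟨i, hi⟩ : ∃ i, x i ≠ z i := by
      by_contra! h'
      exact h (by simp [funext h'])
    have := hammingDist_update_lt hi
    exact ⟨update z i (x i), ⟨x, hx, by omega⟩,
      by rw [hammingDist_comm]; exact hammingDist_update_le_one z i (x i)⟩
  · rintro ⟨w, ⟨x, hx, hxw⟩, hwz⟩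
    exact ⟨x, hx, (hammingDist_triangle x w z).trans (by omega)⟩

end Hamming

theorem closedNbhd_genHamming (t q n : ℕ) (S : Finset (Fin n → Fin q)) :
    closedNbhd (genHamming t q n) S = hammingBall t S := by
  ext v
  simp only [mem_closedNbhd, mem_hammingBall, genHamming]
  refine exists_congr fun u => and_congr_right fun _ => ⟨?_, fun h => ?_⟩
  · rintro (rfl | ⟨-, h⟩)
    · simp
    · exact h
  · rcases eq_or_ne u v with huv | huv
    · exact Or.inl huv
    · exact Or.inr ⟨huv, h⟩

namespace Hypercube

open Function

abbrev Cube (n : ℕ) := Fin n → Fin 2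

variable {n : ℕ}

theorem fin_two_ne_iff_eq_rev {a b : Fin 2} : a ≠ b ↔ b = a.rev := by
  revert a b; decide

theorem fin_two_ne_one_iff {a : Fin 2} : a ≠ 1 ↔ a = 0 := by
  revert a; decide

def weight (x : Cube n) : ℕ := ∑ i, (x i : ℕ)

def antipode (x : Cube n) : Cube n := fun i => (x i).rev

theorem weight_update (x : Cube n) (i : Fin n) (a : Fin 2) :
    weight (update x i a) + x i = weight x + a := by
  have : ∀ j, (update x i a j : ℕ) = update (fun k => (x k : ℕ)) i a j := fun j => by
    rcases eq_or_ne j i with rfl | h <;> simp [*]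
  simp only [weight, this]
  rw [sum_update_of_mem (mem_univ i), ← add_sum_erase _ _ (mem_univ i), sdiff_singleton_eq_erase]
  ring

theorem weight_update_zero_add_one {x : Cube n} {i : Fin n} (h : x i = 1) :
    weight (update x i 0) + 1 = weight x := by
  simpa [h] using weight_update x i 0

theorem weight_update_one {x : Cube n} {i : Fin n} (h : x i = 0) :
    weight (update x i 1) = weight x + 1 := by
  simpa [h] using weight_update x i 1

theorem weight_insertNth (p : Fin (n + 1)) (a : Fin 2) (x : Cube n) :
    weight (p.insertNth a x) = a + weight x := by
  simp [weight, Fin.sum_univ_succAbove _ p]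

theorem weight_eq_zero_iff {x : Cube n} : weight x = 0 ↔ x = 0 := by
  simp only [weight, sum_eq_zero_iff, mem_univ, true_implies, funext_iff, Pi.zero_apply,
    Fin.val_eq_zero_iff]

theorem weight_add_weight_antipode (x : Cube n) : weight x + weight (antipode x) = n := by
  have : ∀ a : Fin 2, (a : ℕ) + (a.rev : ℕ) = 1 := by decide
  simp only [weight, antipode, ← sum_add_distrib, this, sum_const, card_univ, Fintype.card_fin,
    smul_eq_mul, mul_one]

theorem exists_eq_one_of_weight_pos {x : Cube n} (hx : 0 < weight x) : ∃ i, x i = 1 := by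
  by_contra! h
  have : x = 0 := funext fun i => fin_two_ne_one_iff.1 (h i)
  simp [this, weight] at hx

theorem antipode_injective : Injective (antipode (n := n)) := fun _ _ h =>
  funext fun i => Fin.rev_injective (congrFun h i)

theorem antipode_apply_ne (x : Cube n) (i : Fin n) : antipode x i ≠ x i :=
  (by decide : ∀ a : Fin 2, a.rev ≠ a) (x i)

def LexLT (x y : Cube n) : Prop := ∃ i, (∀ j < i, x j = y j) ∧ x i = 1 ∧ y i = 0

def simplicialKey (x : Cube n) : ℕ ×ₗ Lex (Fin n → (Fin 2)ᵒᵈ) :=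
  toLex (weight x, toLex fun i => OrderDual.toDual (x i))

theorem simplicialKey_injective : Injective (simplicialKey (n := n)) := fun _ _ h =>
  funext fun i => congrFun (congrArg Prod.snd (toLex.injective h)) i

/-- The numbering of the cube in the simplicial order: by weight, then by `LexLT`. -/
noncomputable def simplicial (n : ℕ) : Cube n ≃ Fin (Fintype.card (Cube n)) :=
  (exists_equiv_fin_lt_iff _ simplicialKey_injective).choose

theorem simplicial_lt_iff {x y : Cube n} :
    simplicial n x < simplicial n y ↔
      weight x < weight y ∨ weight x = weight y ∧ LexLT x y := by
  refine ((exists_equiv_fin_lt_iff _ simplicialKey_injective).choose_spec x y).symm.trans ?_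
  rw [simplicialKey, simplicialKey, Prod.Lex.toLex_lt_toLex]
  have : ∀ a b : Fin 2, b < a ↔ a = 1 ∧ b = 0 := by decide
  simp only [LexLT, ← this]
  rfl

theorem simplicial_lt_of_weight_lt {x y : Cube n} (h : weight x < weight y) :
    simplicial n x < simplicial n y :=
  simplicial_lt_iff.2 (Or.inl h)

theorem weight_le_of_simplicial_lt {x y : Cube n} (h : simplicial n x < simplicial n y) :
    weight x ≤ weight y := by
  rcases simplicial_lt_iff.1 h with h | ⟨h, -⟩ <;> omega

theorem simplicial_update_zero_lt {x : Cube n} {i : Fin n} (h : x i = 1) :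
    simplicial n (update x i 0) < simplicial n x :=
  simplicial_lt_of_weight_lt (by have := weight_update_zero_add_one h; omega)

theorem lexLT_insertNth_iff {p : Fin (n + 1)} {a : Fin 2} {x y : Cube n} :
    LexLT (p.insertNth a x) (p.insertNth a y) ↔ LexLT x y := by
  constructor
  · rintro ⟨i, hbefore, hx, hy⟩
    obtain ⟨i, rfl⟩ : ∃ i', p.succAbove i' = i := Fin.exists_succAbove_eq fun h => by
      subst h
      simp only [Fin.insertNth_apply_same] at hx hy
      exact absurd (hx.symm.trans hy) (by decide)
    refine ⟨i, fun j hj => ?_, by simpa using hx, by simpa using hy⟩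
    simpa using hbefore (p.succAbove j) (Fin.strictMono_succAbove p hj)
  · rintro ⟨i, hbefore, hx, hy⟩
    refine ⟨p.succAbove i, fun j hj => ?_, by simpa using hx, by simpa using hy⟩
    rcases eq_or_ne j p with rfl | hjp
    · simp
    · obtain ⟨j, rfl⟩ := Fin.exists_succAbove_eq hjp
      simpa using hbefore j ((Fin.strictMono_succAbove p).lt_iff_lt.1 hj)

theorem simplicial_insertNth_lt_iff {p : Fin (n + 1)} {a : Fin 2} {x y : Cube n} :
    simplicial (n + 1) (p.insertNth a x) < simplicial (n + 1) (p.insertNth a y) ↔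
      simplicial n x < simplicial n y := by
  simp only [simplicial_lt_iff, weight_insertNth, lexLT_insertNth_iff, add_lt_add_iff_left,
    add_right_inj]

theorem exists_update_zero_lexLE {x z : Cube n} {j : Fin n} (hxj : x j = 0)
    (hz : weight z = weight x + 1) (hzy : z = update x j 1 ∨ LexLT z (update x j 1)) :
    ∃ i, z i = 1 ∧ (update z i 0 = x ∨ LexLT (update z i 0) x) := by
  rcases hzy with rfl | ⟨i₀, hbefore, hz₁, hy₀⟩
  · exact ⟨j, by simp, Or.inl (by rw [update_idem, update_eq_self_iff, hxj])⟩
  have hi₀j : i₀ ≠ j := by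
    rintro rfl
    simp at hy₀
  rw [update_of_ne hi₀j] at hy₀
  have hagree : ∀ l < i₀, l ≠ j → z l = x l := fun l hl hlj => by
    simpa [update_of_ne hlj] using hbefore l hl
  rcases lt_or_gt_of_ne hi₀j with hlt | hgt
  · by_cases hlater : ∃ k, i₀ < k ∧ z k = 1
    · obtain ⟨k, hk, hzk⟩ := hlater
      refine ⟨k, hzk, Or.inr ⟨i₀, fun l hl => ?_, ?_, hy₀⟩⟩
      swap
      · simpa [update_of_ne hk.ne] using hz₁
      rw [update_of_ne (hl.trans hk).ne]
      exact hagree l hl (hl.trans hlt).ne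
    simp only [not_exists, not_and] at hlater
    -- `update z i₀ 0 ≤ x` coordinatewise and both have the weight of `x`
    have hle : ∀ l, (update z i₀ 0 l : ℕ) ≤ x l := fun l => by
      rcases lt_trichotomy l i₀ with hl | rfl | hl
      · rw [update_of_ne hl.ne, hagree l hl (hl.trans hlt).ne]
      · simp
      · rw [update_of_ne hl.ne', fin_two_ne_one_iff.1 (hlater l hl)]
        exact Nat.zero_le _
    have hweight : weight (update z i₀ 0) = weight x := by
      have := weight_update z i₀ 0
      rw [hz₁] at this
      simp only [Fin.val_one, Fin.val_zero] at this
      omega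
    refine ⟨i₀, hz₁, Or.inl (funext fun l => Fin.ext ?_)⟩
    exact (sum_eq_sum_iff_of_le fun l _ => hle l).1 hweight l (mem_univ l)
  · have hzj : z j = 1 := by simpa using hbefore j hgt
    refine ⟨j, hzj, Or.inr ⟨i₀, fun l hl => ?_, ?_, hy₀⟩⟩
    swap
    · simpa [update_of_ne hi₀j] using hz₁
    rcases eq_or_ne l j with rfl | hlj
    · simp [hxj]
    · rw [update_of_ne hlj]
      exact hagree l hl hlj

theorem exists_simplicial_le_hammingDist_le_one {x y z : Cube n} (hxy : hammingDist x y ≤ 1)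
    (hzy : simplicial n z ≤ simplicial n y) :
    ∃ w, simplicial n w ≤ simplicial n x ∧ hammingDist w z ≤ 1 := by
  by_cases hzx : simplicial n z ≤ simplicial n x
  · exact ⟨z, hzx, by simp⟩
  rw [not_le] at hzx
  have hxy' : x ≠ y := by rintro rfl; exact absurd hzy (not_le.2 hzx)
  obtain ⟨j, hj, hy⟩ := exists_eq_update_of_hammingDist_eq_one
    (le_antisymm hxy (hammingDist_pos.2 hxy'))
  rw [fin_two_ne_iff_eq_rev.1 hj] at hy
  obtain hxj | hxj := eq_or_ne (x j) 0
  swap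
  · have hxj₁ := Fin.eq_one_of_ne_zero _ hxj
    rw [hxj₁, show (1 : Fin 2).rev = 0 from rfl] at hy
    rw [hy] at hzy
    exact absurd (hzx.trans_le hzy) (not_lt.2 (simplicial_update_zero_lt hxj₁).le)
  rw [hxj, show (0 : Fin 2).rev = 1 from rfl] at hy
  subst hy
  have hwy := weight_update_one hxj
  have hxz := weight_le_of_simplicial_lt hzx
  have hzy' : weight z ≤ weight (update x j 1) := by
    rcases hzy.lt_or_eq with h | h
    · exact weight_le_of_simplicial_lt h
    · rw [(simplicial _).injective h]
  rcases (show weight z = weight x ∨ weight z = weight x + 1 by omega) with hw | hw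
  · obtain ⟨i, hi⟩ := exists_eq_one_of_weight_pos (x := z) (Nat.pos_of_ne_zero fun h0 => by
      have hz0 := weight_eq_zero_iff.1 h0
      have hx0 := weight_eq_zero_iff.1 (hw ▸ h0)
      exact hzx.ne (by rw [hz0, hx0]))
    refine ⟨update z i 0, (simplicial_lt_of_weight_lt ?_).le, ?_⟩
    · have := weight_update_zero_add_one hi; omega
    · rw [hammingDist_comm]; exact hammingDist_update_le_one z i 0
  · have hlex : z = update x j 1 ∨ LexLT z (update x j 1) := by
      rcases hzy.lt_or_eq with h | h
      · rcases simplicial_lt_iff.1 h with h | ⟨-, h⟩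
        · omega
        · exact Or.inr h
      · exact Or.inl ((simplicial _).injective h)
    obtain ⟨i, hi, hle⟩ := exists_update_zero_lexLE hxj hw hlex
    refine ⟨update z i 0, ?_, by rw [hammingDist_comm]; exact hammingDist_update_le_one z i 0⟩
    rcases hle with h | h
    · rw [h]
    · have := weight_update_zero_add_one hi
      exact (simplicial_lt_iff.2 (Or.inr ⟨by omega, h⟩)).le

theorem IsInitial.hammingBall_one {S : Finset (Cube n)} (hS : IsInitial (simplicial n) S) :
    IsInitial (simplicial n) (hammingBall 1 S) := fun z y hzy hy => by
  obtain ⟨x, hx, hxy⟩ := mem_hammingBall.1 hy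
  obtain ⟨w, hwx, hwz⟩ := exists_simplicial_le_hammingDist_le_one hxy hzy.le
  exact mem_hammingBall.2 ⟨w, hwx.lt_or_eq.elim (fun h => hS w x h hx)
    (fun h => (simplicial n).injective h ▸ hx), hwz⟩

theorem isInitial_hammingBall_initSeg (t k : ℕ) :
    IsInitial (simplicial n) (hammingBall t (initSeg (simplicial n) k)) := by
  induction t with
  | zero => rw [hammingBall_zero]; exact isInitial_initSeg k
  | succ t ih => rw [hammingBall_succ]; exact IsInitial.hammingBall_one ih

section Compression

variable {m : ℕ}

def slice (p : Fin (m + 1)) (a : Fin 2) (S : Finset (Cube (m + 1))) : Finset (Cube m) :=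
  {x | p.insertNth a x ∈ S}

variable {p : Fin (m + 1)} {a : Fin 2} {S : Finset (Cube (m + 1))}

@[simp]
theorem mem_slice {x : Cube m} : x ∈ slice p a S ↔ p.insertNth a x ∈ S := by
  simp [slice]

theorem card_slice_le : #(slice p a S) ≤ Fintype.card (Cube m) := card_le_univ _

variable (p) in
theorem sum_eq_sum_slice (S : Finset (Cube (m + 1))) (g : Cube (m + 1) → ℕ) :
    ∑ x ∈ S, g x = ∑ a, ∑ x ∈ slice p a S, g (p.insertNth a x) := by
  simp only [slice, sum_filter]
  calc ∑ x ∈ S, g x = ∑ x, if x ∈ S then g x else 0 := by rw [sum_ite_mem, univ_inter]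
    _ = _ := (Fintype.sum_equiv (Fin.insertNthEquiv (fun _ => Fin 2) p) _ _ fun _ => rfl).symm
    _ = _ := Fintype.sum_prod_type _

variable (p) in
theorem card_eq_sum_card_slice (S : Finset (Cube (m + 1))) : #S = ∑ a, #(slice p a S) := by
  simpa using sum_eq_sum_slice p S fun _ => 1

theorem eq_of_slice_eq {T : Finset (Cube (m + 1))} (h : ∀ a, slice p a S = slice p a T) :
    S = T := by
  ext x
  rw [← Fin.insertNth_self_removeNth p x, ← mem_slice, ← mem_slice, h]

theorem slice_hammingBall_one :
    slice p a (hammingBall 1 S) = hammingBall 1 (slice p a S) ∪ slice p a.rev S := by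
  ext z
  simp only [mem_slice, mem_union, mem_hammingBall]
  constructor
  · rintro ⟨c, hc, hcz⟩
    rw [← Fin.insertNth_self_removeNth p c, hammingDist_insertNth] at hcz
    rw [← Fin.insertNth_self_removeNth p c] at hc
    by_cases hca : c p = a
    · exact Or.inl ⟨p.removeNth c, by rwa [← hca], by simpa [hca] using hcz⟩
    · have hz : p.removeNth c = z := hammingDist_eq_zero.1 (by rw [if_neg hca] at hcz; omega)
      rw [fin_two_ne_iff_eq_rev.1 (Ne.symm hca), hz] at hc
      exact Or.inr hc
  · rintro (⟨c, hc, hcz⟩ | hz)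
    · exact ⟨_, hc, by simpa [hammingDist_insertNth] using hcz⟩
    · refine ⟨_, hz, ?_⟩
      simp only [hammingDist_insertNth, hammingDist_self, add_zero]
      split_ifs <;> omega

theorem simplicial_removeNth_lt {x y : Cube (m + 1)} (hxy : simplicial _ x < simplicial _ y)
    (hp : x p = y p) : simplicial m (p.removeNth x) < simplicial m (p.removeNth y) := by
  rw [← Fin.insertNth_self_removeNth p x, ← Fin.insertNth_self_removeNth p y, hp] at hxy
  exact simplicial_insertNth_lt_iff.1 hxy

variable (p) in
/-- Replaces every `p`-slice of `S` by the initial segment of the same size. -/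
noncomputable def compress (S : Finset (Cube (m + 1))) : Finset (Cube (m + 1)) :=
  {x | (simplicial m (p.removeNth x) : ℕ) < #(slice p (x p) S)}

theorem mem_compress {x : Cube (m + 1)} :
    x ∈ compress p S ↔ (simplicial m (p.removeNth x) : ℕ) < #(slice p (x p) S) := by
  simp [compress]

theorem slice_compress : slice p a (compress p S) = initSeg (simplicial m) #(slice p a S) := by
  ext x
  simp [mem_compress]

theorem card_compress : #(compress p S) = #S := by
  simp only [card_eq_sum_card_slice p, slice_compress, card_initSeg_of_le card_slice_le]

theorem card_slice_hammingBall_one_compress :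
    #(slice p a (hammingBall 1 (compress p S))) =
      max #(hammingBall 1 (initSeg (simplicial m) #(slice p a S))) #(slice p a.rev S) := by
  rw [slice_hammingBall_one, slice_compress, slice_compress,
    (isInitial_hammingBall_initSeg 1 _).eq_initSeg_card, initSeg_union,
    card_initSeg_of_le (max_le (card_le_univ _) card_slice_le),
    ← (isInitial_hammingBall_initSeg 1 _).eq_initSeg_card]

theorem card_hammingBall_one_compress_le
    (ih : ∀ A : Finset (Cube m),
      #(hammingBall 1 (initSeg (simplicial m) #A)) ≤ #(hammingBall 1 A))
    (p : Fin (m + 1)) (S : Finset (Cube (m + 1))) :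
    #(hammingBall 1 (compress p S)) ≤ #(hammingBall 1 S) := by
  rw [card_eq_sum_card_slice p (hammingBall 1 (compress p S)),
    card_eq_sum_card_slice p (hammingBall 1 S)]
  refine sum_le_sum fun a _ => ?_
  rw [card_slice_hammingBall_one_compress, slice_hammingBall_one]
  exact max_le ((ih _).trans (card_le_card subset_union_left)) (card_le_card subset_union_right)

theorem sum_simplicial_compress_lt (h : compress p S ≠ S) :
    ∑ x ∈ compress p S, (simplicial _ x : ℕ) < ∑ x ∈ S, (simplicial _ x : ℕ) := by
  rw [sum_eq_sum_slice p (compress p S), sum_eq_sum_slice p S]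
  simp only [slice_compress]
  have hmono : ∀ a, ∀ x y : Cube m, simplicial m x < simplicial m y →
      (simplicial _ (p.insertNth a x) : ℕ) < simplicial _ (p.insertNth a y) :=
    fun _ _ _ hxy => simplicial_insertNth_lt_iff.2 hxy
  obtain ⟨a, ha⟩ : ∃ a, slice p a S ≠ initSeg (simplicial m) #(slice p a S) := by
    by_contra! hall
    exact h (eq_of_slice_eq fun a => by rw [slice_compress, ← hall])
  exact sum_lt_sum (fun a _ => sum_initSeg_le_sum _ _ (hmono a))
    ⟨a, mem_univ a, sum_initSeg_lt_sum _ (hmono a) ha⟩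

theorem mem_of_simplicial_lt_of_apply_eq (hS : compress p S = S) {x y : Cube (m + 1)}
    (hxy : simplicial _ x < simplicial _ y) (hp : x p = y p) (hy : y ∈ S) : x ∈ S := by
  rw [← hS, mem_compress] at hy ⊢
  rw [hp]
  exact lt_trans (simplicial_removeNth_lt hxy hp) hy

end Compression

section Endgame

theorem hammingDist_antipode (x : Cube n) : hammingDist (antipode x) x = n := by
  simp [hammingDist, antipode_apply_ne]

variable {z : Cube n} (hz : simplicial n z < simplicial n (antipode z))
include hz

theorem antipode_ne_self_of_lt : antipode z ≠ z := fun h => hz.ne' (by rw [h])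

theorem exists_near_self_of_lt_antipode :
    ∃ s, s ≠ z ∧ simplicial n s ≤ simplicial n (antipode z) ∧ hammingDist s z ≤ 1 := by
  have hw := weight_add_weight_antipode z
  obtain ⟨i, hi⟩ | hz0 := (Nat.eq_zero_or_pos (weight z)).symm.imp
    exists_eq_one_of_weight_pos id
  · refine ⟨update z i 0, ne_of_apply_ne (· i) (by simp [hi]),
      ((simplicial_update_zero_lt hi).trans hz).le, ?_⟩
    rw [hammingDist_comm]
    exact hammingDist_update_le_one z i 0
  by_cases h2 : 2 ≤ weight (antipode z)
  · obtain ⟨i, -⟩ := exists_eq_one_of_weight_pos (x := antipode z) (by omega)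
    have hzi : z i = 0 := by simp [weight_eq_zero_iff.1 hz0]
    refine ⟨update z i 1, ne_of_apply_ne (· i) (by simp [hzi]),
      (simplicial_lt_of_weight_lt ?_).le, ?_⟩
    · rw [weight_update_one hzi]; omega
    · rw [hammingDist_comm]; exact hammingDist_update_le_one z i 1
  · exact ⟨antipode z, antipode_ne_self_of_lt hz, le_rfl, by rw [hammingDist_antipode]; omega⟩

/-- A neighbour `v = z + e_i` of `z` lying after `antipode z` is next to `v - e_j` for a
suitable `1`-coordinate `j` of `z`, unless `n ≤ 2`, where `antipode z` itself is next to `v`. -/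
theorem exists_near_update_one_of_lt_antipode {i : Fin n} (hzi : z i = 0)
    (hv : simplicial n (antipode z) < simplicial n (update z i 1)) :
    ∃ s, s ≠ z ∧ simplicial n s ≤ simplicial n (antipode z) ∧
      hammingDist s (update z i 1) ≤ 1 := by
  have hw := weight_add_weight_antipode z
  have hwv := weight_update_one hzi
  have hle := weight_le_of_simplicial_lt hz
  have hle' := weight_le_of_simplicial_lt hv
  by_cases hn : n ≤ 2
  · refine ⟨antipode z, antipode_ne_self_of_lt hz, le_rfl, ?_⟩
    have := hammingDist_le_card_sub_one_of_apply_eq (x := antipode z) (y := update z i 1) (i := i)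
      (by simp [antipode, hzi])
    simp only [Fintype.card_fin] at this
    omega
  obtain ⟨j, hzj, hs⟩ : ∃ j, z j = 1 ∧
      simplicial n (update (update z i 1) j 0) ≤ simplicial n (antipode z) := by
    rcases hle.lt_or_eq with hlt | heq
    · obtain ⟨j, hj⟩ := exists_eq_one_of_weight_pos (x := z) (by omega)
      have hji : j ≠ i := fun h => by simp [h, hzi] at hj
      refine ⟨j, hj, (simplicial_lt_of_weight_lt ?_).le⟩
      have := weight_update_zero_add_one (i := j) (x := update z i 1) (by simp [hji, hj])
      omega
    obtain ⟨-, i₀, hbefore, hz₁, hz₀⟩ := (simplicial_lt_iff.1 hz).resolve_left heq.not_lt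
    obtain ⟨j, hj⟩ := exists_eq_one_of_weight_pos (x := update z i₀ 0)
      (by have := weight_update_zero_add_one hz₁; omega)
    have hji₀ : j ≠ i₀ := fun h => by simp [h] at hj
    rw [update_of_ne hji₀] at hj
    have hji : j ≠ i := fun h => by simp [h, hzi] at hj
    have hi₀i : i₀ ≠ i := fun h => by simp [h, hzi] at hz₁
    refine ⟨j, hj, (simplicial_lt_iff.2 (Or.inr ⟨?_, i₀, fun k hk => ?_, ?_, hz₀⟩)).le⟩
    · have := weight_update_zero_add_one (i := j) (x := update z i 1) (by simp [hji, hj])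
      omega
    · exact absurd (hbefore k hk).symm (antipode_apply_ne z k)
    · simp [update_of_ne hji₀.symm, update_of_ne hi₀i, hz₁]
  have hji : j ≠ i := fun h => by simp [h, hzi] at hzj
  refine ⟨_, ne_of_apply_ne (· i) (by simp [hji.symm, hzi]), hs, ?_⟩
  rw [hammingDist_comm]
  exact hammingDist_update_le_one _ j 0

theorem exists_near_of_lt_antipode {v : Cube n} (hzv : hammingDist z v ≤ 1) :
    ∃ s, s ≠ z ∧ simplicial n s ≤ simplicial n (antipode z) ∧ hammingDist s v ≤ 1 := by
  rcases eq_or_ne z v with rfl | hne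
  · exact exists_near_self_of_lt_antipode hz
  obtain ⟨i, hi, hv⟩ := exists_eq_update_of_hammingDist_eq_one
    (le_antisymm hzv (hammingDist_pos.2 hne))
  rw [fin_two_ne_iff_eq_rev.1 hi] at hv
  subst hv
  obtain hzi | hzi := eq_or_ne (z i) 0
  · rw [hzi, show (0 : Fin 2).rev = 1 from rfl]
    by_cases hv : simplicial n (update z i 1) ≤ simplicial n (antipode z)
    · exact ⟨_, ne_of_apply_ne (· i) (by simp [hzi]), hv, by simp⟩
    · exact exists_near_update_one_of_lt_antipode hz hzi (not_le.1 hv)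
  · have hzi₁ := Fin.eq_one_of_ne_zero _ hzi
    rw [hzi₁, show (1 : Fin 2).rev = 0 from rfl]
    exact ⟨_, ne_of_apply_ne (· i) (by simp [hzi₁]),
      ((simplicial_update_zero_lt hzi₁).trans hz).le, by simp⟩

/-- Trading `z` for `antipode z` in the initial segment ending before `antipode z` does not
shrink the neighbourhood. -/
theorem card_hammingBall_one_initSeg_le_of_antipode {S : Finset (Cube n)}
    (hS : ∀ x, x ∈ S ↔ x ≠ z ∧ simplicial n x ≤ simplicial n (antipode z)) :
    #(hammingBall 1 (initSeg (simplicial n) #S)) ≤ #(hammingBall 1 S) := by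
  set I := initSeg (simplicial n) (simplicial n (antipode z))
  have hzI : z ∈ I := mem_initSeg.2 hz
  have hSI : S = insert (antipode z) (I.erase z) := by
    ext x
    rw [hS, mem_insert, mem_erase, mem_initSeg, le_iff_lt_or_eq, Fin.lt_def,
      (simplicial n).injective.eq_iff]
    constructor
    · rintro ⟨hxz, h | rfl⟩
      exacts [Or.inr ⟨hxz, h⟩, Or.inl rfl]
    · rintro (rfl | ⟨hxz, h⟩)
      exacts [⟨antipode_ne_self_of_lt hz, Or.inr rfl⟩, ⟨hxz, Or.inl h⟩]
  have hcard : #S = #I := by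
    rw [hSI, card_insert_of_notMem (by simp [I]), card_erase_of_mem hzI]
    have := card_pos.2 ⟨z, hzI⟩
    omega
  have hcardI : #I = simplicial n (antipode z) := card_initSeg_of_le (simplicial n _).is_lt.le
  rw [hcard, hcardI]
  refine card_le_card fun v hv => ?_
  obtain ⟨c, hc, hcv⟩ := mem_hammingBall.1 hv
  rcases eq_or_ne c z with rfl | hcz
  · obtain ⟨s, hsz, hs, hsv⟩ := exists_near_of_lt_antipode hz hcv
    exact mem_hammingBall.2 ⟨s, (hS s).2 ⟨hsz, hs⟩, hsv⟩
  · exact mem_hammingBall.2 ⟨c, (hS c).2 ⟨hcz, (Fin.lt_def.2 (mem_initSeg.1 hc)).le⟩, hcv⟩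

end Endgame

section Compressed

variable {m : ℕ} {S : Finset (Cube (m + 1))} (hS : ∀ p, compress p S = S)
include hS

theorem eq_antipode_of_simplicial_lt {x y : Cube (m + 1)} (hxy : simplicial _ x < simplicial _ y)
    (hy : y ∈ S) (hx : x ∉ S) : y = antipode x :=
  funext fun i => fin_two_ne_iff_eq_rev.1 fun h =>
    hx (mem_of_simplicial_lt_of_apply_eq (hS i) hxy h hy)

theorem exists_antipode_of_compressed (hS' : ¬ IsInitial (simplicial _) S) :
    ∃ z, simplicial _ z < simplicial _ (antipode z) ∧
      ∀ x, x ∈ S ↔ x ≠ z ∧ simplicial _ x ≤ simplicial _ (antipode z) := by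
  obtain ⟨z, y, hzy, hy, hz⟩ :
      ∃ z y, simplicial _ z < simplicial _ y ∧ y ∈ S ∧ z ∉ S := by
    simpa [IsInitial] using hS'
  obtain rfl := eq_antipode_of_simplicial_lt hS hzy hy hz
  refine ⟨z, hzy, fun x =>
    ⟨fun hx => ⟨ne_of_mem_of_not_mem hx hz, not_lt.1 fun h => ?_⟩, ?_⟩⟩
  · rw [eq_antipode_of_simplicial_lt hS (hzy.trans h) hx hz] at h
    exact lt_irrefl _ h
  · rintro ⟨hxz, hx⟩
    rcases hx.lt_or_eq with h | h
    · by_contra hxS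
      exact hxz (antipode_injective (eq_antipode_of_simplicial_lt hS h hy hxS)).symm
    · rwa [(simplicial _).injective h]

end Compressed

theorem card_hammingBall_one_initSeg_le_succ {m : ℕ}
    (ih : ∀ A : Finset (Cube m),
      #(hammingBall 1 (initSeg (simplicial m) #A)) ≤ #(hammingBall 1 A))
    (S : Finset (Cube (m + 1))) :
    #(hammingBall 1 (initSeg (simplicial (m + 1)) #S)) ≤ #(hammingBall 1 S) := by
  by_cases hc : ∃ p, compress p S ≠ S
  · obtain ⟨p, hp⟩ := hc
    have := sum_simplicial_compress_lt hp
    calc #(hammingBall 1 (initSeg (simplicial _) #S))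
        = #(hammingBall 1 (initSeg (simplicial _) #(compress p S))) := by rw [card_compress]
      _ ≤ #(hammingBall 1 (compress p S)) := card_hammingBall_one_initSeg_le_succ ih _
      _ ≤ #(hammingBall 1 S) := card_hammingBall_one_compress_le ih p S
  simp only [ne_eq, not_exists, not_not] at hc
  by_cases hS : IsInitial (simplicial _) S
  · rw [← hS.eq_initSeg_card]
  obtain ⟨z, hz, hmem⟩ := exists_antipode_of_compressed hc hS
  exact card_hammingBall_one_initSeg_le_of_antipode hz hmem
termination_by ∑ x ∈ S, (simplicial _ x : ℕ)

/-- Harper's vertex-isoperimetric inequality. -/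
theorem card_hammingBall_one_initSeg_le :
    ∀ {n : ℕ} (S : Finset (Cube n)),
      #(hammingBall 1 (initSeg (simplicial n) #S)) ≤ #(hammingBall 1 S)
  | 0, S => by
    have hS : IsInitial (simplicial 0) S := fun x y hxy _ =>
      absurd hxy (by rw [Subsingleton.elim x y]; exact lt_irrefl _)
    rw [← hS.eq_initSeg_card]
  | _ + 1, S => card_hammingBall_one_initSeg_le_succ (fun A => card_hammingBall_one_initSeg_le A) S

theorem card_hammingBall_initSeg_le (t : ℕ) (S : Finset (Cube n)) :
    #(hammingBall t (initSeg (simplicial n) #S)) ≤ #(hammingBall t S) := by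
  induction t with
  | zero =>
    simp only [hammingBall_zero]
    exact (card_initSeg_of_le (card_le_univ S)).le
  | succ t ih =>
    rw [hammingBall_succ t S, hammingBall_succ t,
      (isInitial_hammingBall_initSeg t #S).eq_initSeg_card]
    calc _ ≤ #(hammingBall 1 (initSeg (simplicial n) #(hammingBall t S))) :=
          card_le_card (hammingBall_mono 1 (initSeg_mono ih))
      _ ≤ _ := card_hammingBall_one_initSeg_le _

theorem isInitial_closedNbhd_initSeg (t k : ℕ) :
    IsInitial (simplicial n) (closedNbhd (genHamming t 2 n) (initSeg (simplicial n) k)) := by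
  rw [closedNbhd_genHamming]
  exact isInitial_hammingBall_initSeg t k

theorem card_vertexBoundary_initSeg_le (t : ℕ) (S : Finset (Cube n)) :
    #(vertexBoundary (genHamming t 2 n) (initSeg (simplicial n) #S)) ≤
      #(vertexBoundary (genHamming t 2 n) S) := by
  have hI := card_vertexBoundary_add_card (G := genHamming t 2 n) (initSeg (simplicial n) #S)
  have hS := card_vertexBoundary_add_card (G := genHamming t 2 n) S
  rw [closedNbhd_genHamming, card_initSeg_of_le (card_le_univ S)] at hI
  rw [closedNbhd_genHamming] at hS
  have := card_hammingBall_initSeg_le t S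
  omega

end Hypercube

theorem pathwidth_eq_bandwidth_genHypercube_general (t n : ℕ) :
    pathwidth (genHamming t 2 n) = bandwidth (genHamming t 2 n) :=
  le_antisymm (pathwidth_le_bandwidth _)
    (bandwidth_le_pathwidth_of_isoperimetric (Hypercube.simplicial n)
      (Hypercube.isInitial_closedNbhd_initSeg t) (Hypercube.card_vertexBoundary_initSeg_le t))

/-- For all positive integers `t` and `n`, the pathwidth of the generalized hypercube
`H(t,2,n)` equals its bandwidth. -/
theorem pathwidth_eq_bandwidth_genHypercube (t n : ℕ) (ht : 1 ≤ t) (hn : 1 ≤ n) :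
    pathwidth (genHamming t 2 n) = bandwidth (genHamming t 2 n) :=
  pathwidth_eq_bandwidth_genHypercube_general t n
end

section
/- For every positive integer k, tw(BK(2k+1,k)) ≤ tw(J(2k+1,k)), i.e., the treewidth of the bipartite Kneser graph BK(2k+1,k) is at most the treewidth of the Johnson graph J(2k+1,k). -/
/-- The Johnson graph `J(n,k)`: vertices are the `k`-subsets of `{1,…,n}`, two distinct
subsets adjacent iff their intersection has exactly `k−1` elements. -/
def johnson (n k : ℕ) : SimpleGraph {A : Finset (Fin n) // A.card = k} where
  Adj A B := A ≠ B ∧ (A.1 ∩ B.1).card = k - 1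
  symm := ⟨by
    rintro A B ⟨h1, h2⟩
    exact ⟨h1.symm, by rwa [Finset.inter_comm]⟩⟩
  loopless := ⟨by rintro A ⟨h, -⟩; exact h rfl⟩

open SimpleGraph

namespace SimpleGraph

variable {ι : Type*} {T : SimpleGraph ι}

theorem Walk.IsPath.append {u v w : ι} {p : T.Walk u v} {q : T.Walk v w} (hp : p.IsPath)
    (hq : q.IsPath) (hpq : ∀ x ∈ p.support, x ∈ q.support → x = v) : (p.append q).IsPath := by
  have hq' := hq.support_nodup
  rw [← Walk.cons_tail_support] at hq'
  rw [Walk.isPath_def, Walk.support_append, List.nodup_append]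
  refine ⟨hp.support_nodup, (List.nodup_cons.mp hq').2, fun x hxp y hyq hxy => ?_⟩
  subst hxy
  obtain rfl := hpq x hxp (List.mem_of_mem_tail hyq)
  exact (List.nodup_cons.mp hq').1 hyq

theorem Preconnected.exists_isPath_of_induce {S : Set ι} (hS : (T.induce S).Preconnected)
    {i j : ι} (hi : i ∈ S) (hj : j ∈ S) : ∃ p : T.Walk i j, p.IsPath ∧ ∀ x ∈ p.support, x ∈ S := by
  classical
  obtain ⟨w⟩ := hS ⟨i, hi⟩ ⟨j, hj⟩
  have hw : ∀ x ∈ (w.map (Embedding.induce S).toHom).support, x ∈ S := by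
    intro x hx
    rw [Walk.support_map, List.mem_map] at hx
    obtain ⟨y, -, rfl⟩ := hx
    exact y.2
  let w' : T.Walk i j := w.map (Embedding.induce S).toHom
  exact ⟨w'.toPath, w'.toPath.2, fun x hx => hw x (w'.support_toPath_subset_support hx)⟩

theorem IsAcyclic.support_subset_of_preconnected (hT : T.IsAcyclic) {S : Set ι}
    (hS : (T.induce S).Preconnected) {i j : ι} (hi : i ∈ S) (hj : j ∈ S) {p : T.Walk i j}
    (hp : p.IsPath) : ∀ x ∈ p.support, x ∈ S := by
  obtain ⟨q, hq, hqS⟩ := hS.exists_isPath_of_induce hi hj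
  rwa [Subtype.mk.inj ((hT.subsingleton_path i j).elim ⟨p, hp⟩ ⟨q, hq⟩)]

theorem IsAcyclic.connected_induce_inter (hT : T.IsAcyclic) {X Y : Set ι}
    (hX : (T.induce X).Connected) (hY : (T.induce Y).Connected) (hXY : (X ∩ Y).Nonempty) :
    (T.induce (X ∩ Y)).Connected := by
  rw [connected_iff]
  refine ⟨?_, hXY.to_subtype⟩
  rintro ⟨a, haX, haY⟩ ⟨b, hbX, hbY⟩
  obtain ⟨p, hp, hpX⟩ := hX.preconnected.exists_isPath_of_induce haX hbX
  exact ⟨p.induce (X ∩ Y) fun x hx =>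
    ⟨hpX x hx, hT.support_subset_of_preconnected hY.preconnected haY hbY hp x hx⟩⟩

theorem Walk.exists_walk_to_first_mem {X : Set ι} :
    ∀ {z x : ι} (_ : T.Walk z x), x ∈ X →
      ∃ g ∈ X, ∃ p : T.Walk z g, ∀ v ∈ p.support, v ∈ X → v = g
  | _, _, .nil, hx => ⟨_, hx, .nil, by simp⟩
  | z, _, .cons h w, hx => by
    by_cases hz : z ∈ X
    · exact ⟨z, hz, .nil, by simp⟩
    · obtain ⟨g, hg, p, hp⟩ := exists_walk_to_first_mem w hx
      refine ⟨g, hg, .cons h p, ?_⟩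
      rintro v (_ | ⟨_, hv⟩) hvX
      · exact absurd hvX hz
      · exact hp v hv hvX

/-- Take `g` to be the first node of `X` on a walk from `z`: the path from `z` to `g` followed by
a path inside `X` is a path, hence the path from `z` to any `x ∈ X`. -/
theorem IsTree.exists_gate (hT : T.IsTree) {X : Set ι} (hX : (T.induce X).Connected) (z : ι) :
    ∃ g ∈ X, ∀ x ∈ X, ∀ q : T.Walk z x, q.IsPath → g ∈ q.support := by
  classical
  obtain ⟨x₀, hx₀⟩ := hX.nonempty
  obtain ⟨w⟩ := hT.connected.preconnected z x₀
  obtain ⟨g, hg, p, hp⟩ := w.exists_walk_to_first_mem hx₀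
  refine ⟨g, hg, fun x hx q hq => ?_⟩
  obtain ⟨r, hr, hrX⟩ := hX.preconnected.exists_isPath_of_induce hg hx
  have hpr : (p.toPath.1.append r).IsPath := p.toPath.2.append hr fun v hvp hvr =>
    hp v (p.support_toPath_subset_support hvp) (hrX v hvr)
  have hq' : (⟨q, hq⟩ : T.Path z x) = ⟨_, hpr⟩ := (hT.isAcyclic.subsingleton_path z x).elim _ _
  rw [Subtype.mk.inj hq', Walk.mem_support_append_iff]
  exact Or.inr r.start_mem_support

theorem IsTree.inter_inter_nonempty (hT : T.IsTree) {X Y Z : Set ι}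
    (hX : (T.induce X).Connected) (hY : (T.induce Y).Connected) (hZ : (T.induce Z).Connected)
    (hXY : (X ∩ Y).Nonempty) (hXZ : (X ∩ Z).Nonempty) (hYZ : (Y ∩ Z).Nonempty) :
    (X ∩ Y ∩ Z).Nonempty := by
  obtain ⟨x, hxX, hxY⟩ := hXY
  obtain ⟨y, hyX, hyZ⟩ := hXZ
  obtain ⟨z, hzY, hzZ⟩ := hYZ
  obtain ⟨g, hgX, hg⟩ := hT.exists_gate hX z
  obtain ⟨q, hq⟩ := hT.connected.exists_isPath z x
  obtain ⟨r, hr⟩ := hT.connected.exists_isPath z y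
  exact ⟨g, ⟨hgX, hT.isAcyclic.support_subset_of_preconnected hY.preconnected hzY hxY hq g
    (hg x hxX q hq)⟩, hT.isAcyclic.support_subset_of_preconnected hZ.preconnected hzZ hyZ hr g
    (hg y hyX r hr)⟩

/-- Helly property of subtrees. The extra subtree `Y` is what makes the induction on `C` go
through; `Y = Set.univ` gives the usual statement. -/
theorem IsTree.inter_biInter_nonempty (hT : T.IsTree) {α : Type*} (C : Finset α) {S : α → Set ι}
    (hS : ∀ a ∈ C, (T.induce (S a)).Connected)
    (hC : (C : Set α).Pairwise fun a b => (S a ∩ S b).Nonempty) {Y : Set ι}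
    (hY : (T.induce Y).Connected) (hYC : ∀ a ∈ C, (Y ∩ S a).Nonempty) :
    (Y ∩ ⋂ a ∈ C, S a).Nonempty := by
  classical
  induction C using Finset.cons_induction generalizing Y with
  | empty => simpa using Set.nonempty_coe_sort.mp hY.nonempty
  | cons a C ha ih =>
    have hSa := hS a (C.mem_cons_self a)
    have hYa := hYC a (C.mem_cons_self a)
    have hYSa : (T.induce (Y ∩ S a)).Connected := hT.isAcyclic.connected_induce_inter hY hSa hYa
    have hYSaC : ∀ b ∈ C, (Y ∩ S a ∩ S b).Nonempty := fun b hb =>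
      hT.inter_inter_nonempty hY hSa (hS b (C.mem_cons_of_mem hb)) hYa
        (hYC b (C.mem_cons_of_mem hb))
        (hC (C.mem_cons_self a) (C.mem_cons_of_mem hb) fun hab => ha (hab ▸ hb))
    rw [Finset.cons_eq_insert, Finset.set_biInter_insert, ← Set.inter_assoc]
    exact ih (fun b hb => hS b (C.mem_cons_of_mem hb)) (hC.mono fun b => C.mem_cons_of_mem)
      hYSa hYSaC

end SimpleGraph

namespace SimpleGraph

variable {ι β : Type*}

def leafExtend (T : SimpleGraph ι) (f : β → ι) : SimpleGraph (ι ⊕ β) where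
  Adj
    | .inl i, .inl j => T.Adj i j
    | .inl i, .inr b => i = f b
    | .inr b, .inl i => i = f b
    | .inr _, .inr _ => False
  symm := ⟨by
    rintro (i | b) (j | c) h
    exacts [T.adj_symm h, h, h, h]⟩
  loopless := ⟨by
    rintro (i | b) h
    exacts [T.irrefl h, h]⟩

variable {T : SimpleGraph ι} {f : β → ι}

theorem leafExtend_adj_inr {b : β} {x : ι ⊕ β} :
    (leafExtend T f).Adj (.inr b) x ↔ x = .inl (f b) := by
  cases x <;> simp [leafExtend, eq_comm]

def leafExtendEmbedding (T : SimpleGraph ι) (f : β → ι) : T ↪g leafExtend T f where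
  toEmbedding := ⟨Sum.inl, Sum.inl_injective⟩
  map_rel_iff' := Iff.rfl

theorem connected_induce_leafExtend {S : Set (ι ⊕ β)}
    (hS : (T.induce (Sum.inl ⁻¹' S)).Connected) (hleaf : ∀ b, .inr b ∈ S → .inl (f b) ∈ S) :
    ((leafExtend T f).induce S).Connected := by
  let φ : T.induce (Sum.inl ⁻¹' S) →g (leafExtend T f).induce S :=
    ⟨fun i => ⟨.inl i.1, i.2⟩, fun h => h⟩
  have hreach : ∀ x : S, ∃ i, ((leafExtend T f).induce S).Reachable x (φ i) := by
    rintro ⟨_ | b, hx⟩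
    · exact ⟨⟨_, hx⟩, .rfl⟩
    · exact ⟨⟨f b, hleaf b hx⟩, Adj.reachable (leafExtend_adj_inr (T := T).mpr rfl)⟩
  rw [connected_iff]
  refine ⟨fun x y => ?_, ?_⟩
  · obtain ⟨i, hi⟩ := hreach x
    obtain ⟨j, hj⟩ := hreach y
    exact hi.trans (((hS.preconnected i j).map φ).trans hj.symm)
  · obtain ⟨i⟩ := hS.nonempty
    exact ⟨φ i⟩

theorem Connected.leafExtend (hT : T.Connected) : (leafExtend T f).Connected :=
  (induceUnivIso _).connected_iff.mp <| connected_induce_leafExtend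
    ((induceUnivIso T).connected_iff.mpr hT) fun _ _ => Set.mem_univ _

theorem leafExtend_inr_notMem_support_of_isCycle {v : ι ⊕ β} {c : (leafExtend T f).Walk v v}
    (hc : c.IsCycle) (b : β) : .inr b ∉ c.support := by
  classical
  intro hb
  have hc' := hc.rotate hb
  have h₁ := leafExtend_adj_inr.mp ((c.rotate _ hb).adj_snd hc'.not_nil)
  have h₂ := leafExtend_adj_inr.mp ((c.rotate _ hb).adj_penultimate hc'.not_nil).symm
  exact hc'.snd_ne_penultimate (h₁.trans h₂.symm)

theorem IsAcyclic.leafExtend (hT : T.IsAcyclic) : (leafExtend T f).IsAcyclic := by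
  intro v c hc
  have hS : ∀ x ∈ c.support, x ∈ Set.range (leafExtendEmbedding T f) := by
    rintro (i | b) hx
    · exact ⟨i, rfl⟩
    · exact absurd hx (leafExtend_inr_notMem_support_of_isCycle hc b)
  rw [← c.map_induce hS] at hc
  have hcycle : (c.induce _ hS).IsCycle :=
    (Walk.isCycle_map_iff_of_injective (RelEmbedding.injective _)).mp hc
  exact (Embedding.isoInduceRange (leafExtendEmbedding T f)).isAcyclic_iff.mp hT _ hcycle

theorem IsTree.leafExtend (hT : T.IsTree) : (leafExtend T f).IsTree :=
  ⟨hT.connected.leafExtend, hT.isAcyclic.leafExtend⟩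

end SimpleGraph

namespace TreeDecomp

variable {V : Type*} {ι : Type} {G : SimpleGraph V} {T : SimpleGraph ι}

def maxBagCard [Fintype ι] (D : TreeDecomp G T) : ℕ :=
  Finset.univ.sup fun i => (D.bag i).card

theorem card_bag_le_maxBagCard [Fintype ι] (D : TreeDecomp G T) (i : ι) :
    (D.bag i).card ≤ D.maxBagCard :=
  Finset.le_sup (f := fun i => (D.bag i).card) (Finset.mem_univ i)

theorem exists_subset_bag_of_isClique (hT : T.IsTree) (D : TreeDecomp G T) {C : Finset V}
    (hC : G.IsClique (C : Set V)) : ∃ i, C ⊆ D.bag i := by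
  have hU : (T.induce Set.univ).Connected := (induceUnivIso T).connected_iff.mpr hT.connected
  obtain ⟨i, -, hi⟩ := hT.inter_biInter_nonempty C (S := fun v => {i | v ∈ D.bag i})
    (fun v _ => D.subtree v) (hC.imp fun u v huv => D.edgeCover u v huv) hU
    fun v _ => let ⟨i, hi⟩ := D.cover v; ⟨i, trivial, hi⟩
  exact ⟨i, fun v hv => Set.mem_iInter₂.mp hi v hv⟩

theorem le_maxBagCard_of_isNClique [Fintype ι] (hT : T.IsTree) (D : TreeDecomp G T)
    {C : Finset V} {n : ℕ} (hC : G.IsNClique n C) : n ≤ D.maxBagCard := by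
  obtain ⟨i, hi⟩ := D.exists_subset_bag_of_isClique hT hC.isClique
  exact hC.card_eq ▸ (Finset.card_le_card hi).trans (D.card_bag_le_maxBagCard i)

end TreeDecomp

theorem treewidth_le {V : Type*} [Fintype V] {G : SimpleGraph V} {ι : Type} [Fintype ι]
    {T : SimpleGraph ι} (hT : T.IsTree) (D : TreeDecomp G T) :
    treewidth G ≤ D.maxBagCard - 1 :=
  Nat.sInf_le ⟨ι, _, T, hT, D, rfl⟩

theorem exists_treeDecomp_maxBagCard_eq_treewidth {V : Type*} [Fintype V] (G : SimpleGraph V) :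
    ∃ (ι : Type) (_ : Fintype ι) (T : SimpleGraph ι), T.IsTree ∧
      ∃ D : TreeDecomp G T, D.maxBagCard - 1 = treewidth G := by
  let D₀ : TreeDecomp G (⊥ : SimpleGraph PUnit) :=
    { bag := fun _ => Finset.univ
      cover := fun v => ⟨(), Finset.mem_univ v⟩
      edgeCover := fun u v _ => ⟨(), Finset.mem_univ u, Finset.mem_univ v⟩
      subtree := fun v => @Connected.of_subsingleton _ _ ⟨⟨(), Finset.mem_univ v⟩⟩ _ }
  obtain ⟨ι, _, T, hT, D, hD⟩ : treewidth G ∈ _ :=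
    Nat.sInf_mem ⟨_, PUnit, inferInstance, ⊥, .of_subsingleton, D₀, rfl⟩
  exact ⟨ι, _, T, hT, D, hD⟩

section Johnson

variable {n k : ℕ}

theorem johnson_adj_of_subset_inter {A A' : {A : Finset (Fin n) // A.card = k}} (hAA' : A ≠ A')
    {S : Finset (Fin n)} (hS : S.card = k - 1) (hSA : S ⊆ A.1 ∩ A'.1) :
    (johnson n k).Adj A A' := by
  refine ⟨hAA', le_antisymm ?_ (hS ▸ Finset.card_le_card hSA)⟩
  have hlt : (A.1 ∩ A'.1).card < A.1.card := Finset.card_lt_card <|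
    Finset.ssubset_iff_subset_ne.mpr ⟨Finset.inter_subset_left, fun h => hAA' <| Subtype.ext <|
      Finset.eq_of_subset_of_card_le (h ▸ Finset.inter_subset_right) (by rw [A.2, A'.2])⟩
  omega

def kSubsetsOf (k : ℕ) (B : Finset (Fin n)) : Finset {A : Finset (Fin n) // A.card = k} :=
  {A | A.1 ⊆ B}

@[simp] theorem mem_kSubsetsOf {B : Finset (Fin n)} {A : {A : Finset (Fin n) // A.card = k}} :
    A ∈ kSubsetsOf k B ↔ A.1 ⊆ B := by
  simp [kSubsetsOf]

theorem johnson_isClique_kSubsetsOf {B : Finset (Fin n)} (hB : B.card = k + 1) :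
    (johnson n k).IsClique (kSubsetsOf k B : Set _) := by
  intro A hA A' hA' hAA'
  rw [Finset.mem_coe, mem_kSubsetsOf] at hA hA'
  have hne : A.1 ≠ A'.1 := fun h => hAA' (Subtype.ext h)
  refine ⟨hAA', ?_⟩
  have hle : (A.1 ∪ A'.1).card ≤ k + 1 := hB ▸ Finset.card_le_card (Finset.union_subset hA hA')
  have hlt : A.1.card < (A.1 ∪ A'.1).card := Finset.card_lt_card <|
    Finset.ssubset_iff_subset_ne.mpr ⟨Finset.subset_union_left, fun h => hne <|
      (Finset.eq_of_subset_of_card_le (h ▸ Finset.subset_union_right) (by rw [A.2, A'.2])).symm⟩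
  have := Finset.card_union_add_card_inter A.1 A'.1
  omega

/-- The `k`-sets through a fixed `(k - 1)`-set `S` form a clique, one member `insert x S` for
each `x ∉ S`. -/
theorem johnson_exists_isNClique (hk : 1 ≤ k) (hkn : k ≤ n) :
    ∃ C, (johnson n k).IsNClique (n - k + 1) C := by
  classical
  obtain ⟨S, -, hS⟩ :=
    Finset.exists_subset_card_eq (s := (Finset.univ : Finset (Fin n))) (n := k - 1) (by simp; omega)
  have hins : ∀ x ∈ Sᶜ, (insert x S).card = k := fun x hx => by
    rw [Finset.card_insert_of_notMem (Finset.mem_compl.mp hx), hS]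
    omega
  have hinj : Set.InjOn (insert · S) (Sᶜ : Finset (Fin n)) := fun x hx y _ hxy => by
    have : x ∈ insert y S := by simpa only [← hxy] using Finset.mem_insert_self x S
    exact (Finset.mem_insert.mp this).resolve_right (Finset.mem_compl.mp hx)
  refine ⟨(Sᶜ.image (insert · S)).subtype (·.card = k), ⟨?_, ?_⟩⟩
  · intro A hA A' hA' hAA'
    simp only [Finset.mem_coe, Finset.mem_subtype, Finset.mem_image] at hA hA'
    obtain ⟨x, -, hx⟩ := hA
    obtain ⟨y, -, hy⟩ := hA'
    exact johnson_adj_of_subset_inter hAA' hS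
      (Finset.subset_inter (hx ▸ Finset.subset_insert x S) (hy ▸ Finset.subset_insert y S))
  · rw [Finset.card_subtype, Finset.filter_true_of_mem, Finset.card_image_of_injOn hinj,
      Finset.card_compl, Fintype.card_fin, hS]
    · omega
    · simp only [Finset.mem_image]
      rintro _ ⟨x, hx, rfl⟩
      exact hins x hx

def johnsonToKneser :
    {A : Finset (Fin n) // A.card = k} ↪ {A : Finset (Fin n) // A.card = k ∨ A.card = n - k} :=
  ⟨fun A => ⟨A.1, .inl A.2⟩, fun _ _ h => Subtype.ext (Subtype.mk.inj h)⟩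

end Johnson

section Kneser

variable {k : ℕ} {ι : Type} {T : SimpleGraph ι}

theorem bipartiteKneser_card_eq
    (A : {A : Finset (Fin (2 * k + 1)) // A.card = k ∨ A.card = 2 * k + 1 - k}) :
    A.1.card = k ∨ A.1.card = k + 1 := by
  have := A.2
  omega

def kneserBag (D : TreeDecomp (johnson (2 * k + 1) k) T) :
    ι ⊕ {B : Finset (Fin (2 * k + 1)) // B.card = k + 1} →
      Finset {A : Finset (Fin (2 * k + 1)) // A.card = k ∨ A.card = 2 * k + 1 - k}
  | .inl i => (D.bag i).map johnsonToKneser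
  | .inr B => {A | A.1 ⊆ B.1}

variable (D : TreeDecomp (johnson (2 * k + 1) k) T)
  (f : {B : Finset (Fin (2 * k + 1)) // B.card = k + 1} → ι)

theorem mem_kneserBag_inr {A} {B : {B : Finset (Fin (2 * k + 1)) // B.card = k + 1}} :
    A ∈ kneserBag D (.inr B) ↔ A.1 ⊆ B.1 := by
  simp [kneserBag]

theorem exists_mem_kneserBag (A) : ∃ x, A ∈ kneserBag D x := by
  rcases bipartiteKneser_card_eq A with hA | hA
  · obtain ⟨i, hi⟩ := D.cover ⟨A.1, hA⟩
    exact ⟨.inl i, Finset.mem_map_of_mem _ hi⟩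
  · exact ⟨.inr ⟨A.1, hA⟩, (mem_kneserBag_inr D).mpr subset_rfl⟩

theorem exists_mem_kneserBag_of_adj {A A'} (h : (bipartiteKneser (2 * k + 1) k).Adj A A') :
    ∃ x, A ∈ kneserBag D x ∧ A' ∈ kneserBag D x := by
  have key : ∀ {A A'}, A.1 ⊂ A'.1 → ∃ x, A ∈ kneserBag D x ∧ A' ∈ kneserBag D x := by
    intro A A' hAA'
    have hlt := Finset.card_lt_card hAA'
    have hA' : A'.1.card = k + 1 := by
      rcases bipartiteKneser_card_eq A with _ | _ <;> rcases bipartiteKneser_card_eq A' with _ | _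
        <;> omega
    exact ⟨.inr ⟨A'.1, hA'⟩, (mem_kneserBag_inr D).mpr hAA'.subset,
      (mem_kneserBag_inr D).mpr subset_rfl⟩
  rcases h with h | h
  · exact key h
  · exact (key h).imp fun _ => And.symm

theorem connected_induce_kneserBag (hf : ∀ B, kSubsetsOf k B.1 ⊆ D.bag (f B)) (A) :
    ((leafExtend T f).induce {x | A ∈ kneserBag D x}).Connected := by
  rcases bipartiteKneser_card_eq A with hA | hA
  · obtain ⟨a, rfl⟩ : ∃ a, johnsonToKneser a = A := ⟨⟨A.1, hA⟩, rfl⟩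
    have hpre : Sum.inl ⁻¹' {x | johnsonToKneser a ∈ kneserBag D x} = {i | a ∈ D.bag i} :=
      Set.ext fun _ => Finset.mem_map' _
    refine connected_induce_leafExtend (hpre ▸ D.subtree a) fun B hB => ?_
    exact Finset.mem_map_of_mem _
      (hf B (mem_kSubsetsOf.mpr ((mem_kneserBag_inr D).mp hB)))
  · have hsingle : {x | A ∈ kneserBag D x} = {.inr ⟨A.1, hA⟩} := by
      ext (i | B)
      · simp only [kneserBag, Set.mem_ofPred_eq, Finset.mem_map, Set.mem_singleton_iff,
          reduceCtorEq, iff_false, not_exists, not_and]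
        rintro a - rfl
        have h₁ : a.1.card = k + 1 := hA
        have h₂ := a.2
        omega
      · rw [Set.mem_ofPred_eq, mem_kneserBag_inr, Set.mem_singleton_iff, Sum.inr.injEq]
        refine ⟨fun h => Subtype.ext (Finset.eq_of_subset_of_card_le h ?_).symm, ?_⟩
        · rw [B.2, hA]
        · rintro rfl
          exact subset_rfl
    rw [hsingle]
    exact Connected.of_subsingleton

variable (hf : ∀ B, kSubsetsOf k B.1 ⊆ D.bag (f B))

def kneserDecomp :
    TreeDecomp (bipartiteKneser (2 * k + 1) k) (leafExtend T f) where
  bag := kneserBag D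
  cover := exists_mem_kneserBag D
  edgeCover _ _ := exists_mem_kneserBag_of_adj D
  subtree := connected_induce_kneserBag D f hf

theorem card_kneserBag_inr_le (B : {B : Finset (Fin (2 * k + 1)) // B.card = k + 1}) :
    (kneserBag D (.inr B)).card ≤ k + 2 := by
  have hmaps : ∀ A ∈ kneserBag D (.inr B), A.1 ∈ B.1.powersetCard k ∪ {B.1} := by
    intro A hA
    have hAB := (mem_kneserBag_inr D).mp hA
    rw [Finset.mem_union, Finset.mem_powersetCard, Finset.mem_singleton]
    rcases bipartiteKneser_card_eq A with hA | hA
    · exact .inl ⟨hAB, hA⟩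
    · exact .inr (Finset.eq_of_subset_of_card_le hAB (by rw [B.2, hA]))
  calc (kneserBag D (.inr B)).card ≤ (B.1.powersetCard k ∪ {B.1}).card :=
        Finset.card_le_card_of_injOn _ (fun A hA => hmaps A hA) Subtype.val_injective.injOn
    _ ≤ (B.1.powersetCard k).card + 1 := Finset.card_union_le _ _
    _ = k + 2 := by rw [Finset.card_powersetCard, B.2, Nat.choose_succ_self_right]

theorem maxBagCard_kneserDecomp_le [Fintype ι] :
    (kneserDecomp D f hf).maxBagCard ≤ max D.maxBagCard (k + 2) := by
  refine Finset.sup_le fun x _ => ?_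
  rcases x with i | B
  · exact ((Finset.card_map _).trans_le (D.card_bag_le_maxBagCard i)).trans (le_max_left _ _)
  · exact (card_kneserBag_inr_le D B).trans (le_max_right _ _)

end Kneser

/-- For every positive integer `k`, the treewidth of the bipartite Kneser graph
`BK(2k+1,k)` is at most the treewidth of the Johnson graph `J(2k+1,k)`. -/
theorem treewidth_BK_le_johnson (k : ℕ) (hk : 1 ≤ k) :
    treewidth (bipartiteKneser (2 * k + 1) k) ≤ treewidth (johnson (2 * k + 1) k) := by
  obtain ⟨ι, _, T, hT, D, hD⟩ := exists_treeDecomp_maxBagCard_eq_treewidth (johnson (2 * k + 1) k)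
  choose f hf using fun B : {B : Finset (Fin (2 * k + 1)) // B.card = k + 1} =>
    D.exists_subset_bag_of_isClique hT (johnson_isClique_kSubsetsOf B.2)
  obtain ⟨C, hC⟩ := johnson_exists_isNClique hk (by omega : k ≤ 2 * k + 1)
  have hD₂ : k + 2 ≤ D.maxBagCard := by
    have := D.le_maxBagCard_of_isNClique hT hC
    omega
  calc treewidth (bipartiteKneser (2 * k + 1) k)
      ≤ (kneserDecomp D f hf).maxBagCard - 1 := treewidth_le hT.leafExtend _
    _ ≤ D.maxBagCard - 1 := by
      have := maxBagCard_kneserDecomp_le D f hf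
      omega
    _ = treewidth (johnson (2 * k + 1) k) := hD
end

section
/- For any finite graph G, there exists a set X ⊆ V(G) with |X| ≤ tw(G) + 1 together with a partition of V(G) − X into sets A and B such that no edge of G joins a vertex of A to a vertex of B and |V(G)−X|/3 ≤ |A|, |B| ≤ 2|V(G)−X|/3. -/
/-!
Fix a tree decomposition of width `tw(G)`. For a tree edge `st`, deleting `bag s ∩ bag t`
separates the vertices seen only in bags on the `s`-side from those seen only on the `t`-side;
call the former the piece `P(s,t)`. Orient `st` from `t` to `s` when `2|P(t,s)| < |P(s,t)|`.
Like every orientation of a finite tree, this one has a sink `t`.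

The pieces `P(s,t)`, for the neighbours `s` of `t`, partition `G - bag t` with no edges between
them. If each holds at most two thirds of `G - bag t`, some of them together hold between one
and two thirds, and `X = bag t` works. Otherwise let `A = P(s,t)` be the large piece and
`B = P(t,s)`. As `t` is a sink, `|A| ≤ 2|B|`; as `A` is large, the vertices of `B` outside
`bag t` number at most `2|A|`. So moving suitably many vertices of `B ∩ bag t` into the
separator `bag s ∩ bag t` balances `A` against `B` with a separator still inside `bag t`.
-/

namespace SimpleGraph.IsTree

variable {ι : Type*} {T : SimpleGraph ι} (hT : T.IsTree)

noncomputable def path (i j : ι) : T.Walk i j := (hT.existsUnique_path i j).exists.choose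

lemma isPath_path (i j : ι) : (hT.path i j).IsPath := (hT.existsUnique_path i j).exists.choose_spec

lemma eq_path {i j : ι} {p : T.Walk i j} (hp : p.IsPath) : p = hT.path i j :=
  (hT.existsUnique_path i j).unique hp (hT.isPath_path i j)

/-- For an edge `st`, the nodes `i` with `hT.Side s t i` form the component of `T - st`
containing `s`. -/
def Side (s t i : ι) : Prop := (hT.path t i).snd = s

variable {hT} {s s' t i j : ι}

lemma side_iff_mem_support (h : T.Adj t s) : hT.Side s t i ↔ s ∈ (hT.path t i).support :=
  ⟨fun hs => hs ▸ Walk.getVert_mem_support _ _,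
    fun hs => (hT.isAcyclic.eq_snd_of_adj_start (hT.isPath_path t i) h hs).symm⟩

lemma side_self (h : T.Adj t s) : hT.Side s t s :=
  (side_iff_mem_support h).2 (Walk.end_mem_support _)

lemma side_or_side (h : T.Adj s t) (i : ι) : hT.Side s t i ∨ hT.Side t s i := by
  refine or_iff_not_imp_left.2 fun hs => ?_
  rw [side_iff_mem_support h.symm] at hs
  rw [Side, ← hT.eq_path ((hT.isPath_path t i).cons hs (h := h))]
  exact Walk.snd_cons _ _

lemma not_side_of_side (h : T.Adj s t) (hs : hT.Side s t i) : ¬ hT.Side t s i := by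
  rw [side_iff_mem_support h.symm] at hs
  rw [side_iff_mem_support h]
  simpa using hT.isAcyclic.ne_mem_support_of_support_of_adj_of_isPath
    (hT.isPath_path t i).reverse (hT.isPath_path s i).reverse h.symm (by simpa using hs)

lemma side_of_side_of_ne (h : T.Adj s t) (hs' : hT.Side s' t i) (hne : s' ≠ s) :
    hT.Side t s i :=
  (side_or_side h i).resolve_left fun hs => hne (hs' ▸ hs)

lemma exists_adj_side (hi : i ≠ t) : ∃ s, T.Adj t s ∧ hT.Side s t i :=
  ⟨_, Walk.adj_snd fun hnil => hi hnil.eq.symm, rfl⟩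

lemma mem_support_of_side (h : T.Adj t s) (hi : hT.Side s t i) (hj : ¬ hT.Side s t j)
    (w : T.Walk i j) : s ∈ w.support := by
  classical
  rw [side_iff_mem_support h] at hi hj
  have hbypass := hT.eq_path (((hT.path t j).append w.reverse).bypass_isPath)
  have := ((hT.path t j).append w.reverse).support_bypass_subset_support (hbypass ▸ hi)
  rw [Walk.support_append, List.mem_append] at this
  rcases this with h' | h'
  · exact absurd h' hj
  · simpa using List.mem_of_mem_tail h'

/-- Every orientation of a finite tree has a sink. -/
theorem exists_forall_adj_not_rel [Finite ι] (hT : T.IsTree) (r : ι → ι → Prop)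
    (hr : ∀ s t, T.Adj s t → r s t → ¬ r t s) : ∃ t, ∀ s, T.Adj t s → ¬ r t s := by
  by_cases hedge : ∃ s t, T.Adj s t ∧ r s t
  swap
  · push Not at hedge
    obtain ⟨t⟩ := hT.connected.nonempty
    exact ⟨t, fun s h => hedge t s h⟩
  obtain ⟨s₀, t₀, hst₀⟩ := hedge
  -- an arc whose tail side is maximal points to a sink
  obtain ⟨⟨s, t⟩, ⟨hadj, hrst⟩, hmax⟩ := Set.Finite.exists_maximalFor
    (fun p : ι × ι => {i | hT.Side p.1 p.2 i}) {p | T.Adj p.1 p.2 ∧ r p.1 p.2}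
    (Set.toFinite _) ⟨(s₀, t₀), hst₀⟩
  refine ⟨t, fun s' ht hrts' => ?_⟩
  by_cases hs' : s' = s
  · subst hs'
    exact hr _ _ hadj hrst hrts'
  have hsub : {i | hT.Side s t i} ⊆ {i | hT.Side t s' i} := fun i hi =>
    side_of_side_of_ne ht.symm (s' := s) hi (Ne.symm hs')
  have := hmax (j := (t, s')) ⟨ht, hrts'⟩ hsub (side_self ht.symm)
  exact not_side_of_side (hadj.symm : T.Adj t s) (side_self (hadj : T.Adj s t)) this

end SimpleGraph.IsTree

open Finset

lemma Finset.exists_subset_sum_le_three_mul_sum_le {α : Type*} [DecidableEq α] (s : Finset α)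
    (f : α → ℕ) (h : ∀ a ∈ s, 3 * f a ≤ 2 * ∑ x ∈ s, f x) :
    ∃ u ⊆ s, ∑ x ∈ s, f x ≤ 3 * ∑ x ∈ u, f x ∧ 3 * ∑ x ∈ u, f x ≤ 2 * ∑ x ∈ s, f x := by
  -- a smallest subset carrying a third of the weight carries at most two thirds
  obtain ⟨u, hu, hmin⟩ := exists_min_image
    (s.powerset.filter fun u => ∑ x ∈ s, f x ≤ 3 * ∑ x ∈ u, f x) card
    ⟨s, mem_filter.2 ⟨mem_powerset_self s, by omega⟩⟩
  rw [mem_filter, mem_powerset] at hu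
  refine ⟨u, hu.1, hu.2, ?_⟩
  obtain rfl | ⟨a, ha⟩ := u.eq_empty_or_nonempty
  · simp
  have hsplit := sum_erase_add u f ha
  by_cases hbig : ∑ x ∈ s, f x ≤ 3 * f a
  · have hcard := hmin {a} (by simpa [hu.1 ha] using hbig)
    rw [card_singleton] at hcard
    rw [eq_singleton_iff_unique_mem.2 ⟨ha, fun b hb => card_le_one.1 hcard b hb a ha⟩,
      sum_singleton]
    exact h a (hu.1 ha)
  · have herase : ¬ ∑ x ∈ s, f x ≤ 3 * ∑ x ∈ u.erase a, f x := fun hle =>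
      (card_erase_lt_of_mem ha).not_ge
        (hmin _ (mem_filter.2 ⟨mem_powerset.2 ((erase_subset a u).trans hu.1), hle⟩))
    omega

namespace SimpleGraph

variable {V : Type*} [Fintype V] [DecidableEq V] (G : SimpleGraph V)

structure IsSeparation (X A B : Finset V) : Prop where
  union_eq : A ∪ B = univ \ X
  disjoint : Disjoint A B
  not_adj : ∀ a ∈ A, ∀ b ∈ B, ¬ G.Adj a b

structure IsBalancedSeparation (X A B : Finset V) : Prop extends G.IsSeparation X A B where
  card_left_le : #A ≤ 2 * #B
  card_right_le : #B ≤ 2 * #A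

variable {G} {X A B : Finset V}

lemma IsSeparation.card_compl (h : G.IsSeparation X A B) : #(univ \ X) = #A + #B := by
  rw [← h.union_eq, card_union_of_disjoint h.disjoint]

lemma IsSeparation.union_right_sdiff {Z : Finset V} (h : G.IsSeparation X A B) (hZ : Z ⊆ B) :
    G.IsSeparation (X ∪ Z) A (B \ Z) where
  union_eq := by
    have hAZ : Disjoint A Z := h.disjoint.mono_right hZ
    rw [show univ \ (X ∪ Z) = (univ \ X) \ Z from (sdiff_sdiff_left ..).symm, ← h.union_eq,
       union_sdiff_distrib, hAZ.sdiff_eq_left]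
  disjoint := h.disjoint.mono_right sdiff_subset
  not_adj a ha b hb := h.not_adj a ha b (mem_sdiff.1 hb).1

lemma IsSeparation.exists_isBalancedSeparation_union {F : Finset V} (h : G.IsSeparation X A B)
    (hF : F ⊆ B) (hA : #A ≤ 2 * #B) (hBF : #(B \ F) ≤ 2 * #A) :
    ∃ Z ⊆ F, G.IsBalancedSeparation (X ∪ Z) A (B \ Z) := by
  have hcard : #B - 2 * #A ≤ #F := by rw [card_sdiff_of_subset hF] at hBF; omega
  obtain ⟨Z, hZF, hZ⟩ := exists_subset_card_eq hcard
  have hBZ : #(B \ Z) = #B - (#B - 2 * #A) := by rw [card_sdiff_of_subset (hZF.trans hF), hZ]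
  exact ⟨Z, hZF, h.union_right_sdiff (hZF.trans hF), by omega, by omega⟩

lemma IsBalancedSeparation.bounds (h : G.IsBalancedSeparation X A B) :
    (#(univ \ X) : ℚ) / 3 ≤ #A ∧ (#A : ℚ) ≤ 2 * #(univ \ X) / 3 ∧
      (#(univ \ X) : ℚ) / 3 ≤ #B ∧ (#B : ℚ) ≤ 2 * #(univ \ X) / 3 := by
  have hA : (#A : ℚ) ≤ 2 * #B := by exact_mod_cast h.card_left_le
  have hB : (#B : ℚ) ≤ 2 * #A := by exact_mod_cast h.card_right_le
  rw [h.card_compl, Nat.cast_add]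
  refine ⟨?_, ?_, ?_, ?_⟩ <;> linarith

lemma exists_isBalancedSeparation_of_pieces {κ : Type*} [DecidableEq κ] (N : Finset κ)
    (P : κ → Finset V) (hN : N.biUnion P = univ \ X)
    (hP : (N : Set κ).Pairwise fun a b => Disjoint (P a) (P b) ∧ ∀ x ∈ P a, ∀ y ∈ P b, ¬ G.Adj x y)
    (hsmall : ∀ a ∈ N, 3 * #(P a) ≤ 2 * #(univ \ X)) : ∃ A B, G.IsBalancedSeparation X A B := by
  have hcard : ∀ u ⊆ N, #(u.biUnion P) = ∑ a ∈ u, #(P a) := fun u hu =>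
    card_biUnion fun a ha b hb hab => (hP (hu ha) (hu hb) hab).1
  have htotal : #(univ \ X) = ∑ a ∈ N, #(P a) := hN ▸ hcard N subset_rfl
  obtain ⟨u, hu, hlow, hhigh⟩ :=
    N.exists_subset_sum_le_three_mul_sum_le (fun a => #(P a)) (htotal ▸ hsmall)
  have hsum := sum_sdiff hu (f := fun a => #(P a))
  have hne {a b : κ} (ha : a ∈ u) (hb : b ∈ N \ u) : a ≠ b := by
    rintro rfl; exact (mem_sdiff.1 hb).2 ha
  refine ⟨u.biUnion P, (N \ u).biUnion P, ⟨⟨?_, ?_, ?_⟩, ?_, ?_⟩⟩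
  · rw [← union_biUnion, union_sdiff_of_subset hu, hN]
  · simp only [disjoint_biUnion_left, disjoint_biUnion_right]
    exact fun b hb a ha => (hP (hu ha) (mem_sdiff.1 hb).1 (hne ha hb)).1
  · simp only [mem_biUnion]
    rintro x ⟨a, ha, hx⟩ y ⟨b, hb, hy⟩
    exact (hP (hu ha) (mem_sdiff.1 hb).1 (hne ha hb)).2 x hx y hy
  · rw [hcard u hu, hcard _ sdiff_subset]; omega
  · rw [hcard u hu, hcard _ sdiff_subset]; omega

end SimpleGraph


namespace TreeDecomp

open SimpleGraph SimpleGraph.IsTree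

variable {V : Type*} {ι : Type} {G : SimpleGraph V} {T : SimpleGraph ι}

def oneBag [Fintype V] (G : SimpleGraph V) : TreeDecomp G (⊥ : SimpleGraph Unit) where
  bag _ := univ
  cover v := ⟨(), mem_univ v⟩
  edgeCover u v _ := ⟨(), mem_univ u, mem_univ v⟩
  subtree v := { preconnected := .of_subsingleton, nonempty := ⟨⟨(), mem_univ v⟩⟩ }

variable {D : TreeDecomp G T} {hT : T.IsTree} {s s' t i j : ι} {v : V}

variable (D) in
lemma mem_bag_of_side (h : T.Adj t s) (hi : hT.Side s t i)
    (hj : ¬ hT.Side s t j) (hvi : v ∈ D.bag i) (hvj : v ∈ D.bag j) : v ∈ D.bag s := by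
  obtain ⟨w⟩ := (D.subtree v).preconnected ⟨i, hvi⟩ ⟨j, hvj⟩
  let w' : T.Walk i j := w.map (Embedding.induce _).toHom
  have := mem_support_of_side h hi hj w'
  rw [show w'.support = _ from Walk.support_map _ _, List.mem_map] at this
  obtain ⟨⟨m, hm⟩, -, rfl⟩ := this
  exact hm

variable [Fintype V]

variable (D hT) in
open Classical in
noncomputable def sideVertices (s t : ι) : Finset V :=
  univ.filter fun v => ∃ i, hT.Side s t i ∧ v ∈ D.bag i

lemma mem_sideVertices : v ∈ D.sideVertices hT s t ↔ ∃ i, hT.Side s t i ∧ v ∈ D.bag i := by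
  simp [sideVertices]

lemma bag_subset_sideVertices (h : T.Adj t s) : D.bag s ⊆ D.sideVertices hT s t :=
  fun _ hv => mem_sideVertices.2 ⟨s, side_self h, hv⟩

lemma mem_sideVertices_or (h : T.Adj s t) (v : V) :
    v ∈ D.sideVertices hT s t ∨ v ∈ D.sideVertices hT t s := by
  obtain ⟨i, hi⟩ := D.cover v
  exact (side_or_side h i).imp (fun hs => mem_sideVertices.2 ⟨i, hs, hi⟩)
    (fun ht => mem_sideVertices.2 ⟨i, ht, hi⟩)

lemma not_adj_of_notMem_sideVertices (h : T.Adj s t) {u w : V}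
    (hu : u ∉ D.sideVertices hT t s) (hw : w ∉ D.sideVertices hT s t) : ¬ G.Adj u w := by
  intro huw
  obtain ⟨m, hum, hwm⟩ := D.edgeCover u w huw
  rcases side_or_side h m with hm | hm
  · exact hw (mem_sideVertices.2 ⟨m, hm, hwm⟩)
  · exact hu (mem_sideVertices.2 ⟨m, hm, hum⟩)

variable [DecidableEq V]

lemma sideVertices_inter (h : T.Adj s t) :
    D.sideVertices hT s t ∩ D.sideVertices hT t s = D.bag s ∩ D.bag t := by
  ext v
  simp only [mem_inter, mem_sideVertices]
  refine ⟨fun ⟨⟨i, hi, hvi⟩, ⟨j, hj, hvj⟩⟩ => ⟨?_, ?_⟩, fun ⟨hs, ht⟩ =>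
    ⟨⟨s, side_self h.symm, hs⟩, ⟨t, side_self h, ht⟩⟩⟩
  · exact D.mem_bag_of_side h.symm hi (not_side_of_side h.symm hj) hvi hvj
  · exact D.mem_bag_of_side h hj (not_side_of_side h hi) hvj hvi

variable (D hT) in
noncomputable def piece (s t : ι) : Finset V := D.sideVertices hT s t \ D.bag t

lemma mem_piece_iff (h : T.Adj s t) :
    v ∈ D.piece hT s t ↔ v ∈ D.sideVertices hT s t ∧ v ∉ D.sideVertices hT t s := by
  have hinter := congrArg (v ∈ ·) (D.sideVertices_inter (hT := hT) h)
  have ht : v ∈ D.bag t → v ∈ D.sideVertices hT t s := fun hv => D.bag_subset_sideVertices h hv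
  simp only [mem_inter, eq_iff_iff] at hinter
  rw [piece, mem_sdiff]
  tauto

lemma isSeparation_piece (h : T.Adj s t) :
    G.IsSeparation (D.bag s ∩ D.bag t) (D.piece hT s t) (D.piece hT t s) where
  union_eq := by
    ext v
    have hinter := congrArg (v ∈ ·) (D.sideVertices_inter (hT := hT) h)
    have := D.mem_sideVertices_or (hT := hT) h v
    simp only [mem_inter, eq_iff_iff] at hinter
    simp only [mem_union, mem_piece_iff h, mem_piece_iff h.symm, mem_sdiff, mem_univ, true_and,
      mem_inter, ← hinter]
    tauto
  disjoint := disjoint_left.2 fun _ hs ht =>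
    ((mem_piece_iff h).1 hs).2 ((mem_piece_iff h.symm).1 ht).1
  not_adj _ hu _ hw :=
    not_adj_of_notMem_sideVertices h ((mem_piece_iff h).1 hu).2 ((mem_piece_iff h.symm).1 hw).2

lemma piece_subset_piece (h : T.Adj t s) (hne : s' ≠ s) :
    D.piece hT s' t ⊆ D.piece hT t s := by
  intro v hv
  obtain ⟨hv, hvt⟩ := mem_sdiff.1 hv
  obtain ⟨i, hi, hvi⟩ := mem_sideVertices.1 hv
  have hts : v ∈ D.sideVertices hT t s :=
    mem_sideVertices.2 ⟨i, side_of_side_of_ne h.symm hi hne, hvi⟩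
  refine mem_sdiff.2 ⟨hts, fun hvs => hvt ?_⟩
  have hst : v ∈ D.sideVertices hT s t ∩ D.sideVertices hT t s :=
    mem_inter.2 ⟨D.bag_subset_sideVertices h hvs, hts⟩
  rw [sideVertices_inter h.symm] at hst
  exact (mem_inter.1 hst).2

lemma biUnion_piece [Fintype ι] [DecidableRel T.Adj] (t : ι) :
    (univ.filter (T.Adj t)).biUnion (fun s => D.piece hT s t) = univ \ D.bag t := by
  ext v
  simp only [mem_biUnion, mem_filter, mem_univ, true_and, mem_sdiff]
  refine ⟨fun ⟨s, _, hv⟩ => (mem_sdiff.1 hv).2, fun hvt => ?_⟩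
  obtain ⟨i, hvi⟩ := D.cover v
  obtain ⟨s, hts, hs⟩ := exists_adj_side (hT := hT) fun (hit : i = t) => hvt (hit ▸ hvi)
  exact ⟨s, hts, mem_sdiff.2 ⟨mem_sideVertices.2 ⟨i, hs, hvi⟩, hvt⟩⟩

lemma exists_isBalancedSeparation_of_small_pieces [Fintype ι] (t : ι)
    (hsmall : ∀ s, T.Adj t s → 3 * #(D.piece hT s t) ≤ 2 * #(univ \ D.bag t)) :
    ∃ A B, G.IsBalancedSeparation (D.bag t) A B := by
  classical
  have hpieces : (univ.filter (T.Adj t) : Set ι).Pairwise fun s s' =>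
      Disjoint (D.piece hT s t) (D.piece hT s' t) ∧
        ∀ x ∈ D.piece hT s t, ∀ y ∈ D.piece hT s' t, ¬ G.Adj x y := by
    intro s hs s' _ hne
    have hts : T.Adj t s := (mem_filter.1 hs).2
    have hsub := D.piece_subset_piece (hT := hT) hts hne.symm
    have hsep := D.isSeparation_piece (hT := hT) hts.symm
    exact ⟨hsep.disjoint.mono_right hsub, fun x hx y hy => hsep.not_adj x hx y (hsub hy)⟩
  exact exists_isBalancedSeparation_of_pieces _ _ (D.biUnion_piece t) hpieces
    fun s hs => hsmall s (mem_filter.1 hs).2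

lemma exists_isBalancedSeparation_of_large_piece (hts : T.Adj t s)
    (hle : #(D.piece hT s t) ≤ 2 * #(D.piece hT t s))
    (hlarge : #(univ \ D.bag t) ≤ 3 * #(D.piece hT s t)) :
    ∃ X A B, X ⊆ D.bag t ∧ G.IsBalancedSeparation X A B := by
  have hsep := D.isSeparation_piece (hT := hT) hts.symm
  have hrest : D.piece hT t s \ D.bag t ⊆ (univ \ D.bag t) \ D.piece hT s t := fun v hv =>
    mem_sdiff.2 ⟨mem_sdiff.2 ⟨mem_univ v, (mem_sdiff.1 hv).2⟩,
      disjoint_right.1 hsep.disjoint (mem_sdiff.1 hv).1⟩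
  have hsub : D.piece hT s t ⊆ univ \ D.bag t := fun v hv =>
    mem_sdiff.2 ⟨mem_univ v, (mem_sdiff.1 hv).2⟩
  have hcard := card_le_card hrest
  rw [card_sdiff_of_subset hsub] at hcard
  obtain ⟨Z, hZ, hbal⟩ := hsep.exists_isBalancedSeparation_union (F := D.piece hT t s ∩ D.bag t)
    inter_subset_left hle (by rw [sdiff_inter_self_left]; omega)
  exact ⟨_, _, _, union_subset inter_subset_right (hZ.trans inter_subset_right), hbal⟩

theorem exists_isBalancedSeparation_subset_bag [Fintype ι] (D : TreeDecomp G T)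
    (hT : T.IsTree) : ∃ t X A B, X ⊆ D.bag t ∧ G.IsBalancedSeparation X A B := by
  obtain ⟨t, ht⟩ := hT.exists_forall_adj_not_rel
    (fun t s => 2 * #(D.piece hT t s) < #(D.piece hT s t)) (fun _ _ _ _ _ => by omega)
  by_cases hsmall : ∀ s, T.Adj t s → 3 * #(D.piece hT s t) ≤ 2 * #(univ \ D.bag t)
  · obtain ⟨A, B, hAB⟩ := D.exists_isBalancedSeparation_of_small_pieces t hsmall
    exact ⟨t, _, A, B, subset_rfl, hAB⟩
  push Not at hsmall
  obtain ⟨s, hts, hlarge⟩ := hsmall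
  exact ⟨t, D.exists_isBalancedSeparation_of_large_piece hts (not_lt.1 (ht s hts)) (by omega)⟩

end TreeDecomp

lemma exists_treeDecomp_card_bag_le {V : Type*} [Fintype V] (G : SimpleGraph V) :
    ∃ (ι : Type) (_ : Fintype ι) (T : SimpleGraph ι) (D : TreeDecomp G T),
      T.IsTree ∧ ∀ i, #(D.bag i) ≤ treewidth G + 1 := by
  obtain ⟨ι, hι, T, hT, D, hD⟩ : treewidth G ∈ _ :=
    Nat.sInf_mem ⟨_, Unit, inferInstance, ⊥, .of_subsingleton, .oneBag G, rfl⟩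
  refine ⟨ι, hι, T, D, hT, fun i => ?_⟩
  have := le_sup (f := fun i => #(D.bag i)) (mem_univ i)
  omega

/-- Corollary 2.6: every finite graph `G` has a set `X` of at most `tw(G)+1` vertices and
a partition of the remaining vertices into sets `A` and `B` with no edge between `A` and
`B` and `|V−X|/3 ≤ |A|,|B| ≤ 2|V−X|/3`. -/
theorem exists_balanced_separator {V : Type*} [Fintype V] [DecidableEq V]
    (G : SimpleGraph V) :
    ∃ X A B : Finset V,
      X.card ≤ treewidth G + 1 ∧
      A ∪ B = Finset.univ \ X ∧
      Disjoint A B ∧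
      (∀ a ∈ A, ∀ b ∈ B, ¬ G.Adj a b) ∧
      ((Finset.univ \ X).card : ℚ) / 3 ≤ (A.card : ℚ) ∧
      (A.card : ℚ) ≤ 2 * ((Finset.univ \ X).card : ℚ) / 3 ∧
      ((Finset.univ \ X).card : ℚ) / 3 ≤ (B.card : ℚ) ∧
      (B.card : ℚ) ≤ 2 * ((Finset.univ \ X).card : ℚ) / 3 := by
  obtain ⟨ι, _, T, D, hT, hbag⟩ := exists_treeDecomp_card_bag_le G
  obtain ⟨t, X, A, B, hXt, hsep⟩ := D.exists_isBalancedSeparation_subset_bag hT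
  exact ⟨X, A, B, (card_le_card hXt).trans (hbag t), hsep.union_eq, hsep.disjoint,
    hsep.not_adj, hsep.bounds⟩
end

section
/- Let n and k be positive integers with k < n/2 and n ≥ 8·(2k+2)². Then the generalized Petersen graph G_{n,k} contains a bramble of order at least 2k+2; consequently tw(G_{n,k}) ≥ 2k+1. -/
/-- The generalized Petersen graph `G_{n,k}` on vertex set `{v_1,…,v_n} ⊕ {u_1,…,u_n}`
(`Sum.inl i` is the outer vertex `v_i`, `Sum.inr i` the inner vertex `u_i`), with edges
`v_i v_{i+1}`, `v_i u_i` and `u_i u_{i+k}`, indices read modulo `n`. -/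
def genPetersen (n k : ℕ) : SimpleGraph (Fin n ⊕ Fin n) :=
  SimpleGraph.fromRel fun a b =>
    match a, b with
    | Sum.inl i, Sum.inl j => (j : ℕ) = ((i : ℕ) + 1) % n
    | Sum.inl i, Sum.inr j => j = i
    | Sum.inr i, Sum.inr j => (j : ℕ) = ((i : ℕ) + k) % n
    | _, _ => False

/-- A bramble of `G`: a family of nonempty connected vertex sets of `G` that pairwise
touch (share a vertex or are joined by an edge). -/
def IsBramble {V : Type*} (G : SimpleGraph V) (ℬ : Set (Set V)) : Prop :=
  (∀ B ∈ ℬ, B.Nonempty ∧ (G.induce B).Connected) ∧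
  ∀ B₁ ∈ ℬ, ∀ B₂ ∈ ℬ,
    (B₁ ∩ B₂).Nonempty ∨ ∃ u ∈ B₁, ∃ v ∈ B₂, G.Adj u v

/-!
The bramble consists of the connected vertex sets containing more than half of the outer cycle;
any two of them share an outer vertex. Suppose a set `S` of at most `2k + 1` vertices met all of
them. Call an outer index far if no vertex of `S` has index within cyclic distance `k` of it;
as `n ≥ 8(2k+2)²`, more than half of the indices are far. Two far outer vertices are joined in
`G_{n,k} - S`: one of the two arcs between them carries at most `k` vertices of `S`, and such an
arc is crossed either along the outer cycle or, through two spokes, along one of the `k` inner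
strands `u_r, u_{r+k}, u_{r+2k}, …`, one of which `S` misses. The component of `G_{n,k} - S`
containing the far outer vertices is then a member of the bramble avoiding `S`.

The treewidth bound is the easy half of bramble duality: in a tree decomposition the nodes whose
bags meet a bramble element form a subtree, these subtrees pairwise intersect, and by the Helly
property of subtrees some bag meets every element.
-/

open Set

namespace SimpleGraph

variable {V ι : Type*} {G : SimpleGraph V} {T : SimpleGraph ι}

theorem induce_preconnected_iff_forall_exists_walk {s : Set V} :
    (G.induce s).Preconnected ↔ ∀ x ∈ s, ∀ y ∈ s, ∃ p : G.Walk x y, ∀ z ∈ p.support, z ∈ s := by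
  refine ⟨fun h x hx y hy => ?_, fun h ⟨x, hx⟩ ⟨y, hy⟩ => ?_⟩
  · obtain ⟨p⟩ := h ⟨x, hx⟩ ⟨y, hy⟩
    refine ⟨p.map (Embedding.induce s).toHom, fun z hz => ?_⟩
    obtain ⟨z', -, rfl⟩ := List.mem_map.mp (Walk.support_map _ p ▸ hz)
    exact z'.2
  · obtain ⟨p, hp⟩ := h x hx y hy
    exact (p.induce s hp).reachable

theorem induce_biUnion_preconnected {B : Set V} (hB : (G.induce B).Preconnected) (f : V → Set ι)
    (hf : ∀ x ∈ B, (T.induce (f x)).Preconnected)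
    (hadj : ∀ x ∈ B, ∀ y ∈ B, G.Adj x y → (f x ∩ f y).Nonempty) :
    (T.induce (⋃ x ∈ B, f x)).Preconnected := by
  simp only [induce_preconnected_iff_forall_exists_walk] at hB hf ⊢
  have hwalk : ∀ {x y} (w : G.Walk x y), (∀ z ∈ w.support, z ∈ B) →
      ∀ i ∈ f x, ∀ j ∈ f y, ∃ p : T.Walk i j, ∀ z ∈ p.support, z ∈ ⋃ x ∈ B, f x := by
    intro x y w hw
    induction w with
    | nil =>
      intro i hi j hj
      obtain ⟨p, hp⟩ := hf _ (hw _ (by simp)) i hi j hj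
      exact ⟨p, fun z hz => mem_biUnion (hw _ (by simp)) (hp z hz)⟩
    | @cons x x' y hxx' w ih =>
      intro i hi j hj
      have hx : x ∈ B := hw x (by simp)
      obtain ⟨m, hmx, hmx'⟩ := hadj x hx x' (hw x' (by simp)) hxx'
      obtain ⟨p, hp⟩ := hf x hx i hi m hmx
      obtain ⟨q, hq⟩ := ih (fun z hz => hw z (by simp [hz])) m hmx' j hj
      refine ⟨p.append q, fun z hz => ?_⟩
      rcases (Walk.mem_support_append_iff _ _).mp hz with hz | hz
      · exact mem_biUnion hx (hp z hz)
      · exact hq z hz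
  intro i hi j hj
  obtain ⟨x, hx, hix⟩ := mem_iUnion₂.mp hi
  obtain ⟨y, hy, hjy⟩ := mem_iUnion₂.mp hj
  obtain ⟨w, hw⟩ := hB x hx y hy
  exact hwalk w hw i hix j hjy

theorem Walk.exists_mem_inter_of_forall_adj {s t : Set V} {x y : V} (p : G.Walk x y)
    (hx : x ∈ s) (hy : y ∈ t) (hp : ∀ z ∈ p.support, z ∈ s ∪ t)
    (hst : ∀ a b, G.Adj a b → a ∈ s → b ∈ t → a ∈ t ∨ b ∈ s) :
    ∃ z ∈ p.support, z ∈ s ∩ t := by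
  induction p with
  | nil => exact ⟨_, by simp, hx, hy⟩
  | @cons x x' y hxx' p ih =>
    have hp' : ∀ z ∈ p.support, z ∈ s ∪ t := fun z hz => hp z (by simp [hz])
    have recurse : x' ∈ s → ∃ z ∈ (cons hxx' p).support, z ∈ s ∩ t := fun hx' => by
      obtain ⟨z, hz, hzst⟩ := ih hx' hy hp'
      exact ⟨z, by simp [hz], hzst⟩
    by_cases hxt : x ∈ t
    · exact ⟨x, by simp, hx, hxt⟩
    rcases hp' x' p.start_mem_support with hx' | hx'
    · exact recurse hx'
    · exact (hst x x' hxx' hx hx').elim (absurd · hxt) recurse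

theorem IsAcyclic.support_subset_of_isPath (hT : T.IsAcyclic) {i j : ι}
    {p : T.Walk i j} (hp : p.IsPath) (q : T.Walk i j) : p.support ⊆ q.support := by
  classical
  have : p = q.bypass :=
    congrArg Subtype.val ((hT.subsingleton_path i j).elim ⟨p, hp⟩ ⟨q.bypass, q.bypass_isPath⟩)
  exact this ▸ q.support_bypass_subset_support

theorem IsAcyclic.induce_inter_preconnected (hT : T.IsAcyclic) {s t : Set ι}
    (hs : (T.induce s).Preconnected) (ht : (T.induce t).Preconnected) :
    (T.induce (s ∩ t)).Preconnected := by
  classical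
  rw [induce_preconnected_iff_forall_exists_walk] at hs ht ⊢
  intro i hi j hj
  obtain ⟨p, hp⟩ := hs i hi.1 j hj.1
  obtain ⟨q, hq⟩ := ht i hi.2 j hj.2
  exact ⟨p.bypass, fun z hz => ⟨hp z (p.support_bypass_subset_support hz),
    hq z (hT.support_subset_of_isPath p.bypass_isPath q hz)⟩⟩

theorem IsAcyclic.mem_or_mem_of_adj (hT : T.IsAcyclic) {s t : Set ι}
    (hs : (T.induce s).Preconnected) (ht : (T.induce t).Preconnected) (hst : (s ∩ t).Nonempty)
    {i j : ι} (hi : i ∈ s) (hj : j ∈ t) (hij : T.Adj i j) : i ∈ t ∨ j ∈ s := by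
  rw [induce_preconnected_iff_forall_exists_walk] at hs ht
  by_contra! h
  obtain ⟨c, hcs, hct⟩ := hst
  obtain ⟨p, hp⟩ := hs i hi c hcs
  obtain ⟨q, hq⟩ := ht c hct j hj
  have hbridge := isBridge_iff_forall_walk_mem_edges.mp
    (isAcyclic_iff_forall_adj_isBridge.mp hT hij) (p.append q)
  rw [Walk.edges_append, List.mem_append] at hbridge
  rcases hbridge with he | he
  · exact h.2 (hp j (p.snd_mem_support_of_mem_edges he))
  · exact h.1 (hq i (q.fst_mem_support_of_mem_edges he))

theorem IsAcyclic.inter_inter_nonempty (hT : T.IsAcyclic) {s₁ s₂ s₃ : Set ι}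
    (h₁ : (T.induce s₁).Preconnected) (h₂ : (T.induce s₂).Preconnected)
    (h₃ : (T.induce s₃).Preconnected) (h₁₂ : (s₁ ∩ s₂).Nonempty) (h₁₃ : (s₁ ∩ s₃).Nonempty)
    (h₂₃ : (s₂ ∩ s₃).Nonempty) : (s₁ ∩ s₂ ∩ s₃).Nonempty := by
  classical
  obtain ⟨a, ha₁, ha₂⟩ := h₁₂
  obtain ⟨b, hb₁, hb₃⟩ := h₁₃
  obtain ⟨c, hc₂, hc₃⟩ := h₂₃
  obtain ⟨p, hp⟩ := induce_preconnected_iff_forall_exists_walk.mp h₁ a ha₁ b hb₁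
  obtain ⟨r, hr⟩ := induce_preconnected_iff_forall_exists_walk.mp h₂ a ha₂ c hc₂
  obtain ⟨q, hq⟩ := induce_preconnected_iff_forall_exists_walk.mp h₃ c hc₃ b hb₃
  -- the path from `a` to `b` lies in `s₁`, and also on the walk `a → c → b` inside `s₂ ∪ s₃`
  have hsub : ∀ z ∈ p.bypass.support, z ∈ s₂ ∪ s₃ := fun z hz => by
    rcases (Walk.mem_support_append_iff _ _).mp
      (hT.support_subset_of_isPath p.bypass_isPath (r.append q) hz) with hz | hz
    · exact Or.inl (hr z hz)
    · exact Or.inr (hq z hz)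
  obtain ⟨m, hm, hm₂₃⟩ := p.bypass.exists_mem_inter_of_forall_adj ha₂ hb₃ hsub
    (fun _ _ hadj hi hj => hT.mem_or_mem_of_adj h₂ h₃ ⟨c, hc₂, hc₃⟩ hi hj hadj)
  exact ⟨m, ⟨hp m (p.support_bypass_subset_support hm), hm₂₃.1⟩, hm₂₃.2⟩

/-- Helly property of subtrees; the extra subtree `u` carries the induction. -/
theorem IsAcyclic.inter_sInter_nonempty (hT : T.IsAcyclic) {F : Set (Set ι)} (hF : F.Finite)
    (hFconn : ∀ s ∈ F, (T.induce s).Preconnected) (hFpair : ∀ s ∈ F, ∀ t ∈ F, (s ∩ t).Nonempty)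
    {u : Set ι} (hu : (T.induce u).Preconnected) (hune : u.Nonempty)
    (huF : ∀ s ∈ F, (u ∩ s).Nonempty) : (u ∩ ⋂₀ F).Nonempty := by
  induction F, hF using Set.Finite.induction_on generalizing u with
  | empty => simpa using hune
  | @insert s F _ _ ih =>
    have hs := hFconn s (mem_insert s F)
    rw [sInter_insert, ← inter_assoc]
    refine ih (fun t ht => hFconn t (mem_insert_of_mem s ht))
      (fun t ht t' ht' => hFpair t (mem_insert_of_mem s ht) t' (mem_insert_of_mem s ht'))
      (hT.induce_inter_preconnected hu hs) (huF s (mem_insert s F)) (fun t ht => ?_)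
    exact hT.inter_inter_nonempty hu hs (hFconn t (mem_insert_of_mem s ht))
      (huF s (mem_insert s F)) (huF t (mem_insert_of_mem s ht))
      (hFpair s (mem_insert s F) t (mem_insert_of_mem s ht))

section ReachableAvoiding

variable {S : Set V} {x y z : V}

def ReachableAvoiding (G : SimpleGraph V) (S : Set V) (x y : V) : Prop :=
  ∃ (hx : x ∉ S) (hy : y ∉ S), (G.induce Sᶜ).Reachable ⟨x, hx⟩ ⟨y, hy⟩

theorem ReachableAvoiding.notMem_right (h : G.ReachableAvoiding S x y) : y ∉ S :=
  h.2.1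

theorem ReachableAvoiding.symm (h : G.ReachableAvoiding S x y) : G.ReachableAvoiding S y x :=
  let ⟨hx, hy, h⟩ := h
  ⟨hy, hx, h.symm⟩

theorem ReachableAvoiding.trans (h₁ : G.ReachableAvoiding S x y)
    (h₂ : G.ReachableAvoiding S y z) : G.ReachableAvoiding S x z :=
  let ⟨hx, _, h₁⟩ := h₁
  let ⟨_, hz, h₂⟩ := h₂
  ⟨hx, hz, h₁.trans h₂⟩

theorem Adj.reachableAvoiding (h : G.Adj x y) (hx : x ∉ S) (hy : y ∉ S) :
    G.ReachableAvoiding S x y :=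
  ⟨hx, hy, Adj.reachable (induce_adj.mpr h)⟩

theorem reachableAvoiding_of_forall_adj {f : ℕ → V} {t : ℕ} (hf : ∀ m < t, G.Adj (f m) (f (m + 1)))
    (hS : ∀ m ≤ t, f m ∉ S) : G.ReachableAvoiding S (f 0) (f t) := by
  induction t with
  | zero => exact ⟨hS 0 le_rfl, hS 0 le_rfl, .rfl⟩
  | succ t ih =>
    exact (ih (fun m hm => hf m (by omega)) (fun m hm => hS m (by omega))).trans
      ((hf t (by omega)).reachableAvoiding (hS t (by omega)) (hS (t + 1) le_rfl))

theorem connected_induce_setOf_reachableAvoiding (hx : x ∉ S) :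
    (G.induce {y | G.ReachableAvoiding S x y}).Connected := by
  set C := (G.induce Sᶜ).connectedComponentMk ⟨x, hx⟩
  have hC : {y | G.ReachableAvoiding S x y} = Subtype.val '' C.supp := by
    ext y
    refine ⟨fun ⟨_, hy, h⟩ => ⟨⟨y, hy⟩, ConnectedComponent.eq.mpr h.symm, rfl⟩, ?_⟩
    rintro ⟨⟨y, hy⟩, hyC, rfl⟩
    exact ⟨hx, hy, (ConnectedComponent.eq.mp hyC).symm⟩
  rw [hC]
  refine C.connected_toSimpleGraph.map
    (induceHom (Embedding.induce Sᶜ).toHom (mapsTo_image _ _)) ?_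
  rintro ⟨_, z, hz, rfl⟩
  exact ⟨⟨z, hz⟩, rfl⟩

end ReachableAvoiding

end SimpleGraph

theorem TreeDecomp.exists_bag_inter_nonempty {V : Type*} {ι : Type} [Finite ι]
    {G : SimpleGraph V} {T : SimpleGraph ι} (hT : T.IsTree) (D : TreeDecomp G T)
    {ℬ : Set (Set V)} (hℬ : IsBramble G ℬ) : ∃ i, ∀ B ∈ ℬ, ((D.bag i : Set V) ∩ B).Nonempty := by
  set J : Set V → Set ι := fun B => ⋃ x ∈ B, {i | x ∈ D.bag i}
  have hJconn : ∀ B ∈ ℬ, (T.induce (J B)).Preconnected := fun B hB =>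
    SimpleGraph.induce_biUnion_preconnected (hℬ.1 B hB).2.preconnected _
      (fun x _ => (D.subtree x).preconnected)
      (fun x _ y _ hxy => let ⟨i, hx, hy⟩ := D.edgeCover x y hxy; ⟨i, hx, hy⟩)
  have hJinter : ∀ B₁ ∈ ℬ, ∀ B₂ ∈ ℬ, (J B₁ ∩ J B₂).Nonempty := by
    intro B₁ h₁ B₂ h₂
    rcases hℬ.2 B₁ h₁ B₂ h₂ with ⟨x, hx₁, hx₂⟩ | ⟨x, hx, y, hy, hxy⟩
    · obtain ⟨i, hi⟩ := D.cover x
      exact ⟨i, mem_biUnion hx₁ hi, mem_biUnion hx₂ hi⟩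
    · obtain ⟨i, hix, hiy⟩ := D.edgeCover x y hxy
      exact ⟨i, mem_biUnion hx hix, mem_biUnion hy hiy⟩
  obtain ⟨i, -, hi⟩ := hT.isAcyclic.inter_sInter_nonempty (toFinite (J '' ℬ))
    (forall_mem_image.mpr hJconn)
    (forall_mem_image.mpr fun B₁ h₁ => forall_mem_image.mpr (hJinter B₁ h₁)) (u := univ)
    (SimpleGraph.induce_preconnected_iff_forall_exists_walk.mpr
      fun i _ j _ => ⟨(hT.connected i j).some, fun _ _ => trivial⟩)
    (@univ_nonempty _ hT.connected.nonempty)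
    (forall_mem_image.mpr fun B hB => by simpa using hJinter B hB B hB)
  refine ⟨i, fun B hB => ?_⟩
  obtain ⟨x, hxB, hxi⟩ := mem_iUnion₂.mp (hi (J B) (mem_image_of_mem J hB))
  exact ⟨x, hxi, hxB⟩

def TreeDecomp.single {V : Type*} [Fintype V] (G : SimpleGraph V) :
    TreeDecomp G (⊥ : SimpleGraph Unit) where
  bag _ := Finset.univ
  cover v := ⟨(), Finset.mem_univ v⟩
  edgeCover u v _ := ⟨(), Finset.mem_univ u, Finset.mem_univ v⟩
  subtree v :=
    have : Nonempty {_u : Unit | v ∈ (Finset.univ : Finset V)} := ⟨⟨(), Finset.mem_univ v⟩⟩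
    SimpleGraph.IsTree.of_subsingleton.connected

theorem le_treewidth_of_isBramble_s14 {V : Type*} [Fintype V] {G : SimpleGraph V}
    {ℬ : Set (Set V)} (hℬ : IsBramble G ℬ) {w : ℕ}
    (hhit : ∀ S : Set V, (∀ B ∈ ℬ, (S ∩ B).Nonempty) → w + 1 ≤ S.ncard) :
    w ≤ treewidth G := by
  refine le_csInf ⟨_, Unit, inferInstance, ⊥, .of_subsingleton, TreeDecomp.single G, rfl⟩ ?_
  rintro _ ⟨ι, _, T, hT, D, rfl⟩
  obtain ⟨i, hi⟩ := D.exists_bag_inter_nonempty hT hℬ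
  have hbag := hhit (D.bag i) hi
  rw [ncard_coe_finset] at hbag
  have := Finset.le_sup (f := fun i => (D.bag i).card) (Finset.mem_univ i)
  omega

def connectedMajority {V : Type*} (G : SimpleGraph V) (R : Set V) : Set (Set V) :=
  {W | (G.induce W).Connected ∧ R.ncard < 2 * (W ∩ R).ncard}

theorem isBramble_connectedMajority {V : Type*} (G : SimpleGraph V) {R : Set V}
    (hR : R.Finite) : IsBramble G (connectedMajority G R) := by
  refine ⟨fun W hW => ⟨nonempty_coe_sort.mp hW.1.nonempty, hW.1⟩, fun W₁ h₁ W₂ h₂ => .inl ?_⟩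
  by_contra hdisj
  have hd : Disjoint (W₁ ∩ R) (W₂ ∩ R) :=
    disjoint_left.mpr fun x hx₁ hx₂ => hdisj ⟨x, hx₁.1, hx₂.1⟩
  have hunion := ncard_union_eq hd (hR.subset inter_subset_right) (hR.subset inter_subset_right)
  have hle := ncard_le_ncard (union_subset (inter_subset_right (s := W₁))
    (inter_subset_right (s := W₂))) hR
  have := h₁.2
  have := h₂.2
  omega

open scoped Fin.NatCast Fin.CommRing

namespace Fin

variable {n : ℕ} [NeZero n]

theorem val_sub_add_val_sub_eq_or (a b c : Fin n) :
    (c - a).val + n = (c - b).val + (b - a).val ∨ (c - a).val = (c - b).val + (b - a).val := by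
  have h := Fin.val_add_eq_ite (c - b) (b - a)
  rw [sub_add_sub_cancel] at h
  split_ifs at h <;> omega

theorem val_add_natCast_sub_self (i : Fin n) {o : ℕ} (ho : o < n) :
    (i + (o : Fin n) - i).val = o := by
  rw [add_sub_cancel_left, Fin.val_natCast, Nat.mod_eq_of_lt ho]

end Fin

namespace genPetersen

open SimpleGraph Sum

variable {n k : ℕ} {S : Set (Fin n ⊕ Fin n)}

/-- The common index `i` of `v_i = inl i` and `u_i = inr i`. -/
def pos : Fin n ⊕ Fin n → Fin n := Sum.elim id id

/-- No vertex of `S` has its index within cyclic distance `k` of `i`. -/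
def IsFar (k : ℕ) (S : Set (Fin n ⊕ Fin n)) (i : Fin n) : Prop :=
  ∀ x ∈ S, k < (pos x - i).val ∧ k < (i - pos x).val

theorem adj_inl_inr (i : Fin n) : (genPetersen n k).Adj (inl i) (inr i) :=
  (fromRel_adj _ _ _).mpr ⟨inl_ne_inr, .inl rfl⟩

section Paths

variable [NeZero n]

theorem adj_inl_add_one (hn : 2 ≤ n) (i : Fin n) :
    (genPetersen n k).Adj (inl i) (inl (i + 1)) := by
  have h1 : (1 : Fin n).val = 1 := Nat.mod_eq_of_lt hn
  refine (fromRel_adj _ _ _).mpr ⟨fun h => ?_, .inl (by simp [Fin.val_add])⟩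
  have := congrArg Fin.val (inl_injective h)
  rw [Fin.val_add_eq_ite, h1] at this
  split_ifs at this <;> omega

theorem adj_inr_add (hk : 0 < k) (hkn : k < n) (i : Fin n) :
    (genPetersen n k).Adj (inr i) (inr (i + k)) := by
  have hk' : (k : Fin n).val = k := Nat.mod_eq_of_lt hkn
  refine (fromRel_adj _ _ _).mpr ⟨fun h => ?_, .inl (by simp [Fin.val_add])⟩
  have := congrArg Fin.val (inr_injective h)
  rw [Fin.val_add_eq_ite, hk'] at this
  split_ifs at this <;> omega

theorem reachableAvoiding_inl (hn : 2 ≤ n) {i : Fin n} {a b : ℕ} (hab : a ≤ b)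
    (hS : ∀ o, a ≤ o → o ≤ b → inl (i + o) ∉ S) :
    (genPetersen n k).ReachableAvoiding S (inl (i + a)) (inl (i + b)) := by
  have := reachableAvoiding_of_forall_adj (G := genPetersen n k) (S := S)
    (f := fun m => inl (i + ((a + m : ℕ) : Fin n))) (t := b - a)
    (fun m _ => by convert adj_inl_add_one hn _ using 2; push_cast; ring)
    (fun m _ => hS _ (by omega) (by omega))
  simpa only [add_zero, Nat.add_sub_cancel' hab] using this

theorem reachableAvoiding_inr (hk : 0 < k) (hkn : k < n) {i : Fin n} {a t : ℕ}
    (hS : ∀ m ≤ t, inr (i + ((a + m * k : ℕ) : Fin n)) ∉ S) :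
    (genPetersen n k).ReachableAvoiding S (inr (i + a)) (inr (i + ((a + t * k : ℕ) : Fin n))) := by
  have := reachableAvoiding_of_forall_adj (G := genPetersen n k) (S := S)
    (f := fun m => inr (i + ((a + m * k : ℕ) : Fin n))) (t := t)
    (fun m _ => by convert adj_inr_add hk hkn _ using 2; push_cast; ring) hS
  simpa only [zero_mul, add_zero] using this

end Paths

section Arc

variable [NeZero n] {i : Fin n} {g : ℕ}

theorem notMem_of_margin (hg : g < n)
    (hmargin : ∀ x ∈ S, (pos x - i).val ≤ g → k < (pos x - i).val ∧ (pos x - i).val + k < g)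
    {x : Fin n ⊕ Fin n} {o : ℕ} (hx : pos x = i + o) (hog : o ≤ g) (ho : o ≤ k ∨ g ≤ o + k) :
    x ∉ S := fun hxS => by
  have := hmargin x hxS
  rw [hx, Fin.val_add_natCast_sub_self i (by omega)] at this
  omega

/-- Blocking the outer arc and all `k` inner strands along it would take `k + 1` vertices
of `S`. -/
theorem exists_residue_forall_inr_notMem (hg : g < n)
    (hfew : {x ∈ S | (pos x - i).val ≤ g}.ncard ≤ k) {o₀ : ℕ} (ho₀ : o₀ ≤ g)
    (h₀ : inl (i + o₀) ∈ S) :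
    ∃ r < k, ∀ m, r + m * k ≤ g → inr (i + ((r + m * k : ℕ) : Fin n)) ∉ S := by
  by_contra! h
  set A := {x ∈ S | (pos x - i).val ≤ g}
  set A' := {x ∈ A | x.isRight}
  have hcover : Iio k ⊆ (fun x => (pos x - i).val % k) '' A' := by
    intro r hr
    obtain ⟨m, hm, hmS⟩ := h r hr
    have hval := Fin.val_add_natCast_sub_self i (o := r + m * k) (by omega)
    refine ⟨_, ⟨⟨hmS, hval.le.trans hm⟩, rfl⟩, ?_⟩
    simp only [pos, elim_inr, id, hval, Nat.add_mul_mod_self_right]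
    exact Nat.mod_eq_of_lt hr
  have hA' : A' ⊂ A := (ssubset_iff_of_subset (sep_subset _ _)).mpr
    ⟨_, ⟨h₀, (Fin.val_add_natCast_sub_self i (by omega)).le.trans ho₀⟩, fun h => by simp at h⟩
  have hkA' : k ≤ A'.ncard := by
    simpa using (ncard_le_ncard hcover (toFinite _)).trans (ncard_image_le (toFinite _))
  have := ncard_lt_ncard hA'
  omega

theorem reachableAvoiding_of_arc (hk : 0 < k) (hkn : 2 * k < n) (hg : g < n)
    (hmargin : ∀ x ∈ S, (pos x - i).val ≤ g → k < (pos x - i).val ∧ (pos x - i).val + k < g)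
    (hfew : {x ∈ S | (pos x - i).val ≤ g}.ncard ≤ k) :
    (genPetersen n k).ReachableAvoiding S (inl i) (inl (i + g)) := by
  have hfree := fun {x} {o} => notMem_of_margin hg hmargin (x := x) (o := o)
  by_cases houter : ∀ o ≤ g, inl (i + o) ∉ S
  · simpa using reachableAvoiding_inl (S := S) (k := k) (i := i) (a := 0) (by omega) g.zero_le
      (fun o _ ho => houter o ho)
  push Not at houter
  obtain ⟨o₀, ho₀, h₀⟩ := houter
  have hko₀ : k < o₀ ∧ o₀ + k < g := by
    by_contra! h
    exact hfree rfl ho₀ (by omega) h₀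
  obtain ⟨r, hr, hstrand⟩ := exists_residue_forall_inr_notMem hg hfew ho₀ h₀
  obtain ⟨m, hm, hmg⟩ : ∃ m, r + m * k ≤ g ∧ g < r + m * k + k := by
    have := Nat.div_mul_le_self (g - r) k
    have := Nat.lt_div_mul_add (a := g - r) hk
    exact ⟨(g - r) / k, by omega, by omega⟩
  have hstart : (genPetersen n k).ReachableAvoiding S (inl i) (inl (i + r)) := by
    simpa using reachableAvoiding_inl (S := S) (k := k) (i := i) (a := 0) (by omega) r.zero_le
      (fun o _ ho => hfree rfl (by omega) (by omega))
  have hdown := (adj_inl_inr (k := k) (i + (r : Fin n))).reachableAvoiding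
    (hfree rfl (by omega) (by omega)) (hfree rfl (by omega) (by omega))
  have hstrand := reachableAvoiding_inr (S := S) (i := i) (a := r) (t := m) hk (by omega)
    (fun m' hm' => hstrand m' (by nlinarith))
  have hup := (adj_inl_inr (k := k) (i + ((r + m * k : ℕ) : Fin n))).reachableAvoiding
    (hfree rfl (by omega) (by omega)) (hfree rfl (by omega) (by omega))
  have hend := reachableAvoiding_inl (S := S) (k := k) (i := i) (by omega) hm
    (fun o _ ho' => hfree rfl ho' (by omega))
  exact hstart.trans (hdown.trans (hstrand.trans (hup.symm.trans hend)))

end Arc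

section Far

variable [NeZero n] {i j : Fin n}

theorem reachableAvoiding_of_isFar_of_arc (hk : 0 < k) (hkn : 2 * k < n) (hi : IsFar k S i)
    (hj : IsFar k S j) (hfew : {x ∈ S | (pos x - i).val ≤ (j - i).val}.ncard ≤ k) :
    (genPetersen n k).ReachableAvoiding S (inl i) (inl j) := by
  have h := reachableAvoiding_of_arc hk hkn (j - i).isLt (fun x hx _ => ?_) hfew
  · simpa using h
  · have := Fin.val_sub_add_val_sub_eq_or i (pos x) j
    have := hi x hx
    have := hj x hx
    omega

theorem reachableAvoiding_of_isFar (hk : 0 < k) (hkn : 2 * k < n) (hS : S.ncard ≤ 2 * k + 1)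
    (hi : IsFar k S i) (hj : IsFar k S j) :
    (genPetersen n k).ReachableAvoiding S (inl i) (inl j) := by
  set A₁ := {x ∈ S | (pos x - i).val ≤ (j - i).val}
  set A₂ := {x ∈ S | (pos x - j).val ≤ (i - j).val}
  -- the arcs from `i` to `j` and from `j` to `i` share only their ends, which `S` avoids
  have hdisj : Disjoint A₁ A₂ := disjoint_left.mpr fun x h₁ h₂ => by
    have := Fin.val_sub_add_val_sub_eq_or i j (pos x)
    have := Fin.val_sub_add_val_sub_eq_or i j i
    have hii : (i - i).val = 0 := by simp
    have := hi x h₁.1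
    have := hj x h₁.1
    have := h₁.2
    have := h₂.2
    omega
  have hcard : A₁.ncard + A₂.ncard ≤ 2 * k + 1 := by
    rw [← ncard_union_eq hdisj]
    exact (ncard_le_ncard (union_subset (sep_subset _ _) (sep_subset _ _))).trans hS
  by_cases h₁ : A₁.ncard ≤ k
  · exact reachableAvoiding_of_isFar_of_arc hk hkn hi hj h₁
  · exact (reachableAvoiding_of_isFar_of_arc hk hkn hj hi (show A₂.ncard ≤ k by omega)).symm

theorem ncard_setOf_not_isFar_le : {i | ¬IsFar k S i}.ncard ≤ 2 * ((k + 1) * S.ncard) := by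
  set P := S ×ˢ Iic k
  have hP : P.Finite := S.toFinite.prod (finite_Iic k)
  have hsub : {i | ¬IsFar k S i} ⊆ (fun p : _ × ℕ => pos p.1 - (p.2 : Fin n)) '' P ∪
      (fun p : _ × ℕ => pos p.1 + (p.2 : Fin n)) '' P := by
    intro i hi
    simp only [IsFar, not_forall, not_and_or, not_lt, mem_ofPred_eq] at hi
    obtain ⟨x, hx, h | h⟩ := hi
    · exact .inl ⟨(x, (pos x - i).val), ⟨hx, h⟩, by simp⟩
    · exact .inr ⟨(x, (i - pos x).val), ⟨hx, h⟩, by simp⟩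
  calc _ ≤ _ := ncard_le_ncard hsub (toFinite _)
    _ ≤ _ := ncard_union_le _ _
    _ ≤ P.ncard + P.ncard := add_le_add (ncard_image_le hP) (ncard_image_le hP)
    _ = _ := by rw [ncard_prod, ncard_Iic_nat]; ring

end Far

theorem le_ncard_of_forall_inter_nonempty (hk : 0 < k) (hkn : 2 * k < n)
    (hn : 8 * (2 * k + 2) ^ 2 ≤ n)
    (hS : ∀ B ∈ connectedMajority (genPetersen n k) (range inl), (S ∩ B).Nonempty) :
    2 * k + 2 ≤ S.ncard := by
  have : NeZero n := ⟨by omega⟩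
  by_contra! hlt
  have hfar : n < 2 * {i | IsFar k S i}.ncard := by
    have h₁ := ncard_setOf_not_isFar_le (k := k) (S := S)
    have h₂ := ncard_add_ncard_compl {i | IsFar k S i}
    rw [compl_ofPred, Nat.card_eq_fintype_card, Fintype.card_fin] at h₂
    have h₃ : (k + 1) * S.ncard ≤ (k + 1) * (2 * k + 1) := Nat.mul_le_mul_left _ (by omega)
    nlinarith
  obtain ⟨i₀, hi₀⟩ := nonempty_of_ncard_ne_zero (s := {i | IsFar k S i}) (by omega)
  have hx₀ : inl i₀ ∉ S := fun h => by simpa [pos] using (hi₀ _ h).1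
  set W := {y | (genPetersen n k).ReachableAvoiding S (inl i₀) y}
  have hsub : inl '' {i | IsFar k S i} ⊆ W ∩ range inl := by
    rintro _ ⟨j, hj, rfl⟩
    exact ⟨reachableAvoiding_of_isFar hk hkn (by omega) hi₀ hj, j, rfl⟩
  have hmajority : (range (inl : Fin n → Fin n ⊕ Fin n)).ncard < 2 * (W ∩ range inl).ncard :=
    calc (range (inl : Fin n → Fin n ⊕ Fin n)).ncard
        = n := by simp [ncard_range_of_injective inl_injective]
      _ < 2 * (inl '' {i | IsFar k S i}).ncard := by
        rwa [ncard_image_of_injective _ inl_injective]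
      _ ≤ _ := Nat.mul_le_mul_left _ (ncard_le_ncard hsub (toFinite _))
  obtain ⟨y, hyS, hy⟩ := hS W ⟨connected_induce_setOf_reachableAvoiding hx₀, hmajority⟩
  exact hy.notMem_right hyS

end genPetersen

/-- For positive integers `n, k` with `k < n/2` and `n ≥ 8·(2k+2)²`, the generalized
Petersen graph `G_{n,k}` contains a bramble of order at least `2k+2` (every hitting set
has at least `2k+2` vertices); consequently `tw(G_{n,k}) ≥ 2k+1`. -/
theorem genPetersen_bramble_and_treewidth_lower (n k : ℕ) (hk : 1 ≤ k) (hkn : 2 * k < n)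
    (hn : 8 * (2 * k + 2) ^ 2 ≤ n) :
    (∃ ℬ : Set (Set (Fin n ⊕ Fin n)), IsBramble (genPetersen n k) ℬ ∧
      ∀ S : Set (Fin n ⊕ Fin n), (∀ B ∈ ℬ, (S ∩ B).Nonempty) → 2 * k + 2 ≤ S.ncard) ∧
    2 * k + 1 ≤ treewidth (genPetersen n k) := by
  have hℬ := isBramble_connectedMajority (genPetersen n k) (Set.range Sum.inl).toFinite
  have hhit := fun S => genPetersen.le_ncard_of_forall_inter_nonempty (S := S) hk hkn hn
  exact ⟨⟨_, hℬ, hhit⟩, le_treewidth_of_isBramble_s14 hℬ hhit⟩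
end
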